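/- arXiv:1211.1728 — 13 statements merged into one kernel-verified Lean document; each statement's English description precedes it below -/
import Mathlib

section
/- Let Σ be an alphabet and n ≥ 2. For all u, v ∈ Σ^n with 0 < D_H(u,v) < n, one has D_H(u,v) + 1 ≤ D_p(u,v) ≤ 2·D_H(u,v); moreover, if D_H(u,v) = 0 or D_H(u,v) = n, then D_p(u,v) = D_H(u,v). -/
/-- The (cyclic) pair-distance between two vectors of length `n`,
with coordinates indexed by `ZMod n`. -/
noncomputable def pairDist {n : ℕ} {σ : Type*} (u v : ZMod n → σ) : ℕ :=
  {i : ZMod n | (u i, u (i + 1)) ≠ (v i, v (i + 1))}.ncard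

/-- The Hamming distance between two vectors of length `n`,
with coordinates indexed by `ZMod n`. -/
noncomputable def hamDist {n : ℕ} {σ : Type*} (u v : ZMod n → σ) : ℕ :=
  {i : ZMod n | u i ≠ v i}.ncard
/-- relation between pair-distance and Hamming distance. -/
theorem stmt_0 {σ : Type*} {n : ℕ} (hn : 2 ≤ n) (u v : ZMod n → σ) :
    ((0 < hamDist u v ∧ hamDist u v < n) →
      hamDist u v + 1 ≤ pairDist u v ∧ pairDist u v ≤ 2 * hamDist u v) ∧
    ((hamDist u v = 0 ∨ hamDist u v = n) → pairDist u v = hamDist u v) := by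
  haveI : NeZero n := ⟨by omega⟩
  set S : Set (ZMod n) := {i | u i ≠ v i} with hS
  set T : Set (ZMod n) := {i | u (i + 1) ≠ v (i + 1)} with hT
  have hP : {i : ZMod n | (u i, u (i + 1)) ≠ (v i, v (i + 1))} = S ∪ T := by
    ext i
    simp only [Set.mem_setOf_eq, Set.mem_union, hS, hT, ne_eq, Prod.mk.injEq, not_and_or]
  have hTimg : T = (fun i : ZMod n => i - 1) '' S := by
    ext i
    constructor
    · intro hi
      exact ⟨i + 1, hi, by ring⟩
    · rintro ⟨j, hj, rfl⟩
      show u (j - 1 + 1) ≠ v (j - 1 + 1)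
      rwa [sub_add_cancel]
  have hTcard : T.ncard = S.ncard := by
    rw [hTimg]
    exact Set.ncard_image_of_injective _ (sub_left_injective)
  have hpd : pairDist u v = (S ∪ T).ncard := by rw [pairDist, hP]
  have hhd : hamDist u v = S.ncard := rfl
  constructor
  · rintro ⟨h0, h1⟩
    constructor
    · -- lower bound: find j ∈ T \ S
      have hex : ∃ j, j ∈ T ∧ j ∉ S := by
        by_contra hc
        push_neg at hc
        -- then S is closed under subtracting 1, hence S = univ
        obtain ⟨i0, hi0⟩ := Set.nonempty_of_ncard_ne_zero (by omega : S.ncard ≠ 0)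
        have key : ∀ k : ℕ, (i0 - (k : ZMod n)) ∈ S := by
          intro k
          induction k with
          | zero => simpa using hi0
          | succ m ih =>
            have : (i0 - ((m : ZMod n) + 1)) ∈ T → (i0 - ((m : ZMod n) + 1)) ∈ S :=
              hc _
            push_cast
            apply this
            show u (i0 - ((m : ZMod n) + 1) + 1) ≠ v _
            have : i0 - ((m : ZMod n) + 1) + 1 = i0 - (m : ZMod n) := by ring
            rw [this]
            exact ih
        have huniv : S = Set.univ := by
          ext x
          simp only [Set.mem_univ, iff_true]
          have := key (i0 - x).val
          rwa [ZMod.natCast_val, ZMod.cast_id, sub_sub_cancel] at this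
        rw [hhd, huniv, Set.ncard_univ, Nat.card_zmod] at h1
        omega
      obtain ⟨j, hjT, hjS⟩ := hex
      have hssub : S ⊂ S ∪ T := by
        constructor
        · exact Set.subset_union_left
        · intro hsub
          exact hjS (hsub (Set.mem_union_right S hjT))
      have := Set.ncard_lt_ncard hssub (Set.toFinite _)
      rw [hpd, hhd]
      omega
    · rw [hpd, hhd]
      have := Set.ncard_union_le S T
      omega
  · rintro (h | h)
    · have hSe : S = ∅ := by
        rw [hhd] at h
        exact (Set.ncard_eq_zero (Set.toFinite _)).mp h
      have hTe : T = ∅ := by rw [hTimg, hSe]; simp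
      rw [hpd, hhd, hSe, hTe]
      simp
    · have hSu : S = Set.univ := by
        apply Set.eq_of_subset_of_ncard_le (Set.subset_univ S)
        rw [Set.ncard_univ, Nat.card_zmod, ← hhd, h]
      rw [hpd, hhd, hSu, Set.univ_union]
end

section
/- (Singleton bound for symbol-pair codes) Let q ≥ 2 and 2 ≤ d ≤ n. If C ⊆ Σ^n is a code over an alphabet Σ of size q whose pair-distance between any two distinct codewords is at least d, then |C| ≤ q^{n-d+2}. -/
/-- Singleton bound for symbol-pair codes. -/
theorem stmt_1 {σ : Type*} {n d q : ℕ} (hq : 2 ≤ q) (hcard : Nat.card σ = q)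
    (hd : 2 ≤ d) (hdn : d ≤ n) (C : Set (ZMod n → σ))
    (hC : ∀ u ∈ C, ∀ v ∈ C, u ≠ v → d ≤ pairDist u v) :
    C.ncard ≤ q ^ (n - d + 2) := by
  have hn : 0 < n := by omega
  haveI : NeZero n := ⟨by omega⟩
  have hσfin : Finite σ := by
    have : 0 < Nat.card σ := by omega
    exact (Nat.card_pos_iff.mp this).2
  -- projection onto the first n - d + 2 coordinates
  set m : ℕ := n - d + 2 with hm
  have hmn : m ≤ n := by omega
  let f : (ZMod n → σ) → (Fin m → σ) := fun u k => u ((k.val : ℕ) : ZMod n)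
  -- the window set B of size d - 1
  let B : Set (ZMod n) := {i : ZMod n | n - d + 1 ≤ i.val}
  have hB : B.ncard ≤ d - 1 := by
    have hinj : Set.InjOn (fun i : ZMod n => i.val - (n - d + 1)) B := by
      intro i hi j hj hij
      have hiv : n - d + 1 ≤ i.val := hi
      have hjv : n - d + 1 ≤ j.val := hj
      simp only at hij
      have : i.val = j.val := by omega
      exact ZMod.val_injective n this
    have himg : (fun i : ZMod n => i.val - (n - d + 1)) '' B ⊆ Set.Iio (d - 1) := by
      rintro x ⟨i, hi, rfl⟩
      have h1 : i.val < n := ZMod.val_lt i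
      have h2 : n - d + 1 ≤ i.val := hi
      simp only [Set.mem_Iio]
      omega
    calc B.ncard = ((fun i : ZMod n => i.val - (n - d + 1)) '' B).ncard :=
          (Set.ncard_image_of_injOn hinj).symm
      _ ≤ (Set.Iio (d - 1)).ncard := Set.ncard_le_ncard himg (Set.finite_Iio _)
      _ = d - 1 := by
          rw [← Finset.coe_Iio, Set.ncard_coe_finset, Nat.card_Iio]
  -- f is injective on C
  have hfinj : Set.InjOn f C := by
    intro u hu v hv huv
    by_contra hne
    have hdle : d ≤ pairDist u v := hC u hu v hv hne
    have hagree : ∀ j : ZMod n, j.val < m → u j = v j := by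
      intro j hj
      have := congrFun huv ⟨j.val, hj⟩
      simpa [f, ZMod.natCast_rightInverse j] using this
    have hsub : {i : ZMod n | (u i, u (i + 1)) ≠ (v i, v (i + 1))} ⊆ B := by
      intro i hi
      have hiv : i.val < n := ZMod.val_lt i
      by_contra hib
      simp only [B, Set.mem_setOf_eq, not_le] at hib
      have h1 : u i = v i := hagree i (by omega)
      have hival : i.val < n - 1 := by omega
      have hsucc : (i + 1).val = i.val + 1 := by
        have hone : (1 : ZMod n).val = 1 % n := ZMod.val_one_eq_one_mod n
        rw [ZMod.val_add, hone, Nat.mod_eq_of_lt (show 1 < n by omega),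
          Nat.mod_eq_of_lt (show i.val + 1 < n by omega)]
      have h2 : u (i + 1) = v (i + 1) := hagree (i + 1) (by omega)
      exact hi (by simp [Set.mem_setOf_eq, h1, h2])
    have hT : pairDist u v ≤ B.ncard :=
      Set.ncard_le_ncard hsub (Set.toFinite B)
    omega
  calc C.ncard = (f '' C).ncard := (Set.ncard_image_of_injOn hfinj).symm
    _ ≤ Nat.card (Fin m → σ) := by
        rw [← Set.ncard_univ]
        exact Set.ncard_le_ncard (Set.subset_univ _) Set.finite_univ
    _ = q ^ m := by
        rw [Nat.card_fun]
        simp [hcard]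
end

section
/- Let Σ have size q and let d < n. If C ⊆ Σ^n is a classical MDS code with minimum Hamming distance d and size q^{n-d+1}, then C is an MDS (n, d+1)_q-symbol-pair code, i.e., any two distinct codewords of C have pair-distance at least d+1 and |C| = q^{n-(d+1)+2}. -/
lemma cyclic_boundary {n : ℕ} [NeZero n] (A : Set (ZMod n)) (hne : A.Nonempty)
    (hnu : A ≠ Set.univ) : ∃ i, i ∉ A ∧ i + 1 ∈ A := by
  by_contra h
  push_neg at h
  obtain ⟨j, hj⟩ : ∃ j, j ∉ A := by
    by_contra h'
    push_neg at h'
    exact hnu (Set.eq_univ_of_forall h')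
  have key : ∀ k : ℕ, j + (k : ZMod n) ∉ A := by
    intro k
    induction k with
    | zero => simpa using hj
    | succ m ih =>
      have : j + ((m : ZMod n) + 1) = (j + m) + 1 := by ring
      push_cast
      rw [this]
      exact h _ ih
  obtain ⟨i, hi⟩ := hne
  have : i = j + (((i - j).val : ℕ) : ZMod n) := by
    rw [ZMod.natCast_val, ZMod.cast_id]; ring
  exact key (i - j).val (this ▸ hi)

/-- a classical MDS code with Hamming distance d < n is an
MDS (n, d+1)_q symbol-pair code. -/
theorem stmt_2 {σ : Type*} {n d q : ℕ} (hcard : Nat.card σ = q) (hdn : d < n)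
    (C : Set (ZMod n → σ))
    (hdist : ∀ u ∈ C, ∀ v ∈ C, u ≠ v → d ≤ hamDist u v)
    (hsize : C.ncard = q ^ (n - d + 1)) :
    (∀ u ∈ C, ∀ v ∈ C, u ≠ v → d + 1 ≤ pairDist u v) ∧
      C.ncard = q ^ (n - (d + 1) + 2) := by
  have hn : n ≠ 0 := by omega
  haveI : NeZero n := ⟨hn⟩
  constructor
  · intro u hu v hv huv
    set A : Set (ZMod n) := {i | u i ≠ v i} with hA
    set B : Set (ZMod n) := {i | (u i, u (i + 1)) ≠ (v i, v (i + 1))} with hB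
    have hAB : A ⊆ B := by
      intro i hi heq
      exact hi (congrArg Prod.fst heq)
    have hd : d ≤ A.ncard := hdist u hu v hv huv
    have hBfin : B.Finite := Set.toFinite _
    by_cases hAu : A = Set.univ
    · have hBu : B = Set.univ := Set.eq_univ_of_univ_subset (hAu ▸ hAB)
      have : pairDist u v = n := by
        rw [pairDist, ← hB, hBu, Set.ncard_univ, Nat.card_eq_fintype_card,
          ZMod.card]
      omega
    · have hAne : A.Nonempty := by
        have : u ≠ v := huv
        rw [Function.ne_iff] at this
        obtain ⟨i, hi⟩ := this
        exact ⟨i, hi⟩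
      obtain ⟨i, hiA, hi1A⟩ := cyclic_boundary A hAne hAu
      have hiB : i ∈ B := by
        intro heq
        exact hi1A (congrArg Prod.snd heq)
      have hins : insert i A ⊆ B := Set.insert_subset hiB hAB
      have : A.ncard + 1 ≤ B.ncard := by
        have := Set.ncard_le_ncard hins hBfin
        rwa [Set.ncard_insert_of_notMem hiA (Set.toFinite _)] at this
      have hBn : d + 1 ≤ B.ncard := by omega
      exact hBn
  · have : n - (d + 1) + 2 = n - d + 1 := by omega
    rw [this, hsize]
end

section
/- For every prime power q, and every n, d with 4 ≤ d ≤ n and n ≤ q+1, there exists an MDS (n,d)_q-symbol-pair code, i.e., a code C ⊆ Σ^n over an alphabet Σ of size q with minimum pair-distance d between distinct codewords and |C| = q^{n-d+2}. -/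
open Polynomial



lemma shift_exists {n : ℕ} [NeZero n] {S : Set (ZMod n)} (hne : S.Nonempty)
    (hproper : S ≠ Set.univ) : ∃ i, i ∉ S ∧ i + 1 ∈ S := by
  by_contra h
  push_neg at h
  obtain ⟨a, ha⟩ := hne
  obtain ⟨b, hb⟩ := (Set.ne_univ_iff_exists_notMem S).1 hproper
  have key : ∀ m : ℕ, b + (m : ZMod n) ∉ S := by
    intro m
    induction m with
    | zero => simpa using hb
    | succ m ih =>
      have := h _ ih
      push_cast
      rw [← add_assoc]
      exact this
  have : a = b + (((a - b).val : ℕ) : ZMod n) := by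
    rw [ZMod.natCast_zmod_val]; ring
  exact key (a - b).val (this ▸ ha)

lemma ncard_val_lt {n m : ℕ} [NeZero n] (hm : m ≤ n) :
    {i : ZMod n | i.val < m}.ncard = m := by
  have himg : {i : ZMod n | i.val < m} = (fun j : ℕ => (j : ZMod n)) '' {j | j < m} := by
    ext i
    constructor
    · intro hi; exact ⟨i.val, hi, ZMod.natCast_zmod_val i⟩
    · rintro ⟨j, hj, rfl⟩
      simpa [ZMod.val_cast_of_lt (lt_of_lt_of_le hj hm)] using hj
  have hinj : Set.InjOn (fun j : ℕ => (j : ZMod n)) {j | j < m} := by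
    intro x hx y hy hxy
    have := congrArg ZMod.val hxy
    rwa [ZMod.val_cast_of_lt (lt_of_lt_of_le hx hm),
      ZMod.val_cast_of_lt (lt_of_lt_of_le hy hm)] at this
  have hr : ({j : ℕ | j < m}) = ↑(Finset.range m) := by ext j; simp
  rw [himg, Set.ncard_image_of_injOn hinj, hr, Set.ncard_coe_finset, Finset.card_range]

lemma ncard_val_ge {n m : ℕ} [NeZero n] (hm : m ≤ n) :
    {i : ZMod n | m ≤ i.val}.ncard = n - m := by
  have hc : {i : ZMod n | i.val < m}ᶜ = {i : ZMod n | m ≤ i.val} := by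
    ext i; simp [not_lt]
  have h2 := Set.ncard_add_ncard_compl {i : ZMod n | i.val < m}
  rw [ncard_val_lt hm, hc, Nat.card_zmod] at h2
  omega

lemma ncard_eval_zero_le {F : Type*} [Field F] [DecidableEq F] {m : ℕ} (e : Fin m ↪ F)
    {g : F[X]} (hg : g ≠ 0) :
    {x : Fin m | Polynomial.eval (e x) g = 0}.ncard ≤ g.natDegree := by
  have h1 : {x : Fin m | Polynomial.eval (e x) g = 0}.ncard ≤ (↑g.roots.toFinset : Set F).ncard := by
    apply Set.ncard_le_ncard_of_injOn (fun x => e x)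
    · intro x hx
      have hx' : Polynomial.IsRoot g (e x) := hx
      simpa [Multiset.mem_toFinset, Polynomial.mem_roots hg] using hx'
    · exact fun x _ y _ hxy => e.injective hxy
  rw [Set.ncard_coe_finset] at h1
  exact h1.trans ((Multiset.toFinset_card_le _).trans (Polynomial.card_roots' g))

noncomputable def cw {F : Type} [Field F] {n : ℕ} (K : ℕ) (e : Fin (n-1) ↪ F)
    (f : F[X]) (i : ZMod n) : F :=
  if h : i.val < n - 1 then f.eval (e ⟨i.val, h⟩) else f.coeff (K - 1)

lemma cw_sub {F : Type} [Field F] {n : ℕ} (K : ℕ) (e : Fin (n-1) ↪ F) (f g : F[X])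
    (i : ZMod n) : cw K e (f - g) i = cw K e f i - cw K e g i := by
  unfold cw; split <;> simp

lemma zeroset_bound {F : Type} [Field F] [DecidableEq F] {n K : ℕ} (hn : 4 ≤ n)
    (hK2 : 2 ≤ K) (hKn : K ≤ n - 2) (e : Fin (n-1) ↪ F) {g : F[X]} (hg : g ≠ 0)
    (hmem : g ∈ Polynomial.degreeLT F K) :
    {i : ZMod n | cw K e g i = 0}.ncard ≤ K - 1 := by
  haveI : NeZero n := ⟨by omega⟩
  have hdeg : g.natDegree ≤ K - 1 := by
    have h1 := Polynomial.mem_degreeLT.1 hmem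
    have h2 := (Polynomial.natDegree_lt_iff_degree_lt hg).2 h1
    omega
  have hinj : Set.InjOn (fun x : Fin (n-1) => ((x : ℕ) : ZMod n)) {x | Polynomial.eval (e x) g = 0} := by
    intro x _ y _ hxy
    have := congrArg ZMod.val hxy
    rw [ZMod.val_cast_of_lt (x.isLt.trans_le (by omega)),
      ZMod.val_cast_of_lt (y.isLt.trans_le (by omega))] at this
    exact Fin.ext this
  set B := (fun x : Fin (n-1) => ((x : ℕ) : ZMod n)) '' {x | Polynomial.eval (e x) g = 0} with hB
  have hBcard : B.ncard ≤ g.natDegree := by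
    rw [hB, Set.ncard_image_of_injOn hinj]
    exact ncard_eval_zero_le e hg
  have hmem_first : ∀ i : ZMod n, i.val < n - 1 → cw K e g i = 0 → i ∈ B := by
    intro i h h0
    refine ⟨⟨i.val, h⟩, ?_, ?_⟩
    · unfold cw at h0
      rwa [dif_pos h] at h0
    · simp [ZMod.natCast_zmod_val]
  by_cases hc : g.coeff (K - 1) = 0
  · have hnd : g.natDegree ≤ K - 2 := by
      by_contra h'
      have hEq : g.natDegree = K - 1 := by omega
      have hl : g.leadingCoeff = 0 := by
        rw [Polynomial.leadingCoeff, hEq]; exact hc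
      exact hg (Polynomial.leadingCoeff_eq_zero.1 hl)
    have hsub : {i : ZMod n | cw K e g i = 0} ⊆ B ∪ {((n-1 : ℕ) : ZMod n)} := by
      intro i hi
      by_cases h : i.val < n - 1
      · exact Or.inl (hmem_first i h hi)
      · right
        have hv : i.val = n - 1 := by have := ZMod.val_lt i; omega
        simp only [Set.mem_singleton_iff]
        rw [← ZMod.natCast_zmod_val i, hv]
    have := (Set.ncard_le_ncard hsub (Set.toFinite _)).trans (Set.ncard_union_le _ _)
    have hs1 : ({((n-1 : ℕ) : ZMod n)} : Set (ZMod n)).ncard = 1 := Set.ncard_singleton _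
    omega
  · have hsub : {i : ZMod n | cw K e g i = 0} ⊆ B := by
      intro i hi
      by_cases h : i.val < n - 1
      · exact hmem_first i h hi
      · exfalso
        have : cw K e g i = g.coeff (K - 1) := by unfold cw; rw [dif_neg h]
        exact hc (this ▸ hi)
    have := (Set.ncard_le_ncard hsub (Set.toFinite _))
    omega


/-- existence of MDS (n,d)_q symbol-pair codes for prime powers q,
4 ≤ d ≤ n ≤ q + 1. -/
theorem stmt_3 (q n d : ℕ) (hq : IsPrimePow q) (hd4 : 4 ≤ d) (hdn : d ≤ n)
    (hnq : n ≤ q + 1) :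
    ∃ (σ : Type) (C : Set (ZMod n → σ)), Nat.card σ = q ∧
      IsLeast {e | ∃ u ∈ C, ∃ v ∈ C, u ≠ v ∧ pairDist u v = e} d ∧
      C.ncard = q ^ (n - d + 2) := by
  classical
  obtain ⟨p, a, hp, ha, hpa⟩ := hq
  haveI : Fact p.Prime := ⟨Nat.prime_iff.2 hp⟩
  set F := GaloisField p a with hF
  haveI : NeZero n := ⟨by omega⟩
  haveI : Fintype F := Fintype.ofFinite F
  have hFq : Nat.card F = q := by
    show Nat.card (GaloisField p a) = q
    rw [GaloisField.card p a (by omega : a ≠ 0)]; exact hpa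
  have hq2 : 2 ≤ q := by
    have := (Nat.prime_iff.2 hp).two_le
    calc 2 ≤ p := this
    _ ≤ p ^ a := Nat.le_self_pow (by omega) p
    _ = q := hpa
  have hcard : Fintype.card (Fin (n-1)) ≤ Fintype.card F := by
    rw [Fintype.card_fin, ← Nat.card_eq_fintype_card, hFq]; omega
  obtain ⟨e⟩ := Function.Embedding.nonempty_of_card_le hcard
  set K := n - d + 2 with hKdef
  have hK2 : 2 ≤ K := by omega
  have hKn : K ≤ n - 2 := by omega
  set CC : Set (ZMod n → F) := cw K e '' ↑(Polynomial.degreeLT F K) with hCC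
  have hval_succ : ∀ i : ZMod n, i.val + 1 < n → (i + 1).val = i.val + 1 := by
    intro i h
    have h2 : (i + 1 : ZMod n) = ((i.val + 1 : ℕ) : ZMod n) := by
      rw [Nat.cast_add, ZMod.natCast_zmod_val, Nat.cast_one]
    rw [h2, ZMod.val_cast_of_lt h]
  -- lower bound
  have key : ∀ u ∈ CC, ∀ v ∈ CC, u ≠ v → d ≤ pairDist u v := by
    rintro u ⟨f, hf, rfl⟩ v ⟨g, hgmem, rfl⟩ huv
    have hfg : f - g ≠ 0 := sub_ne_zero.2 (fun h => huv (by rw [h]))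
    have hmem' : f - g ∈ Polynomial.degreeLT F K :=
      Submodule.sub_mem _ hf hgmem
    have hA := zeroset_bound (by omega) hK2 hKn e hfg hmem'
    set A := {i : ZMod n | cw K e (f - g) i = 0} with hAdef
    set S := {i : ZMod n | cw K e f i ≠ cw K e g i} with hSdef
    have hSA : Sᶜ = A := by
      ext i
      simp [hAdef, hSdef, cw_sub, sub_eq_zero]
    have hcardS : S.ncard + A.ncard = n := by
      have h3 := Set.ncard_add_ncard_compl S
      rwa [hSA, Nat.card_zmod] at h3
    set T := {i : ZMod n |
      (cw K e f i, cw K e f (i+1)) ≠ (cw K e g i, cw K e g (i+1))} with hT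
    have hST : S ⊆ T := fun i hi hcontra => hi (congrArg Prod.fst hcontra)
    have hpd : pairDist (cw K e f) (cw K e g) = T.ncard := rfl
    by_cases hAne : A.Nonempty
    · have hSproper : S ≠ Set.univ := by
        obtain ⟨i, hi⟩ := hAne
        intro hS
        have h4 : i ∈ Sᶜ := by rw [hSA]; exact hi
        rw [hS] at h4
        simp at h4
      have hSne : S.Nonempty := Set.nonempty_of_ncard_ne_zero (by omega)
      obtain ⟨i₀, hi₀, hi₀'⟩ := shift_exists hSne hSproper
      have hins : insert i₀ S ⊆ T := by
        intro j hj
        rcases hj with rfl | hj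
        · intro hcontra
          exact hi₀' (congrArg Prod.snd hcontra)
        · exact hST hj
      have h5 := Set.ncard_le_ncard hins (Set.toFinite _)
      rw [Set.ncard_insert_of_notMem hi₀ (Set.toFinite _)] at h5
      rw [hpd]; omega
    · have hAe : A = ∅ := Set.not_nonempty_iff_eq_empty.1 hAne
      have hA0 : A.ncard = 0 := by rw [hAe]; simp
      have h5 := Set.ncard_le_ncard hST (Set.toFinite _)
      rw [hpd]; omega
  -- the explicit pair at distance exactly d
  have hle : K - 1 ≤ n - 1 := by omega
  set f₀ : F[X] := ∏ x : Fin (K-1),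
      (Polynomial.X - Polynomial.C (e (Fin.castLE hle x))) with hf₀
  have hmonic : f₀.Monic :=
    Polynomial.monic_prod_of_monic _ _ (fun x _ => Polynomial.monic_X_sub_C _)
  have hdeg0 : f₀.natDegree = K - 1 := by
    rw [hf₀, Polynomial.natDegree_prod _ _ (fun x _ => Polynomial.X_sub_C_ne_zero _)]
    simp
  have hf₀ne : f₀ ≠ 0 := hmonic.ne_zero
  have hf₀mem : f₀ ∈ Polynomial.degreeLT F K := by
    rw [Polynomial.mem_degreeLT, Polynomial.degree_eq_natDegree hf₀ne, hdeg0]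
    exact_mod_cast (by omega : K - 1 < K)
  have hcoeff : f₀.coeff (K-1) = 1 := by
    have h6 := hmonic.coeff_natDegree
    rwa [hdeg0] at h6
  have heval : ∀ x : Fin (n-1), (Polynomial.eval (e x) f₀ = 0 ↔ (x : ℕ) < K - 1) := by
    intro x
    rw [hf₀, Polynomial.eval_prod, Finset.prod_eq_zero_iff]
    constructor
    · rintro ⟨y, -, hy⟩
      rw [Polynomial.eval_sub, Polynomial.eval_X, Polynomial.eval_C, sub_eq_zero] at hy
      have h7 := e.injective hy
      rw [h7]
      exact y.isLt
    · intro hx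
      refine ⟨⟨(x:ℕ), hx⟩, Finset.mem_univ _, ?_⟩
      rw [Polynomial.eval_sub, Polynomial.eval_X, Polynomial.eval_C, sub_eq_zero]
      exact congrArg e (Fin.ext rfl)
  set v := cw K e f₀ with hv
  have hvzero : ∀ i : ZMod n, (v i = 0 ↔ i.val < K - 1) := by
    intro i
    rw [hv]; unfold cw
    by_cases h : i.val < n - 1
    · rw [dif_pos h]
      simpa using heval ⟨i.val, h⟩
    · rw [dif_neg h, hcoeff]
      have hlt := ZMod.val_lt i
      constructor
      · intro h1; exact absurd h1 one_ne_zero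
      · intro h1; exact absurd h1 (by omega)
  have hu0 : ∀ i, cw K e (0 : F[X]) i = 0 := by
    intro i; unfold cw; split <;> simp
  have humem : cw K e (0:F[X]) ∈ CC := ⟨0, Submodule.zero_mem _, rfl⟩
  have hvmem : v ∈ CC := ⟨f₀, hf₀mem, rfl⟩
  have hune : cw K e (0:F[X]) ≠ v := by
    intro h
    have h1 := congrFun h (((n-1 : ℕ) : ZMod n))
    rw [hu0] at h1
    have hv1 : (((n-1:ℕ) : ZMod n)).val = n - 1 := ZMod.val_cast_of_lt (by omega)
    have h3 := (hvzero _).1 h1.symm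
    rw [hv1] at h3
    omega
  have hTeq : {i : ZMod n |
      (cw K e (0:F[X]) i, cw K e (0:F[X]) (i+1)) ≠ (v i, v (i+1))}
      = {i : ZMod n | K - 2 ≤ i.val} := by
    ext i
    simp only [Set.mem_setOf_eq]
    constructor
    · intro hne
      by_contra hlt
      push_neg at hlt
      apply hne
      have h1 : v i = 0 := (hvzero i).2 (by omega)
      have hi1 : (i+1).val = i.val + 1 := hval_succ i (by omega)
      have h2 : v (i+1) = 0 := (hvzero _).2 (by omega)
      rw [hu0, hu0, h1, h2]
    · intro hge hcontra
      have h1 := congrArg Prod.fst hcontra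
      have h2 := congrArg Prod.snd hcontra
      simp only [hu0] at h1 h2
      have h1' := (hvzero i).1 h1.symm
      have h2' := (hvzero _).1 h2.symm
      have hi2 : i.val = K - 2 := by omega
      have hi1 : (i+1).val = i.val + 1 := hval_succ i (by omega)
      omega
  refine ⟨F, CC, hFq, ⟨⟨cw K e (0:F[X]), humem, v, hvmem, hune, ?_⟩, ?_⟩, ?_⟩
  · have hpd : pairDist (cw K e (0:F[X])) v
        = ({i : ZMod n | K - 2 ≤ i.val}).ncard := by
      unfold pairDist
      rw [hTeq]
    rw [hpd, ncard_val_ge (by omega)]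
    omega
  · rintro x ⟨u, hu, w, hw, huw, rfl⟩
    exact key u hu w hw huw
  · -- cardinality
    have hinjOn : Set.InjOn (cw K e) ↑(Polynomial.degreeLT F K) := by
      intro f hf g hg hfg
      by_contra hne
      have hsub : f - g ≠ 0 := sub_ne_zero.2 hne
      have hmem' : f - g ∈ Polynomial.degreeLT F K := Submodule.sub_mem _ hf hg
      have hall : ∀ x : Fin (n-1), Polynomial.eval (e x) (f - g) = 0 := by
        intro x
        have hxval : (((x:ℕ) : ZMod n)).val = (x : ℕ) :=
          ZMod.val_cast_of_lt (x.isLt.trans_le (by omega))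
        have hx : (((x:ℕ) : ZMod n)).val < n - 1 := by rw [hxval]; exact x.isLt
        have h8 := congrFun hfg ((x:ℕ) : ZMod n)
        have h0 : cw K e (f-g) (((x:ℕ)) : ZMod n) = 0 := by
          rw [cw_sub, h8, sub_self]
        have hcwe : cw K e (f - g) (((x:ℕ)) : ZMod n)
            = Polynomial.eval (e x) (f - g) := by
          unfold cw
          rw [dif_pos hx]
          exact congrArg (fun t => Polynomial.eval (e t) (f - g)) (Fin.ext hxval)
        rwa [hcwe] at h0
      have hroots := ncard_eval_zero_le e hsub
      have huniv : {x : Fin (n-1) | Polynomial.eval (e x) (f-g) = 0} = Set.univ := by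
        ext x
        simp only [Set.mem_setOf_eq, Set.mem_univ, iff_true]
        exact hall x
      rw [huniv, Set.ncard_univ, Nat.card_eq_fintype_card, Fintype.card_fin] at hroots
      have hdeg : (f-g).natDegree ≤ K - 1 := by
        have h1 := Polynomial.mem_degreeLT.1 hmem'
        have h2 := (Polynomial.natDegree_lt_iff_degree_lt hsub).2 h1
        omega
      omega
    rw [hCC, Set.ncard_image_of_injOn hinjOn]
    have h1 : (↑(Polynomial.degreeLT F K) : Set F[X]).ncard
        = Nat.card (Polynomial.degreeLT F K) := (Nat.card_coe_set_eq _).symm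
    rw [h1, Nat.card_congr (Polynomial.degreeLTEquiv F K).toEquiv, Nat.card_fun,
      hFq, Nat.card_eq_fintype_card, Fintype.card_fin]
end

section
/- (Interleaving) If there exists a q-ary code of length n with minimum Hamming distance d and size M₁, and a q-ary code of length n with minimum Hamming distance d and size M₂, then there exists a q-ary code of length 2n and size M₁·M₂ whose minimum pair-distance between distinct codewords is at least 2d. (Concretely, interleaving codewords u of the first code and v of the second as (u_0,v_0,u_1,v_1,...,u_{n-1},v_{n-1}) achieves this.) -/
open Set

namespace Stmt5Aux

variable {n : ℕ} {σ : Type*}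

noncomputable def dbl (n : ℕ) : ZMod n →+ ZMod (2 * n) :=
  ZMod.lift n ⟨2 • Int.castAddHom (ZMod (2 * n)), by
    have h : ((2 * n : ℕ) : ZMod (2 * n)) = 0 := ZMod.natCast_self _
    simp only [AddMonoidHom.smul_apply, Int.coe_castAddHom, two_smul,
      AddMonoidHom.add_apply]
    push_cast at h ⊢
    linear_combination h⟩

lemma dbl_intCast (k : ℤ) : dbl n ((k : ZMod n)) = ((2 * k : ℤ) : ZMod (2 * n)) := by
  simp only [dbl, ZMod.lift_coe, AddMonoidHom.smul_apply, Int.coe_castAddHom, two_smul,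
    AddMonoidHom.add_apply]
  push_cast
  ring

lemma dbl_injective : Function.Injective (dbl n) := by
  intro a b h
  obtain ⟨k, rfl⟩ := ZMod.intCast_surjective a
  obtain ⟨l, rfl⟩ := ZMod.intCast_surjective b
  rw [dbl_intCast, dbl_intCast, ZMod.intCast_eq_intCast_iff, Int.modEq_iff_dvd] at h
  rw [ZMod.intCast_eq_intCast_iff, Int.modEq_iff_dvd]
  obtain ⟨c, hc⟩ := h
  exact ⟨c, by push_cast at hc ⊢; linarith⟩

noncomputable def par (n : ℕ) : ZMod (2 * n) →+* ZMod 2 := ZMod.castHom ⟨n, rfl⟩ (ZMod 2)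

lemma parity_ne (j j' : ZMod n) : dbl n j ≠ dbl n j' + 1 := by
  obtain ⟨k, rfl⟩ := ZMod.intCast_surjective j
  obtain ⟨l, rfl⟩ := ZMod.intCast_surjective j'
  intro h
  have := congrArg (par n) h
  rw [dbl_intCast, dbl_intCast, map_add, map_intCast, map_intCast, map_one] at this
  have h0 : ((2 * k : ℤ) : ZMod 2) = 0 := by
    rw [ZMod.intCast_zmod_eq_zero_iff_dvd]; exact ⟨k, rfl⟩
  have h1 : ((2 * l : ℤ) : ZMod 2) = 0 := by
    rw [ZMod.intCast_zmod_eq_zero_iff_dvd]; exact ⟨l, rfl⟩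
  rw [h0, h1, zero_add] at this
  exact absurd this (by decide)

lemma exists_rep (i : ZMod (2 * n)) : ∃ j : ZMod n, i = dbl n j ∨ i = dbl n j + 1 := by
  obtain ⟨k, rfl⟩ := ZMod.intCast_surjective i
  refine ⟨((k / 2 : ℤ) : ZMod n), ?_⟩
  rcases Int.emod_two_eq_zero_or_one k with hk | hk
  · left; rw [dbl_intCast]; congr 1; omega
  · right; rw [dbl_intCast]
    rw [show ((2 * (k / 2) : ℤ) : ZMod (2*n)) + 1 = ((2 * (k / 2) + 1 : ℤ) : ZMod (2*n)) by push_cast; ring]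
    congr 1; omega

end Stmt5Aux

namespace Stmt5Aux

lemma odd_injective : Function.Injective (fun j : ZMod n => dbl n j + 1) := by
  intro a b h
  exact dbl_injective (by simpa using h)

noncomputable def E (n : ℕ) : ZMod n ⊕ ZMod n ≃ ZMod (2 * n) :=
  Equiv.ofBijective (Sum.elim (dbl n) (fun j => dbl n j + 1)) (by
    constructor
    · rintro (a | a) (b | b) h <;> simp only [Sum.elim_inl, Sum.elim_inr] at h
      · exact congrArg _ (dbl_injective h)
      · exact absurd h (parity_ne a b)
      · exact absurd h.symm (parity_ne b a)
      · exact congrArg _ (odd_injective h)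
    · intro i
      obtain ⟨j, h | h⟩ := exists_rep i
      · exact ⟨Sum.inl j, h.symm⟩
      · exact ⟨Sum.inr j, h.symm⟩)

noncomputable def il (u v : ZMod n → σ) : ZMod (2 * n) → σ :=
  Sum.elim u v ∘ (E n).symm

lemma il_dbl (u v : ZMod n → σ) (j : ZMod n) : il u v (dbl n j) = u j := by
  have h : (E n).symm (dbl n j) = Sum.inl j := by
    rw [Equiv.symm_apply_eq]; rfl
  simp [il, h]

lemma il_odd (u v : ZMod n → σ) (j : ZMod n) : il u v (dbl n j + 1) = v j := by
  have h : (E n).symm (dbl n j + 1) = Sum.inr j := by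
    rw [Equiv.symm_apply_eq]; rfl
  simp [il, h]

lemma dbl_one_add (j : ZMod n) : dbl n j + 1 + 1 = dbl n (j + 1) := by
  have h1 : dbl n (1 : ZMod n) = 2 := by
    have := dbl_intCast (n := n) 1
    push_cast at this
    simpa using this
  rw [map_add, h1]
  ring

end Stmt5Aux

open Stmt5Aux in
/-- interleaving two codes of Hamming distance d gives a
symbol-pair code of length 2n, size M₁·M₂ and pair-distance at least 2d. -/
theorem stmt_5 {σ : Type*} {n d M₁ M₂ : ℕ} (C₁ C₂ : Set (ZMod n → σ))
    (h₁ : ∀ u ∈ C₁, ∀ v ∈ C₁, u ≠ v → d ≤ hamDist u v) (hM₁ : C₁.ncard = M₁)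
    (h₂ : ∀ u ∈ C₂, ∀ v ∈ C₂, u ≠ v → d ≤ hamDist u v) (hM₂ : C₂.ncard = M₂) :
    ∃ D : Set (ZMod (2 * n) → σ), D.ncard = M₁ * M₂ ∧
      ∀ u ∈ D, ∀ v ∈ D, u ≠ v → 2 * d ≤ pairDist u v := by
  set F : (ZMod n → σ) × (ZMod n → σ) → (ZMod (2 * n) → σ) := fun p => il p.1 p.2 with hF
  have hFinj : Function.Injective F := by
    rintro ⟨u, v⟩ ⟨u', v'⟩ h
    have hu : u = u' := funext fun j => by
      simpa [hF, il_dbl] using congrFun h (dbl n j)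
    have hv : v = v' := funext fun j => by
      simpa [hF, il_odd] using congrFun h (dbl n j + 1)
    simp [hu, hv]
  refine ⟨F '' (C₁ ×ˢ C₂), ?_, ?_⟩
  · rw [Set.ncard_image_of_injective _ hFinj, ← hM₁, ← hM₂,
      ← Nat.card_coe_set_eq, ← Nat.card_coe_set_eq, ← Nat.card_coe_set_eq,
      ← Nat.card_prod]
    exact Nat.card_congr (Equiv.Set.prod _ _)
  · rintro _ ⟨⟨u, v⟩, ⟨hu, hv⟩, rfl⟩ _ ⟨⟨u', v'⟩, ⟨hu', hv'⟩, rfl⟩ hne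
    rcases Nat.eq_zero_or_pos d with rfl | hd
    · simp
    set Se : Set (ZMod n) := {j | (u j, v j) ≠ (u' j, v' j)} with hSe
    set So : Set (ZMod n) := {j | (v j, u (j + 1)) ≠ (v' j, u' (j + 1))} with hSo
    set A : Set (ZMod n) := {j | u j ≠ u' j} with hA
    set B : Set (ZMod n) := {j | v j ≠ v' j} with hB
    have finA : A.Finite := by
      rcases eq_or_ne u u' with rfl | h
      · simp [hA]
      · by_contra hinf
        have := h₁ u hu u' hu' h
        rw [hamDist, Set.Infinite.ncard hinf] at this
        omega
    have finB : B.Finite := by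
      rcases eq_or_ne v v' with rfl | h
      · simp [hB]
      · by_contra hinf
        have := h₂ v hv v' hv' h
        rw [hamDist, Set.Infinite.ncard hinf] at this
        omega
    have finSe : Se.Finite := (finA.union finB).subset (by
      intro j hj
      by_contra hc
      simp only [Set.mem_union, hA, hB, Set.mem_setOf_eq, not_or, not_not] at hc
      exact hj (by rw [hc.1, hc.2]))
    have finA1 : {j : ZMod n | u (j + 1) ≠ u' (j + 1)}.Finite :=
      finA.preimage (Set.injOn_of_injective (add_left_injective 1))
    have finSo : So.Finite := (finB.union finA1).subset (by
      intro j hj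
      by_contra hc
      simp only [Set.mem_union, hB, Set.mem_setOf_eq, not_or, not_not] at hc
      exact hj (by rw [hc.1, hc.2]))
    have hdecomp : {i : ZMod (2 * n) | (F (u, v) i, F (u, v) (i + 1)) ≠ (F (u', v') i, F (u', v') (i + 1))}
        = dbl n '' Se ∪ (fun j => dbl n j + 1) '' So := by
      ext i
      obtain ⟨j, rfl | rfl⟩ := exists_rep i
      · simp only [Set.mem_setOf_eq, Set.mem_union, Set.mem_image, hF, il_dbl, il_odd]
        constructor
        · intro h
          exact Or.inl ⟨j, h, rfl⟩
        · rintro (⟨j', hj', hji⟩ | ⟨j', hj', hji⟩)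
          · rwa [← dbl_injective hji]
          · exact absurd hji.symm (parity_ne j j')
      · simp only [Set.mem_setOf_eq, Set.mem_union, Set.mem_image, hF, dbl_one_add,
          il_dbl, il_odd]
        constructor
        · intro h
          exact Or.inr ⟨j, h, rfl⟩
        · rintro (⟨j', hj', hji⟩ | ⟨j', hj', hji⟩)
          · exact absurd hji (parity_ne j' j)
          · rwa [← odd_injective hji]
    have hdisj : Disjoint (dbl n '' Se) ((fun j => dbl n j + 1) '' So) := by
      rw [Set.disjoint_left]
      rintro x ⟨j, _, rfl⟩ ⟨j', _, h⟩
      exact parity_ne j j' h.symm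
    rw [pairDist, hdecomp,
      Set.ncard_union_eq hdisj (finSe.image _) (finSo.image _),
      Set.ncard_image_of_injective _ dbl_injective,
      Set.ncard_image_of_injective _ odd_injective, two_mul]
    have key : d ≤ Se.ncard ∧ d ≤ So.ncard := by
      have hne' : u ≠ u' ∨ v ≠ v' := by
        by_contra hc
        push_neg at hc
        exact hne (by rw [hc.1, hc.2])
      rcases hne' with h | h
      · have hdA : d ≤ A.ncard := h₁ u hu u' hu' h
        constructor
        · refine le_trans hdA (Set.ncard_le_ncard ?_ finSe)
          intro j hj
          simp only [hSe, Set.mem_setOf_eq]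
          exact fun hc => hj (congrArg Prod.fst hc)
        · have hsub : (fun j => j - 1) '' A ⊆ So := by
            rintro _ ⟨j, hj, rfl⟩
            simp only [hSo, Set.mem_setOf_eq, sub_add_cancel]
            exact fun hc => hj (congrArg Prod.snd hc)
          refine le_trans ?_ (Set.ncard_le_ncard hsub finSo)
          rw [Set.ncard_image_of_injective _ (sub_left_injective)]
          exact hdA
      · have hdB : d ≤ B.ncard := h₂ v hv v' hv' h
        constructor
        · refine le_trans hdB (Set.ncard_le_ncard ?_ finSe)
          intro j hj
          exact fun hc => hj (congrArg Prod.snd hc)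
        · refine le_trans hdB (Set.ncard_le_ncard ?_ finSo)
          intro j hj
          exact fun hc => hj (congrArg Prod.fst hc)
    omega
end

section
/- Suppose there exists a classical MDS code C ⊆ Σ^n over an alphabet Σ of size q with minimum Hamming distance d and size q^{n-d+1}, and suppose there exists a connected simple graph G on n vertices with m edges, all vertex degrees even, and girth at least n-d+1. Then there exists an MDS (m, m-n+d+1)_q-symbol-pair code. Concretely, if x_0 e_1 x_1 e_2 ... e_m x_m (with x_m = x_0) is a closed eulerian trail of G with vertex set Z_n, then C' = {(u_{x_0}, u_{x_1}, ..., u_{x_{m-1}}) : u ∈ C} has size q^{n-d+1} and minimum pair-distance at least m-n+d+1. -/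
/-
Along a closed eulerian trail `x₀ x₁ … x_{m-1}` the map `u ↦ (u_{x_i})ᵢ` is injective (the trail
visits every vertex). If two codewords agree on a set `S` of vertices, the positions where their
images agree as pairs are distinct edges of the trail with both ends in `S`. As `|S| ≤ n - d` is
below the girth, these edges form a forest on `S`, so there are at most `|S| - 1 ≤ n - d - 1` of
them.
-/

open Finset

namespace SimpleGraph

variable {V : Type*} {G : SimpleGraph V}

theorem Reachable.mem_of_forall_adj_mem {s : Set V} (hs : ∀ x ∈ s, ∀ y, G.Adj x y → y ∈ s)
    {a b : V} (hab : G.Reachable a b) (ha : a ∈ s) : b ∈ s := by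
  rw [reachable_iff_reflTransGen] at hab
  induction hab with
  | refl => exact ha
  | tail _ hbc ih => exact hs _ ih _ hbc

namespace Walk

variable [DecidableEq V]

theorem IsTrail.exists_adj_notMem_edges {u v x : V} [Fintype (G.neighborSet x)]
    {p : G.Walk u v} (hp : p.IsTrail) (hodd : ¬Even (p.edges.countP (x ∈ ·)))
    (heven : Even (G.degree x)) : ∃ y, G.Adj x y ∧ s(x, y) ∉ p.edges := by
  by_contra! hall
  have hfilter : hp.edgesFinset.filter (x ∈ ·) = G.incidenceFinset x := by
    ext e
    simp only [mem_filter, mem_incidenceFinset, incidenceSet, Set.mem_ofPred_eq]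
    refine ⟨fun ⟨he, hxe⟩ => ⟨p.edges_subset_edgeSet he, hxe⟩, fun ⟨he, hxe⟩ => ?_⟩
    obtain ⟨y, rfl⟩ := Sym2.mem_iff_exists.mp hxe
    exact ⟨hall y he, hxe⟩
  rw [← card_incidenceFinset_eq_degree, ← hfilter] at heven
  refine hodd ?_
  convert heven using 1
  simp [Finset.filter, List.countP_eq_length_filter]

end Walk

open Walk in
theorem Connected.exists_isEulerian [Fintype V] [DecidableEq V] [DecidableRel G.Adj]
    (hconn : G.Connected) (heven : ∀ v, Even (G.degree v)) :
    ∃ (v : V) (p : G.Walk v v), p.IsEulerian ∧ ∀ w, w ∈ p.support := by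
  have := hconn.nonempty
  -- A longest trail is closed (else it extends at its odd end) and uses every edge at each of
  -- its vertices (else rotate it there and extend); connectivity then makes it eulerian.
  obtain ⟨u, v, p, hp, hmax⟩ := exists_isTrail_forall_isTrail_length_le_length G
  obtain rfl : u = v := by
    by_contra huv
    have hodd : ¬Even (p.edges.countP (v ∈ ·)) := by
      simp [hp.even_countP_edges_iff, huv]
    obtain ⟨y, hvy, hnew⟩ := hp.exists_adj_notMem_edges hodd (heven v)
    have := hmax _ _ (p.reverse.cons hvy.symm)
      ((hp.reverse _).cons hvy.symm (by simpa [Sym2.eq_swap] using hnew))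
    simp at this
  have hsat : ∀ x ∈ p.support, ∀ y, G.Adj x y → s(x, y) ∈ p.edges := by
    intro x hx y hxy
    by_contra hnew
    have := hmax _ _ ((p.rotate x hx).cons hxy.symm) (((isTrail_rotate hx).mpr hp).cons hxy.symm
      (by simpa [(p.rotate_edges x hx).mem_iff, Sym2.eq_swap] using hnew))
    simp at this
  have hall : ∀ w, w ∈ p.support := fun w =>
    (hconn.preconnected u w).mem_of_forall_adj_mem (s := {w | w ∈ p.support})
      (fun x hx y hxy => p.snd_mem_support_of_mem_edges (hsat x hx y hxy)) p.start_mem_support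
  refine ⟨u, p, hp.isEulerian_of_forall_mem fun e he => ?_, hall⟩
  induction e using Sym2.ind with
  | _ a b => exact hsat a (hall a) b he

theorem IsAcyclic.of_card_lt_egirth [Fintype V] (h : (Fintype.card V : ℕ∞) < G.egirth) :
    G.IsAcyclic := by
  intro v c hc
  have hlen : c.length ≤ Fintype.card V := by
    simpa using hc.support_nodup.length_le_card
  exact (h.trans_le (G.egirth_le_length hc)).not_ge (by exact_mod_cast hlen)

theorem IsAcyclic.card_edgeFinset_le [Fintype V] [Fintype G.edgeSet] (h : G.IsAcyclic) :
    #G.edgeFinset ≤ Fintype.card V - 1 := by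
  cases isEmpty_or_nonempty V
  · simp [Finset.eq_empty_of_isEmpty]
  classical
  obtain ⟨T, hGT, -, hT⟩ := connected_top.exists_isTree_le_of_le_of_isAcyclic le_top h
  have := hT.card_edgeFinset
  have := card_le_card (edgeFinset_mono hGT)
  omega

theorem card_edgeFinset_inter_sym2_le [Fintype V] [DecidableEq V] [Fintype G.edgeSet]
    (S : Finset V) (hS : (#S : ℕ∞) < G.egirth) : #(G.edgeFinset ∩ S.sym2) ≤ #S - 1 := by
  classical
  have hacyc : (G.induce (S : Set V)).IsAcyclic :=
    .of_card_lt_egirth <| by simpa using hS.trans_le (Copy.induce G S).isContained.egirth_le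
  calc #(G.edgeFinset ∩ S.sym2)
      ≤ #((G.induce (S : Set V)).edgeFinset.map (Function.Embedding.subtype _).sym2Map) := by
        refine card_le_card fun e he => ?_
        induction e using Sym2.ind with
        | _ a b =>
          simp only [mem_inter, mem_edgeFinset, mem_edgeSet, mem_sym2_iff, Sym2.mem_iff,
            forall_eq_or_imp, forall_eq] at he
          simp only [mem_map, mem_edgeFinset]
          exact ⟨s(⟨a, he.2.1⟩, ⟨b, he.2.2⟩), he.1, rfl⟩
    _ = #(G.induce (S : Set V)).edgeFinset := card_map _
    _ ≤ #S - 1 := by simpa using hacyc.card_edgeFinset_le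

theorem Walk.getVert_val_add_one {m : ℕ} [NeZero m] {v : V} (p : G.Walk v v) (hm : p.length = m)
    (i : ZMod m) : p.getVert (i + 1).val = p.getVert (i.val + 1) := by
  rw [ZMod.val_add, ZMod.val_one_eq_one_mod, Nat.add_mod_mod]
  rcases (Nat.succ_le_of_lt i.val_lt).lt_or_eq with hlt | heq
  · rw [Nat.mod_eq_of_lt hlt]
  · rw [Nat.succ_eq_add_one] at heq
    rw [heq, Nat.mod_self, getVert_zero, ← hm, getVert_length]

theorem Connected.exists_zmod_eulerian_circuit [Fintype V] [DecidableEq V] [DecidableRel G.Adj]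
    (hconn : G.Connected) (heven : ∀ v, Even (G.degree v)) {m : ℕ} [NeZero m]
    (hm : #G.edgeFinset = m) :
    ∃ x : ZMod m → V, Function.Surjective x ∧ (∀ i, G.Adj (x i) (x (i + 1))) ∧
      Function.Injective fun i => s(x i, x (i + 1)) := by
  obtain ⟨v, p, hp, hsupp⟩ := hconn.exists_isEulerian heven
  have hlen : p.length = m := by
    rw [← hm, ← hp.edgesFinset_eq, ← p.length_edges]
    rfl
  have hval (i : ZMod m) : i.val < p.length := hlen ▸ i.val_lt
  refine ⟨fun i => p.getVert i.val, fun w => ?_, fun i => ?_, fun i j hij => ?_⟩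
  · obtain ⟨j, rfl, hj⟩ := Walk.mem_support_iff_exists_getVert.mp (hsupp w)
    rcases hj.lt_or_eq with hlt | rfl
    · exact ⟨j, by simp only [ZMod.val_natCast_of_lt (hlen ▸ hlt)]⟩
    · exact ⟨0, by simp⟩
  · simp only [p.getVert_val_add_one hlen]
    exact p.adj_getVert_succ (hval i)
  · simp only [p.getVert_val_add_one hlen] at hij
    rw [← p.getElem_edges (by simpa using hval i), ← p.getElem_edges (by simpa using hval j),
      hp.isTrail.edges_nodup.getElem_inj_iff] at hij
    exact ZMod.val_injective m hij

theorem card_filter_mem_and_mem_succ_le [Fintype V] [DecidableEq V] [Fintype G.edgeSet]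
    {m : ℕ} [NeZero m] {x : ZMod m → V} (hadj : ∀ i, G.Adj (x i) (x (i + 1)))
    (hinj : Function.Injective fun i => s(x i, x (i + 1))) (S : Finset V)
    (hS : (#S : ℕ∞) < G.egirth) : #{i | x i ∈ S ∧ x (i + 1) ∈ S} ≤ #S - 1 := by
  refine le_trans (card_le_card_of_injOn (fun i => s(x i, x (i + 1))) (fun i hi => ?_)
    hinj.injOn) (card_edgeFinset_inter_sym2_le S hS)
  simp only [coe_filter, Set.mem_ofPred_eq] at hi
  simpa [hadj i] using hi

end SimpleGraph

section Distances

variable {n : ℕ} [NeZero n] {σ : Type*} [DecidableEq σ]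

theorem hamDist_add_card_filter_eq (u v : ZMod n → σ) : hamDist u v + #{i | u i = v i} = n := by
  rw [hamDist, Set.ncard_eq_toFinset_card', add_comm]
  simpa using card_filter_add_card_filter_not (s := univ) (fun i => u i = v i)

theorem pairDist_add_card_filter_eq (u v : ZMod n → σ) :
    pairDist u v + #{i | u i = v i ∧ u (i + 1) = v (i + 1)} = n := by
  rw [pairDist, Set.ncard_eq_toFinset_card', add_comm]
  simpa using card_filter_add_card_filter_not (s := univ)
    (fun i => u i = v i ∧ u (i + 1) = v (i + 1))

end Distances

theorem exists_subsingleton_ncard_eq_pow {σ : Type*} (α : Type*) (hq : Nat.card σ ≤ 1) {k : ℕ}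
    (hk : k ≠ 0) : ∃ C : Set (α → σ), C.Subsingleton ∧ C.ncard = Nat.card σ ^ k := by
  interval_cases h : Nat.card σ
  · exact ⟨∅, by simp, by simp [hk]⟩
  · obtain ⟨s⟩ := (Nat.card_pos_iff.mp (h ▸ Nat.one_pos)).1
    exact ⟨{fun _ => s}, by simp, by simp⟩

/-- extending a classical MDS code along a closed eulerian trail of a
graph of order n, size m, and girth at least n-d+1 yields an MDS
(m, m-n+d+1)_q symbol-pair code. -/
theorem stmt_6 {σ : Type*} {n d q m : ℕ} (hcard : Nat.card σ = q) (hdn : d < n)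
    (C : Set (ZMod n → σ))
    (hdist : ∀ u ∈ C, ∀ v ∈ C, u ≠ v → d ≤ hamDist u v)
    (hsize : C.ncard = q ^ (n - d + 1))
    (G : SimpleGraph (ZMod n)) (hconn : G.Connected)
    (hm : G.edgeSet.ncard = m)
    (heven : ∀ x, Even ((G.neighborSet x).ncard))
    (hgirth : ((n - d + 1 : ℕ) : ℕ∞) ≤ G.egirth) :
    ∃ C' : Set (ZMod m → σ), C'.ncard = q ^ (n - d + 1) ∧
      ∀ u ∈ C', ∀ v ∈ C', u ≠ v → m - n + d + 1 ≤ pairDist u v := by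
  classical
  rcases le_or_gt q 1 with hq | hq
  · obtain ⟨C', hsub, hC'⟩ := exists_subsingleton_ncard_eq_pow (ZMod m) (hcard ▸ hq)
      (n - d).succ_ne_zero
    exact ⟨C', hcard ▸ hC', fun u hu v hv huv => (huv (hsub hu hv)).elim⟩
  have : NeZero n := ⟨by omega⟩
  have : Finite σ := Nat.finite_of_card_ne_zero (by omega)
  have hd : 1 ≤ d := by
    have := C.ncard_le_card
    rw [hsize, Nat.card_fun, hcard, Nat.card_zmod, Nat.pow_le_pow_iff_right hq] at this
    omega
  have : Fact (1 < n) := ⟨by omega⟩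
  have hE : #G.edgeFinset = m := by rw [← Set.ncard_coe_finset, SimpleGraph.coe_edgeFinset, hm]
  have : NeZero m := ⟨by
    have := hconn.card_vert_le_card_edgeSet_add_one
    rw [Nat.card_zmod, Nat.card_coe_set_eq, hm] at this
    omega⟩
  have hdeg (v : ZMod n) : Even (G.degree v) := by
    rw [← G.card_neighborSet_eq_degree, ← Nat.card_eq_fintype_card, Nat.card_coe_set_eq]
    exact heven v
  obtain ⟨x, hsurj, hadj, hinj⟩ := hconn.exists_zmod_eulerian_circuit hdeg hE
  have hnm : n ≤ m := by simpa using Fintype.card_le_of_surjective x hsurj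
  refine ⟨(· ∘ x) '' C, by rw [Set.ncard_image_of_injective _ hsurj.injective_comp_right, hsize],
    ?_⟩
  rintro _ ⟨u, hu, rfl⟩ _ ⟨w, hw, rfl⟩ hne
  have hdu := hdist u hu w hw (by rintro rfl; exact hne rfl)
  have hham := hamDist_add_card_filter_eq u w
  have hpair := pairDist_add_card_filter_eq (u ∘ x) (w ∘ x)
  have hforest := G.card_filter_mem_and_mem_succ_le hadj hinj {t | u t = w t}
    (lt_of_lt_of_le (by norm_cast; omega) hgirth)
  simp only [mem_filter, mem_univ, true_and, Function.comp_apply] at hforest hpair ⊢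
  omega
end

section
/- Let n ≥ 4 and q ≥ 2, and let G = (I_{n-2} | X) be the (n-2) × n matrix over Z_q whose left block is the identity and whose last two columns are (1,2,...,n-2)^T and (1,1,...,1)^T. Then the Z_q-linear code C = { uG : u ∈ (Z_q)^{n-2} } has size q^{n-2} and minimum pair-distance 4; i.e., C is an MDS (n,4)_q-symbol-pair code. -/
def enc (n q : ℕ) (u : Fin (n - 2) → ZMod q) : ZMod n → ZMod q := fun j : ZMod n =>
  if h : j.val < n - 2 then u ⟨j.val, h⟩
  else if j.val = n - 2 then ∑ i : Fin (n - 2), ((i : ℕ) + 1 : ZMod q) * u i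
  else ∑ i : Fin (n - 2), u i

lemma enc_sub (n q : ℕ) (u v : Fin (n - 2) → ZMod q) :
    enc n q (u - v) = enc n q u - enc n q v := by
  funext j
  simp only [enc, Pi.sub_apply]
  split_ifs with h1 h2
  · rfl
  · rw [← Finset.sum_sub_distrib]
    exact Finset.sum_congr rfl fun i _ => by ring
  · rw [← Finset.sum_sub_distrib]

lemma enc_apply_lt {n q : ℕ} (u : Fin (n - 2) → ZMod q) {k : ℕ} (hk : k < n - 2) :
    enc n q u (k : ZMod n) = u ⟨k, hk⟩ := by
  have hv : ((k : ZMod n)).val = k := ZMod.val_natCast_of_lt (by omega)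
  simp only [enc, hv]
  rw [dif_pos hk]

lemma enc_apply_c1 {n q : ℕ} (hn : 4 ≤ n) (u : Fin (n - 2) → ZMod q) :
    enc n q u ((n - 2 : ℕ) : ZMod n) = ∑ i : Fin (n - 2), ((i : ℕ) + 1 : ZMod q) * u i := by
  have hv : (((n - 2 : ℕ) : ZMod n)).val = n - 2 := ZMod.val_natCast_of_lt (by omega)
  simp only [enc, hv]
  rw [dif_neg (by omega)]
  simp

lemma enc_apply_c2 {n q : ℕ} (hn : 4 ≤ n) (u : Fin (n - 2) → ZMod q) :
    enc n q u ((n - 1 : ℕ) : ZMod n) = ∑ i : Fin (n - 2), u i := by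
  have hv : (((n - 1 : ℕ) : ZMod n)).val = n - 1 := ZMod.val_natCast_of_lt (by omega)
  simp only [enc, hv]
  rw [dif_neg (by omega), if_neg (by omega)]

lemma natCast_ne {n a b : ℕ} (ha : a < n) (hb : b < n) (h : a ≠ b) :
    (a : ZMod n) ≠ (b : ZMod n) := fun e =>
  h (by rw [← ZMod.val_natCast_of_lt ha, ← ZMod.val_natCast_of_lt hb, e])

lemma enc_injective {n q : ℕ} (hn : 4 ≤ n) : Function.Injective (enc n q) := by
  intro x y h
  funext i
  have := congrFun h ((i : ℕ) : ZMod n)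
  rwa [enc_apply_lt x i.isLt, enc_apply_lt y i.isLt] at this

lemma pairSupp_eq {n q : ℕ} (w : ZMod n → ZMod q) :
    {i : ZMod n | w i ≠ 0 ∨ w (i + 1) ≠ 0} =
      {i : ZMod n | w i ≠ 0} ∪ (fun z => z - 1) '' {i : ZMod n | w i ≠ 0} := by
  ext i
  simp only [Set.mem_setOf_eq, Set.mem_union, Set.mem_image]
  constructor
  · rintro (h | h)
    · exact Or.inl h
    · exact Or.inr ⟨i + 1, h, by ring⟩
  · rintro (h | ⟨s, hs, rfl⟩)
    · exact Or.inl h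
    · exact Or.inr (by rwa [sub_add_cancel])

lemma three_le_ncard {α : Type*} [Finite α] {S : Set α} {a b c : α}
    (ha : a ∈ S) (hb : b ∈ S) (hc : c ∈ S) (hab : a ≠ b) (hac : a ≠ c) (hbc : b ≠ c) :
    3 ≤ S.ncard := by
  have hsub : ({a, b, c} : Set α) ⊆ S := by
    intro x hx
    rcases hx with rfl | rfl | rfl <;> assumption
  have : ({a, b, c} : Set α).ncard = 3 := by
    rw [Set.ncard_insert_of_notMem (by simp [hab, hac]), Set.ncard_pair hbc]
  calc 3 = ({a, b, c} : Set α).ncard := this.symm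
    _ ≤ S.ncard := Set.ncard_le_ncard hsub (Set.toFinite S)

lemma four_le_of_three {n : ℕ} (hn : 4 ≤ n) (S : Set (ZMod n)) (hS : 3 ≤ S.ncard) :
    4 ≤ (S ∪ (fun z => z - 1) '' S).ncard := by
  haveI : NeZero n := ⟨by omega⟩
  by_cases hU : S = Set.univ
  · have h1 : (Set.univ : Set (ZMod n)).ncard = n := by
      rw [Set.ncard_univ, Nat.card_zmod]
    calc 4 ≤ n := hn
      _ = S.ncard := by rw [hU, h1]
      _ ≤ _ := Set.ncard_le_ncard Set.subset_union_left (Set.toFinite _)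
  · have hx : ∃ x ∈ (fun z => z - 1) '' S, x ∉ S := by
      by_contra h
      push_neg at h
      apply hU
      obtain ⟨s₀, hs₀⟩ : S.Nonempty := by
        rw [Set.nonempty_iff_ne_empty]
        intro he
        rw [he, Set.ncard_empty] at hS
        omega
      have step : ∀ s ∈ S, s - 1 ∈ S := fun s hs => h _ ⟨s, hs, rfl⟩
      have all : ∀ k : ℕ, s₀ - (k : ZMod n) ∈ S := by
        intro k
        induction k with
        | zero => simpa using hs₀
        | succ k ih =>
          have := step _ ih
          have he : s₀ - ((k + 1 : ℕ) : ZMod n) = s₀ - (k : ZMod n) - 1 := by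
            push_cast; ring
          rwa [he]
      ext t
      simp only [Set.mem_univ, iff_true]
      have ht : t = s₀ - (((s₀ - t).val : ℕ) : ZMod n) := by
        rw [ZMod.natCast_rightInverse (s₀ - t), sub_sub_cancel]
      rw [ht]
      exact all _
    obtain ⟨x, hx1, hx2⟩ := hx
    have hsub : insert x S ⊆ S ∪ (fun z => z - 1) '' S :=
      Set.insert_subset (Or.inr hx1) Set.subset_union_left
    calc 4 ≤ S.ncard + 1 := by omega
      _ = (insert x S).ncard := (Set.ncard_insert_of_notMem hx2 (Set.toFinite S)).symm
      _ ≤ _ := Set.ncard_le_ncard hsub (Set.toFinite _)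

lemma four_le_of_pair {n : ℕ} (hn : 2 ≤ n) (S : Set (ZMod n)) {s t : ZMod n}
    (hs : s ∈ S) (ht : t ∈ S) (h1 : s ≠ t) (h2 : s ≠ t + 1) (h3 : t ≠ s + 1) :
    4 ≤ (S ∪ (fun z => z - 1) '' S).ncard := by
  haveI : NeZero n := ⟨by omega⟩
  haveI : Fact (1 < n) := ⟨by omega⟩
  have hone : (1 : ZMod n) ≠ 0 := one_ne_zero
  set T := S ∪ (fun z => z - 1) '' S with hT
  have hsub : ({s - 1, s, t - 1, t} : Set (ZMod n)) ⊆ T := by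
    intro x hx
    rcases hx with rfl | rfl | rfl | rfl
    · exact Or.inr ⟨s, hs, rfl⟩
    · exact Or.inl hs
    · exact Or.inr ⟨t, ht, rfl⟩
    · exact Or.inl ht
  have d1 : s - 1 ≠ s := by
    intro h; apply hone
    have := sub_eq_self.mp h
    simpa using this
  have d2 : s - 1 ≠ t - 1 := fun h => h1 (by
    have := congrArg (· + 1) h
    simpa [sub_add_cancel] using this)
  have d3 : s - 1 ≠ t := fun h => h2 (by rw [← h]; rw [sub_add_cancel])
  have d4 : s ≠ t - 1 := fun h => h3 (by rw [h, sub_add_cancel])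
  have d5 : t - 1 ≠ t := by
    intro h; apply hone
    have := sub_eq_self.mp h
    simpa using this
  have hcard : ({s - 1, s, t - 1, t} : Set (ZMod n)).ncard = 4 := by
    rw [Set.ncard_insert_of_notMem (by simp [d1, d2, d3]),
      Set.ncard_insert_of_notMem (by simp [h1, d4]), Set.ncard_pair d5]
  calc 4 = ({s - 1, s, t - 1, t} : Set (ZMod n)).ncard := hcard.symm
    _ ≤ T.ncard := Set.ncard_le_ncard hsub (Set.toFinite T)

lemma core {n q : ℕ} (hn : 4 ≤ n) (x : Fin (n - 2) → ZMod q) (hx : x ≠ 0) :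
    4 ≤ {i : ZMod n | enc n q x i ≠ 0 ∨ enc n q x (i + 1) ≠ 0}.ncard := by
  classical
  haveI : NeZero n := ⟨by omega⟩
  rw [pairSupp_eq]
  set S : Set (ZMod n) := {i | enc n q x i ≠ 0} with hSdef
  have hmem_lt : ∀ (k : ℕ) (hk : k < n - 2), x ⟨k, hk⟩ ≠ 0 → ((k : ZMod n) ∈ S) := by
    intro k hk h
    simpa [hSdef, Set.mem_setOf_eq, enc_apply_lt x hk] using h
  have hmem_c1 : (∑ i : Fin (n - 2), ((i : ℕ) + 1 : ZMod q) * x i) ≠ 0 →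
      ((n - 2 : ℕ) : ZMod n) ∈ S := by
    intro h
    simpa [hSdef, Set.mem_setOf_eq, enc_apply_c1 hn x] using h
  have hmem_c2 : (∑ i : Fin (n - 2), x i) ≠ 0 → ((n - 1 : ℕ) : ZMod n) ∈ S := by
    intro h
    simpa [hSdef, Set.mem_setOf_eq, enc_apply_c2 hn x] using h
  set Xs : Finset (Fin (n - 2)) := Finset.univ.filter (fun i => x i ≠ 0) with hXs
  have hmemXs : ∀ i, i ∈ Xs ↔ x i ≠ 0 := by intro i; simp [hXs]
  have hne : Xs.Nonempty := by
    obtain ⟨i, hi⟩ := Function.ne_iff.mp hx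
    exact ⟨i, (hmemXs i).mpr (by simpa using hi)⟩
  rcases Nat.lt_or_ge Xs.card 2 with hcard | hcard
  · -- exactly one nonzero message coordinate
    have h1 : Xs.card = 1 := by
      have := Finset.card_pos.mpr hne; omega
    obtain ⟨i₀, hi₀⟩ := Finset.card_eq_one.mp h1
    have hx₀ : x i₀ ≠ 0 := (hmemXs i₀).mp (hi₀ ▸ Finset.mem_singleton_self i₀)
    have hzero : ∀ i, i ≠ i₀ → x i = 0 := by
      intro i hi
      by_contra h
      have hm : i ∈ Xs := (hmemXs i).mpr h
      rw [hi₀, Finset.mem_singleton] at hm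
      exact hi hm
    have hc2 : (∑ i : Fin (n - 2), x i) = x i₀ :=
      Finset.sum_eq_single i₀ (fun b _ hb => hzero b hb)
        (fun h => absurd (Finset.mem_univ i₀) h)
    have hc1 : (∑ i : Fin (n - 2), ((i : ℕ) + 1 : ZMod q) * x i)
        = ((i₀ : ℕ) + 1 : ZMod q) * x i₀ :=
      Finset.sum_eq_single i₀ (fun b _ hb => by rw [hzero b hb, mul_zero])
        (fun h => absurd (Finset.mem_univ i₀) h)
    have hi₀lt : (i₀ : ℕ) < n - 2 := i₀.isLt
    have hSi : (((i₀ : ℕ) : ZMod n)) ∈ S := hmem_lt _ i₀.isLt (by rwa [Fin.eta])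
    have hSc2 : ((n - 1 : ℕ) : ZMod n) ∈ S := hmem_c2 (by rw [hc2]; exact hx₀)
    by_cases hC1 : (∑ i : Fin (n - 2), ((i : ℕ) + 1 : ZMod q) * x i) = 0
    · have hi0 : (i₀ : ℕ) ≠ 0 := by
        intro h0
        rw [hc1, h0] at hC1
        simp at hC1
        exact hx₀ hC1
      apply four_le_of_pair (by omega) S hSi hSc2
      · exact natCast_ne (by omega) (by omega) (by omega)
      · have hzadd : ((n - 1 : ℕ) : ZMod n) + 1 = 0 := by
          rw [show ((n - 1 : ℕ) : ZMod n) + 1 = ((n - 1 + 1 : ℕ) : ZMod n) by push_cast; ring,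
            show n - 1 + 1 = n by omega, ZMod.natCast_self]
        rw [hzadd, show (0 : ZMod n) = ((0 : ℕ) : ZMod n) by norm_num]
        exact natCast_ne (by omega) (by omega) hi0
      · rw [show (((i₀ : ℕ) : ZMod n)) + 1 = (((i₀ : ℕ) + 1 : ℕ) : ZMod n) by push_cast; ring]
        exact natCast_ne (by omega) (by omega) (by omega)
    · have hSc1 : ((n - 2 : ℕ) : ZMod n) ∈ S := hmem_c1 hC1
      exact four_le_of_three hn S (three_le_ncard hSi hSc1 hSc2
        (natCast_ne (by omega) (by omega) (by omega))
        (natCast_ne (by omega) (by omega) (by omega))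
        (natCast_ne (by omega) (by omega) (by omega)))
  · -- at least two nonzero message coordinates
    set i₀ : Fin (n - 2) := Xs.min' hne with hi₀def
    set j₀ : Fin (n - 2) := Xs.max' hne with hj₀def
    have hlt : i₀ < j₀ := Finset.min'_lt_max'_of_card Xs hcard
    have hltv : (i₀ : ℕ) < (j₀ : ℕ) := hlt
    have hxi : x i₀ ≠ 0 := (hmemXs i₀).mp (Finset.min'_mem Xs hne)
    have hxj : x j₀ ≠ 0 := (hmemXs j₀).mp (Finset.max'_mem Xs hne)
    have hSi : (((i₀ : ℕ) : ZMod n)) ∈ S := hmem_lt _ i₀.isLt (by rwa [Fin.eta])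
    have hSj : (((j₀ : ℕ) : ZMod n)) ∈ S := hmem_lt _ j₀.isLt (by rwa [Fin.eta])
    have hi₀lt : (i₀ : ℕ) < n - 2 := i₀.isLt
    have hj₀lt : (j₀ : ℕ) < n - 2 := j₀.isLt
    by_cases hadj : (j₀ : ℕ) = (i₀ : ℕ) + 1
    · -- adjacent: the two parity checks cannot both vanish
      have hsub2 : ∀ i ∈ Xs, i = i₀ ∨ i = j₀ := by
        intro i hi
        have h1 := Finset.min'_le Xs i hi
        have h2 := Finset.le_max' Xs i hi
        have h1' : (i₀ : ℕ) ≤ (i : ℕ) := h1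
        have h2' : (i : ℕ) ≤ (j₀ : ℕ) := h2
        rcases Nat.eq_or_lt_of_le h1' with he | hlt2
        · exact Or.inl (Fin.ext he.symm)
        · exact Or.inr (Fin.ext (by omega))
      have hzero : ∀ i, i ≠ i₀ → i ≠ j₀ → x i = 0 := by
        intro i hi hj
        by_contra h
        rcases hsub2 i ((hmemXs i).mpr h) with rfl | rfl
        · exact hi rfl
        · exact hj rfl
      have e1 : (∑ i : Fin (n - 2), x i) = x i₀ + x j₀ := by
        rw [← Finset.sum_subset (Finset.subset_univ ({i₀, j₀} : Finset (Fin (n - 2))))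
          (fun y _ hy => by
            simp only [Finset.mem_insert, Finset.mem_singleton, not_or] at hy
            exact hzero y hy.1 hy.2),
          Finset.sum_pair hlt.ne]
      have e2 : (∑ i : Fin (n - 2), ((i : ℕ) + 1 : ZMod q) * x i)
          = ((i₀ : ℕ) + 1 : ZMod q) * x i₀ + ((j₀ : ℕ) + 1 : ZMod q) * x j₀ := by
        rw [← Finset.sum_subset (Finset.subset_univ ({i₀, j₀} : Finset (Fin (n - 2))))
          (fun y _ hy => by
            simp only [Finset.mem_insert, Finset.mem_singleton, not_or] at hy
            rw [hzero y hy.1 hy.2, mul_zero]),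
          Finset.sum_pair hlt.ne]
      by_cases hc2 : x i₀ + x j₀ = 0
      · have hC1 : (∑ i : Fin (n - 2), ((i : ℕ) + 1 : ZMod q) * x i) = x j₀ := by
          rw [e2, show (((j₀ : ℕ) : ZMod q)) = ((i₀ : ℕ) : ZMod q) + 1 by
            rw [hadj]; push_cast; ring]
          linear_combination (((i₀ : ℕ) : ZMod q) + 1) * hc2
        have hSc1 : ((n - 2 : ℕ) : ZMod n) ∈ S := hmem_c1 (by rw [hC1]; exact hxj)
        exact four_le_of_three hn S (three_le_ncard hSi hSj hSc1
          (natCast_ne (by omega) (by omega) (by omega))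
          (natCast_ne (by omega) (by omega) (by omega))
          (natCast_ne (by omega) (by omega) (by omega)))
      · have hSc2 : ((n - 1 : ℕ) : ZMod n) ∈ S := hmem_c2 (by rw [e1]; exact hc2)
        exact four_le_of_three hn S (three_le_ncard hSi hSj hSc2
          (natCast_ne (by omega) (by omega) (by omega))
          (natCast_ne (by omega) (by omega) (by omega))
          (natCast_ne (by omega) (by omega) (by omega)))
    · -- non-adjacent support positions
      apply four_le_of_pair (by omega) S hSi hSj
      · exact natCast_ne (by omega) (by omega) (by omega)
      · rw [show (((j₀ : ℕ) : ZMod n)) + 1 = (((j₀ : ℕ) + 1 : ℕ) : ZMod n) by push_cast; ring]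
        exact natCast_ne (by omega) (by omega) (by omega)
      · rw [show (((i₀ : ℕ) : ZMod n)) + 1 = (((i₀ : ℕ) + 1 : ℕ) : ZMod n) by push_cast; ring]
        exact natCast_ne (by omega) (by omega) (by omega)

lemma enc_zero (n q : ℕ) : enc n q 0 = 0 := by
  funext j
  simp only [enc, Pi.zero_apply]
  split_ifs <;> simp

lemma achieve {n q : ℕ} (hn : 4 ≤ n) (hq : 2 ≤ q) :
    ∃ x : Fin (n - 2) → ZMod q, enc n q x ≠ enc n q 0 ∧
      {i : ZMod n | enc n q x i ≠ 0 ∨ enc n q x (i + 1) ≠ 0}.ncard = 4 := by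
  classical
  haveI : NeZero n := ⟨by omega⟩
  haveI : Fact (1 < q) := ⟨by omega⟩
  have hone : (1 : ZMod q) ≠ 0 := one_ne_zero
  set e₀ : Fin (n - 2) → ZMod q := fun i => if (i : ℕ) = 0 then 1 else 0 with he₀
  have hc1 : (∑ i : Fin (n - 2), ((i : ℕ) + 1 : ZMod q) * e₀ i) = 1 := by
    rw [Finset.sum_eq_single (⟨0, by omega⟩ : Fin (n - 2))]
    · simp [he₀]
    · intro b _ hb
      have hb0 : (b : ℕ) ≠ 0 := fun h => hb (Fin.ext h)
      simp [he₀, hb0]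
    · intro h; exact absurd (Finset.mem_univ _) h
  have hc2 : (∑ i : Fin (n - 2), e₀ i) = 1 := by
    rw [Finset.sum_eq_single (⟨0, by omega⟩ : Fin (n - 2))]
    · simp [he₀]
    · intro b _ hb
      have hb0 : (b : ℕ) ≠ 0 := fun h => hb (Fin.ext h)
      simp [he₀, hb0]
    · intro h; exact absurd (Finset.mem_univ _) h
  have hchar : ∀ j : ZMod n, enc n q e₀ j ≠ 0 ↔
      (j.val = 0 ∨ j.val = n - 2 ∨ j.val = n - 1) := by
    intro j
    have hjlt : j.val < n := ZMod.val_lt j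
    simp only [enc]
    split_ifs with h1 h2
    · constructor
      · intro hv0
        left
        by_contra h0
        simp [he₀, if_neg h0] at hv0
      · intro hdisj
        have h0 : j.val = 0 := by
          rcases hdisj with h | h | h
          · exact h
          · omega
          · omega
        simp [he₀, h0, hone]
    · rw [hc1]
      constructor
      · intro _; exact Or.inr (Or.inl h2)
      · intro _; exact hone
    · rw [hc2]
      constructor
      · intro _; exact Or.inr (Or.inr (by omega))
      · intro _; exact hone
  have hA : ((n - 3 : ℕ) : ZMod n) + 1 = ((n - 2 : ℕ) : ZMod n) := by
    rw [show ((n - 3 : ℕ) : ZMod n) + 1 = ((n - 3 + 1 : ℕ) : ZMod n) by push_cast; ring,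
      show n - 3 + 1 = n - 2 by omega]
  have hB : ((n - 2 : ℕ) : ZMod n) + 1 = ((n - 1 : ℕ) : ZMod n) := by
    rw [show ((n - 2 : ℕ) : ZMod n) + 1 = ((n - 2 + 1 : ℕ) : ZMod n) by push_cast; ring,
      show n - 2 + 1 = n - 1 by omega]
  have hCc : ((n - 1 : ℕ) : ZMod n) + 1 = 0 := by
    rw [show ((n - 1 : ℕ) : ZMod n) + 1 = ((n - 1 + 1 : ℕ) : ZMod n) by push_cast; ring,
      show n - 1 + 1 = n by omega, ZMod.natCast_self]
  have hval : ∀ j : ZMod n, ((j.val : ℕ) : ZMod n) = j := fun j => ZMod.natCast_rightInverse j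
  refine ⟨e₀, ?_, ?_⟩
  · intro h
    have h0 : enc n q e₀ 0 ≠ 0 := (hchar 0).mpr (Or.inl ZMod.val_zero)
    apply h0
    rw [h, enc_zero]
    rfl
  · have hTeq : {i : ZMod n | enc n q e₀ i ≠ 0 ∨ enc n q e₀ (i + 1) ≠ 0} =
        {(0 : ZMod n), ((n - 3 : ℕ) : ZMod n), ((n - 2 : ℕ) : ZMod n), ((n - 1 : ℕ) : ZMod n)} := by
      ext i
      simp only [Set.mem_setOf_eq, Set.mem_insert_iff, Set.mem_singleton_iff]
      constructor
      · rintro (h | h)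
        · rcases (hchar i).mp h with h0 | h0 | h0
          · exact Or.inl (by rw [← hval i, h0]; norm_num)
          · exact Or.inr (Or.inr (Or.inl (by rw [← hval i, h0])))
          · exact Or.inr (Or.inr (Or.inr (by rw [← hval i, h0])))
        · rcases (hchar (i + 1)).mp h with h0 | h0 | h0
          · refine Or.inr (Or.inr (Or.inr ?_))
            have : i + 1 = ((n - 1 : ℕ) : ZMod n) + 1 := by
              rw [hCc, ← hval (i + 1), h0]; norm_num
            exact add_right_cancel this
          · refine Or.inr (Or.inl ?_)
            have : i + 1 = ((n - 3 : ℕ) : ZMod n) + 1 := by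
              rw [hA, ← hval (i + 1), h0]
            exact add_right_cancel this
          · refine Or.inr (Or.inr (Or.inl ?_))
            have : i + 1 = ((n - 2 : ℕ) : ZMod n) + 1 := by
              rw [hB, ← hval (i + 1), h0]
            exact add_right_cancel this
      · rintro (rfl | rfl | rfl | rfl)
        · exact Or.inl ((hchar 0).mpr (Or.inl ZMod.val_zero))
        · refine Or.inr ?_
          rw [hA]
          exact (hchar _).mpr (Or.inr (Or.inl (ZMod.val_natCast_of_lt (by omega))))
        · exact Or.inl ((hchar _).mpr (Or.inr (Or.inl (ZMod.val_natCast_of_lt (by omega)))))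
        · exact Or.inl ((hchar _).mpr (Or.inr (Or.inr (ZMod.val_natCast_of_lt (by omega)))))
    rw [hTeq]
    have z0 : (0 : ZMod n) = ((0 : ℕ) : ZMod n) := by norm_num
    rw [Set.ncard_insert_of_notMem (by
        simp only [Set.mem_insert_iff, Set.mem_singleton_iff, not_or]
        refine ⟨?_, ?_, ?_⟩ <;> (rw [z0]; exact natCast_ne (by omega) (by omega) (by omega))),
      Set.ncard_insert_of_notMem (by
        simp only [Set.mem_insert_iff, Set.mem_singleton_iff, not_or]
        exact ⟨natCast_ne (by omega) (by omega) (by omega),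
          natCast_ne (by omega) (by omega) (by omega)⟩),
      Set.ncard_pair (natCast_ne (by omega) (by omega) (by omega))]

/-- the Z_q-linear code generated by (I_{n-2} | X), where the last
two columns are (1,2,…,n-2)ᵀ and (1,1,…,1)ᵀ, is an MDS (n,4)_q symbol-pair code. -/
theorem stmt_13 (n q : ℕ) (hn : 4 ≤ n) (hq : 2 ≤ q)
    (C : Set (ZMod n → ZMod q))
    (hC : C = {w | ∃ u : Fin (n - 2) → ZMod q,
      w = fun j : ZMod n =>
        if h : j.val < n - 2 then u ⟨j.val, h⟩
        else if j.val = n - 2 then ∑ i : Fin (n - 2), ((i : ℕ) + 1 : ZMod q) * u i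
        else ∑ i : Fin (n - 2), u i}) :
    C.ncard = q ^ (n - 2) ∧
      IsLeast {e | ∃ u ∈ C, ∃ v ∈ C, u ≠ v ∧ pairDist u v = e} 4 := by
  haveI : NeZero n := ⟨by omega⟩
  haveI : NeZero q := ⟨by omega⟩
  have hCr : C = Set.range (enc n q) := by
    rw [hC]; ext w
    constructor
    · rintro ⟨u, rfl⟩; exact ⟨u, rfl⟩
    · rintro ⟨u, rfl⟩; exact ⟨u, rfl⟩
  have hdist : ∀ xu xv : Fin (n - 2) → ZMod q,
      pairDist (enc n q xu) (enc n q xv)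
        = {i : ZMod n | enc n q (xu - xv) i ≠ 0 ∨ enc n q (xu - xv) (i + 1) ≠ 0}.ncard := by
    intro xu xv
    unfold pairDist
    congr 1
    ext i
    rw [enc_sub]
    simp only [Pi.sub_apply, ne_eq, Prod.mk.injEq, not_and_or, sub_eq_zero]
  refine ⟨?_, ?_, ?_⟩
  · rw [hCr, ← Nat.card_coe_set_eq, Nat.card_range_of_injective (enc_injective hn),
      Nat.card_fun, Nat.card_zmod, Nat.card_eq_fintype_card, Fintype.card_fin]
  · obtain ⟨x, hxne, hx4⟩ := achieve (q := q) hn hq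
    refine ⟨enc n q x, by rw [hCr]; exact ⟨x, rfl⟩, enc n q 0,
      by rw [hCr]; exact ⟨0, rfl⟩, hxne, ?_⟩
    rw [hdist x 0, sub_zero]
    exact hx4
  · rintro e ⟨u, hu, v, hv, hne, rfl⟩
    rw [hCr] at hu hv
    obtain ⟨xu, rfl⟩ := hu
    obtain ⟨xv, rfl⟩ := hv
    have hxy : xu - xv ≠ 0 := sub_ne_zero.mpr (fun h => hne (by rw [h]))
    rw [hdist]
    exact core hn (xu - xv) hxy
end

section
/- Let n ≥ 2 and q ≥ 2. If n is even, let C = { (a,b,a,b,...,a,b) : a, b ∈ Z_q } ⊆ (Z_q)^n; if n is odd, let C = { (a,b,a,b,...,a,b,a+b) : a, b ∈ Z_q } ⊆ (Z_q)^n (codewords alternate a, b in the first n-1 coordinates with last coordinate a+b). Then C has size q² and minimum pair-distance n; i.e., C is an MDS (n,n)_q-symbol-pair code. -/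
/-- The alternating codeword. -/
def altW (n q : ℕ) (a b : ZMod q) : ZMod n → ZMod q := fun i =>
  if n % 2 = 1 ∧ i.val = n - 1 then a + b
  else if i.val % 2 = 0 then a else b

lemma alt_pair {n q : ℕ} (hn : 2 ≤ n) {a b a' b' : ZMod q} (i : ZMod n)
    (h1 : altW n q a b i = altW n q a' b' i)
    (h2 : altW n q a b (i + 1) = altW n q a' b' (i + 1)) : a = a' ∧ b = b' := by
  haveI : NeZero n := ⟨by omega⟩
  haveI : Fact (1 < n) := ⟨by omega⟩
  have hone : (1 : ZMod n).val = 1 := ZMod.val_one n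
  have hv : (i + 1).val = (i.val + 1) % n := by rw [ZMod.val_add, hone]
  have hjn : i.val < n := i.val_lt
  unfold altW at h1 h2
  rw [hv] at h2
  by_cases hpar : n % 2 = 1
  · rcases eq_or_ne i.val (n - 1) with hj1 | hj1
    · have e0 : (i.val + 1) % n = 0 := by
        rw [hj1, show n - 1 + 1 = n by omega, Nat.mod_self]
      rw [e0] at h2
      rw [if_pos ⟨hpar, hj1⟩, if_pos ⟨hpar, hj1⟩] at h1
      have hA : ¬(n % 2 = 1 ∧ 0 = n - 1) := by omega
      rw [if_neg hA, if_neg hA, if_pos (by omega : 0 % 2 = 0),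
        if_pos (by omega : 0 % 2 = 0)] at h2
      refine ⟨h2, ?_⟩
      rw [h2] at h1
      exact add_left_cancel h1
    · rcases eq_or_ne i.val (n - 2) with hj2 | hj2
      · have e0 : (i.val + 1) % n = n - 1 := by
          rw [Nat.mod_eq_of_lt (by omega)]; omega
        rw [e0] at h2
        rw [if_pos ⟨hpar, rfl⟩, if_pos ⟨hpar, rfl⟩] at h2
        have hA : ¬(n % 2 = 1 ∧ i.val = n - 1) := by omega
        have hB : ¬i.val % 2 = 0 := by omega
        rw [if_neg hA, if_neg hA, if_neg hB, if_neg hB] at h1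
        refine ⟨?_, h1⟩
        rw [h1] at h2
        exact add_right_cancel h2
      · have e0 : (i.val + 1) % n = i.val + 1 := Nat.mod_eq_of_lt (by omega)
        rw [e0] at h2
        have hA : ¬(n % 2 = 1 ∧ i.val = n - 1) := by omega
        have hB : ¬(n % 2 = 1 ∧ i.val + 1 = n - 1) := by omega
        rw [if_neg hA, if_neg hA] at h1
        rw [if_neg hB, if_neg hB] at h2
        by_cases hp : i.val % 2 = 0
        · rw [if_pos hp, if_pos hp] at h1
          have hp2 : ¬(i.val + 1) % 2 = 0 := by omega
          rw [if_neg hp2, if_neg hp2] at h2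
          exact ⟨h1, h2⟩
        · rw [if_neg hp, if_neg hp] at h1
          have hp2 : (i.val + 1) % 2 = 0 := by omega
          rw [if_pos hp2, if_pos hp2] at h2
          exact ⟨h2, h1⟩
  · have hA : ¬(n % 2 = 1 ∧ i.val = n - 1) := by omega
    have hB : ¬(n % 2 = 1 ∧ (i.val + 1) % n = n - 1) := by omega
    rw [if_neg hA, if_neg hA] at h1
    rw [if_neg hB, if_neg hB] at h2
    have hdvd : 2 ∣ n := by omega
    have hp : (i.val + 1) % n % 2 = (i.val + 1) % 2 := Nat.mod_mod_of_dvd _ hdvd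
    by_cases hpe : i.val % 2 = 0
    · rw [if_pos hpe, if_pos hpe] at h1
      have hp2 : ¬(i.val + 1) % n % 2 = 0 := by omega
      rw [if_neg hp2, if_neg hp2] at h2
      exact ⟨h1, h2⟩
    · rw [if_neg hpe, if_neg hpe] at h1
      have hp2 : (i.val + 1) % n % 2 = 0 := by omega
      rw [if_pos hp2, if_pos hp2] at h2
      exact ⟨h2, h1⟩

lemma alt_pairDist {n q : ℕ} (hn : 2 ≤ n) {a b a' b' : ZMod q}
    (h : ¬(a = a' ∧ b = b')) :
    pairDist (altW n q a b) (altW n q a' b') = n := by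
  haveI : NeZero n := ⟨by omega⟩
  have hset : {i : ZMod n | (altW n q a b i, altW n q a b (i + 1)) ≠
      (altW n q a' b' i, altW n q a' b' (i + 1))} = Set.univ := by
    ext i
    simp only [Set.mem_setOf_eq, Set.mem_univ, iff_true]
    intro heq
    exact h (alt_pair hn i (congrArg Prod.fst heq) (congrArg Prod.snd heq))
  unfold pairDist
  rw [hset, Set.ncard_univ, Nat.card_eq_fintype_card, ZMod.card]

/-- the alternating code (a,b,a,b,…) (with last coordinate a+b
when n is odd) is an MDS (n,n)_q symbol-pair code. -/
theorem stmt_14 (n q : ℕ) (hn : 2 ≤ n) (hq : 2 ≤ q)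
    (C : Set (ZMod n → ZMod q))
    (hC : C = {w | ∃ a b : ZMod q, w = fun i : ZMod n =>
        if n % 2 = 1 ∧ i.val = n - 1 then a + b
        else if i.val % 2 = 0 then a else b}) :
    C.ncard = q ^ 2 ∧
      IsLeast {e | ∃ u ∈ C, ∃ v ∈ C, u ≠ v ∧ pairDist u v = e} n := by
  haveI : NeZero n := ⟨by omega⟩
  haveI : Fact (1 < q) := ⟨by omega⟩
  have hC' : C = Set.range (fun p : ZMod q × ZMod q => altW n q p.1 p.2) := by
    rw [hC]; ext w
    constructor
    · rintro ⟨a, b, rfl⟩; exact ⟨(a, b), rfl⟩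
    · rintro ⟨⟨a, b⟩, rfl⟩; exact ⟨a, b, rfl⟩
  have finj : Function.Injective (fun p : ZMod q × ZMod q => altW n q p.1 p.2) := by
    intro p p' hpp
    obtain ⟨ha, hb⟩ := alt_pair hn 0 (congrFun hpp 0) (congrFun hpp (0 + 1))
    exact Prod.ext ha hb
  refine ⟨?_, ?_, ?_⟩
  · rw [hC', ← Nat.card_coe_set_eq, Nat.card_range_of_injective finj,
      Nat.card_prod, Nat.card_zmod]
    ring
  · refine ⟨altW n q 0 0, ?_, altW n q 0 1, ?_, ?_, ?_⟩
    · rw [hC]; exact ⟨0, 0, rfl⟩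
    · rw [hC]; exact ⟨0, 1, rfl⟩
    · intro h
      exact zero_ne_one (alt_pair hn 0 (congrFun h 0) (congrFun h (0 + 1))).2
    · exact alt_pairDist hn (fun h => zero_ne_one h.2)
  · rintro e ⟨u, hu, v, hv, hne, rfl⟩
    rw [hC] at hu hv
    obtain ⟨a, b, rfl⟩ := hu
    obtain ⟨a', b', rfl⟩ := hv
    have hne' : ¬(a = a' ∧ b = b') := by rintro ⟨rfl, rfl⟩; exact hne rfl
    exact le_of_eq (alt_pairDist hn hne').symm
end

section
/- Let q be an odd prime and 5 ≤ n ≤ 2q + 3. Let G = (I_{n-3} | X) be the (n-3) × n matrix over Z_q whose left block is the identity and whose last three columns are (1,2,...,n-3)^T, (1,1,...,1)^T, and (1,-1,1,...,(-1)^{n-4})^T. Then the Z_q-linear code C = { uG : u ∈ (Z_q)^{n-3} } has size q^{n-3} and minimum pair-distance 5; i.e., C is an MDS (n,5)_q-symbol-pair code. -/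
open Finset

namespace Stmt15Aux

variable {q n : ℕ}

/-- The encoding map of the code. -/
def Wc (q n : ℕ) (u : Fin (n - 3) → ZMod q) : ZMod n → ZMod q := fun j : ZMod n =>
  if h : j.val < n - 3 then u ⟨j.val, h⟩
  else if j.val = n - 3 then ∑ i : Fin (n - 3), ((i : ℕ) + 1 : ZMod q) * u i
  else if j.val = n - 2 then ∑ i : Fin (n - 3), u i
  else ∑ i : Fin (n - 3), (-1 : ZMod q) ^ (i : ℕ) * u i


lemma nz (hn5 : 5 ≤ n) : NeZero n := ⟨by omega⟩

lemma val_pos (hn5 : 5 ≤ n) (k : ℕ) (hk : k < n) : ((k : ZMod n)).val = k := by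
  haveI := nz hn5; exact ZMod.val_cast_of_lt hk

lemma pos_inj (hn5 : 5 ≤ n) {k l : ℕ} (hk : k < n) (hl : l < n)
    (h : (k : ZMod n) = (l : ZMod n)) : k = l := by
  have := val_pos hn5 k hk
  have := val_pos hn5 l hl
  rw [← this, ← h, val_pos hn5 k hk]

lemma Wc_apply_lt (hn5 : 5 ≤ n) (u : Fin (n-3) → ZMod q) (k : ℕ) (hk : k < n - 3) :
    Wc q n u (k : ZMod n) = u ⟨k, hk⟩ := by
  have hv : ((k : ZMod n)).val = k := val_pos hn5 k (by omega)
  simp only [Wc, hv]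
  rw [dif_pos hk]

lemma Wc_apply_A (hn5 : 5 ≤ n) (u : Fin (n-3) → ZMod q) :
    Wc q n u ((n - 3 : ℕ) : ZMod n) = ∑ i : Fin (n - 3), ((i : ℕ) + 1 : ZMod q) * u i := by
  have hv : (((n-3 : ℕ) : ZMod n)).val = n - 3 := val_pos hn5 _ (by omega)
  simp only [Wc, hv]
  rw [dif_neg (by omega), if_pos trivial]

lemma Wc_apply_B (hn5 : 5 ≤ n) (u : Fin (n-3) → ZMod q) :
    Wc q n u ((n - 2 : ℕ) : ZMod n) = ∑ i : Fin (n - 3), u i := by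
  have hv : (((n-2 : ℕ) : ZMod n)).val = n - 2 := val_pos hn5 _ (by omega)
  simp only [Wc, hv]
  rw [dif_neg (by omega), if_neg (by omega), if_pos trivial]

lemma Wc_apply_C (hn5 : 5 ≤ n) (u : Fin (n-3) → ZMod q) :
    Wc q n u ((n - 1 : ℕ) : ZMod n) = ∑ i : Fin (n - 3), (-1 : ZMod q) ^ (i : ℕ) * u i := by
  have hv : (((n-1 : ℕ) : ZMod n)).val = n - 1 := val_pos hn5 _ (by omega)
  simp only [Wc, hv]
  rw [dif_neg (by omega), if_neg (by omega), if_neg (by omega)]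


lemma sum_supp1 {M : Type*} [AddCommMonoid M] {k : ℕ} (f : Fin k → M) (i0 : Fin k)
    (hz : ∀ i, i ≠ i0 → f i = 0) : ∑ i, f i = f i0 :=
  Finset.sum_eq_single i0 (fun b _ hb => hz b hb) (fun h => absurd (mem_univ i0) h)

lemma sum_supp2 {M : Type*} [AddCommMonoid M] {k : ℕ} (f : Fin k → M) (i0 i1 : Fin k)
    (h01 : i0 ≠ i1) (hz : ∀ i, i ≠ i0 → i ≠ i1 → f i = 0) : ∑ i, f i = f i0 + f i1 := by
  rw [← Finset.sum_pair h01]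
  exact (Finset.sum_subset (subset_univ _) (fun x _ hx => by
    simp only [mem_insert, mem_singleton] at hx; push_neg at hx; exact hz x hx.1 hx.2)).symm

lemma sum_supp3 {M : Type*} [AddCommMonoid M] {k : ℕ} (f : Fin k → M) (i0 i1 i2 : Fin k)
    (h01 : i0 ≠ i1) (h02 : i0 ≠ i2) (h12 : i1 ≠ i2)
    (hz : ∀ i, i ≠ i0 → i ≠ i1 → i ≠ i2 → f i = 0) : ∑ i, f i = f i0 + f i1 + f i2 := by
  have : ∑ i ∈ ({i0, i1, i2} : Finset (Fin k)), f i = ∑ i, f i :=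
    Finset.sum_subset (subset_univ _) (fun x _ hx => by
      simp only [mem_insert, mem_singleton] at hx; push_neg at hx; exact hz x hx.1 hx.2.1 hx.2.2)
  rw [← this]
  rw [Finset.sum_insert (by simp [h01, h02]), Finset.sum_pair h12, add_assoc]

lemma sum_supp0 {M : Type*} [AddCommMonoid M] {k : ℕ} (f : Fin k → M)
    (hz : ∀ i, f i = 0) : ∑ i, f i = 0 := Finset.sum_eq_zero (fun i _ => hz i)


lemma two_ne_zero' (hq : q.Prime) (hodd : Odd q) : (2 : ZMod q) ≠ 0 := by
  haveI : NeZero q := ⟨hq.ne_zero⟩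
  have h2 : ((2:ℕ) : ZMod q) ≠ 0 := by
    rw [Ne, ZMod.natCast_eq_zero_iff]
    intro hdvd
    rcases (Nat.prime_two.eq_one_or_self_of_dvd q hdvd) with h | h
    · exact hq.ne_one h
    · rw [h] at hodd; simp [Nat.odd_iff] at hodd
  simpa using h2

lemma four_ne_zero' (hq : q.Prime) (hodd : Odd q) : (4 : ZMod q) ≠ 0 := by
  haveI : NeZero q := ⟨hq.ne_zero⟩
  have h2 : ((4:ℕ) : ZMod q) ≠ 0 := by
    rw [Ne, ZMod.natCast_eq_zero_iff]
    intro hdvd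
    have : q ∣ 2 := hq.dvd_of_dvd_pow (n := 2) (show q ∣ 2 ^ 2 by norm_num at hdvd ⊢; exact hdvd)
    rcases (Nat.prime_two.eq_one_or_self_of_dvd q this) with h | h
    · exact hq.ne_one h
    · rw [h] at hodd; simp [Nat.odd_iff] at hodd
  simpa using h2

lemma neg_pow_ne_zero (hq : q.Prime) (k : ℕ) : ((-1 : ZMod q)) ^ k ≠ 0 := by
  haveI : Fact q.Prime := ⟨hq⟩
  exact pow_ne_zero _ (neg_ne_zero.mpr one_ne_zero)

lemma natlem (q i0 i1 : ℕ) (hodd : Odd q) (h : i0 % q = i1 % q) (hlt : i0 < i1)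
    (hb : i1 < 2 * q) (hpar : i0 % 2 = i1 % 2) : False := by
  have hq1 : 1 ≤ q := by rcases hodd with ⟨k, hk⟩; omega
  have hdvd : q ∣ i1 - i0 := (Nat.modEq_iff_dvd' hlt.le).mp h
  obtain ⟨c, hc⟩ := hdvd
  have hc2 : c < 2 := by
    by_contra hge
    push_neg at hge
    have : 2 * q ≤ q * c := by calc 2 * q = q * 2 := by ring
      _ ≤ q * c := Nat.mul_le_mul_left q hge
    omega
  interval_cases c
  · omega
  · rcases hodd with ⟨k, hk⟩; omega


lemma pos_ne (hn5 : 5 ≤ n) {k l : ℕ} (hk : k < n) (hl : l < n) (hne : k ≠ l) :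
    (k : ZMod n) ≠ (l : ZMod n) := fun h => hne (pos_inj hn5 hk hl h)

lemma lemA (hq : q.Prime) (hodd : Odd q) (hn5 : 5 ≤ n) (hn : n ≤ 2 * q + 3)
    (u : Fin (n - 3) → ZMod q) (a b : ZMod n)
    (hsupp : ∀ j, j ≠ a → j ≠ b → Wc q n u j = 0) : u = 0 := by
  haveI : Fact q.Prime := ⟨hq⟩
  have h2 := two_ne_zero' hq hodd
  by_contra hu
  obtain ⟨i0, hi0⟩ : ∃ i, u i ≠ 0 := by
    by_contra h; push_neg at h; exact hu (funext fun i => h i)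
  have hlt0 : ((i0:ℕ)) < n := by have := i0.isLt; omega
  have h0ab : ((i0:ℕ) : ZMod n) = a ∨ ((i0:ℕ) : ZMod n) = b := by
    by_cases ha : ((i0:ℕ) : ZMod n) = a
    · exact Or.inl ha
    by_cases hb : ((i0:ℕ) : ZMod n) = b
    · exact Or.inr hb
    · have := hsupp _ ha hb
      rw [Wc_apply_lt hn5 u (i0:ℕ) i0.isLt, Fin.eta] at this
      exact absurd this hi0
  by_cases hex : ∀ i1, i1 ≠ i0 → u i1 = 0
  · -- single support
    have hpB0 : ((n-2:ℕ) : ZMod n) ≠ ((i0:ℕ) : ZMod n) :=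
      pos_ne hn5 (by omega) hlt0 (by have := i0.isLt; omega)
    have hpC0 : ((n-1:ℕ) : ZMod n) ≠ ((i0:ℕ) : ZMod n) :=
      pos_ne hn5 (by omega) hlt0 (by have := i0.isLt; omega)
    have hpBC : ((n-2:ℕ) : ZMod n) ≠ ((n-1:ℕ) : ZMod n) :=
      pos_ne hn5 (by omega) (by omega) (by omega)
    have hBC : Wc q n u ((n-2:ℕ) : ZMod n) = 0 ∨ Wc q n u ((n-1:ℕ) : ZMod n) = 0 := by
      by_contra hcon; push_neg at hcon
      obtain ⟨hB, hC⟩ := hcon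
      have hBab : ((n-2:ℕ) : ZMod n) = a ∨ ((n-2:ℕ) : ZMod n) = b := by
        by_cases ha : ((n-2:ℕ) : ZMod n) = a
        · exact Or.inl ha
        by_cases hb : ((n-2:ℕ) : ZMod n) = b
        · exact Or.inr hb
        · exact absurd (hsupp _ ha hb) hB
      have hCab : ((n-1:ℕ) : ZMod n) = a ∨ ((n-1:ℕ) : ZMod n) = b := by
        by_cases ha : ((n-1:ℕ) : ZMod n) = a
        · exact Or.inl ha
        by_cases hb : ((n-1:ℕ) : ZMod n) = b
        · exact Or.inr hb
        · exact absurd (hsupp _ ha hb) hC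
      rcases h0ab with rfl | rfl <;> rcases hBab with h' | h' <;> rcases hCab with h'' | h'' <;>
        first
          | exact hpB0 h'
          | exact hpC0 h''
          | exact hpBC (h'.trans h''.symm)
    rcases hBC with hB0 | hC0
    · rw [Wc_apply_B hn5 u, sum_supp1 u i0 hex] at hB0
      exact hi0 hB0
    · rw [Wc_apply_C hn5 u,
        sum_supp1 _ i0 (fun i h => by rw [hex i h, mul_zero])] at hC0
      exact hi0 ((mul_eq_zero.mp hC0).resolve_left (neg_pow_ne_zero hq _))
  · -- two nonzero entries
    push_neg at hex
    obtain ⟨i1, hne10, hi1⟩ := hex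
    have hlt1 : ((i1:ℕ)) < n := by have := i1.isLt; omega
    have hvne : (i1:ℕ) ≠ (i0:ℕ) := fun h => hne10 (Fin.ext h)
    have h1ab : ((i1:ℕ) : ZMod n) = a ∨ ((i1:ℕ) : ZMod n) = b := by
      by_cases ha : ((i1:ℕ) : ZMod n) = a
      · exact Or.inl ha
      by_cases hb : ((i1:ℕ) : ZMod n) = b
      · exact Or.inr hb
      · have := hsupp _ ha hb
        rw [Wc_apply_lt hn5 u (i1:ℕ) i1.isLt, Fin.eta] at this
        exact absurd this hi1
    have hpne : ((i0:ℕ) : ZMod n) ≠ ((i1:ℕ) : ZMod n) :=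
      pos_ne hn5 hlt0 hlt1 (Ne.symm hvne)
    have key : ∀ j, j ≠ ((i0:ℕ) : ZMod n) → j ≠ ((i1:ℕ) : ZMod n) → Wc q n u j = 0 := by
      intro j hj0 hj1
      rcases h0ab with h0 | h0 <;> rcases h1ab with h1 | h1
      · exact absurd (h0.trans h1.symm) hpne
      · exact hsupp j (by rw [← h0]; exact hj0) (by rw [← h1]; exact hj1)
      · exact hsupp j (by rw [← h1]; exact hj1) (by rw [← h0]; exact hj0)
      · exact absurd (h0.trans h1.symm) hpne
    have hz : ∀ i, i ≠ i0 → i ≠ i1 → u i = 0 := by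
      intro i hI0 hI1
      have hilt : ((i:ℕ)) < n := by have := i.isLt; omega
      have := key ((i:ℕ) : ZMod n)
        (pos_ne hn5 hilt hlt0 (fun h => hI0 (Fin.ext h)))
        (pos_ne hn5 hilt hlt1 (fun h => hI1 (Fin.ext h)))
      rwa [Wc_apply_lt hn5 u (i:ℕ) i.isLt, Fin.eta] at this
    have hne01 : i0 ≠ i1 := Ne.symm hne10
    have eqA : ((i0:ℕ) + 1 : ZMod q) * u i0 + ((i1:ℕ) + 1 : ZMod q) * u i1 = 0 := by
      have h := key ((n-3:ℕ) : ZMod n)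
        (pos_ne hn5 (by omega) hlt0 (by have := i0.isLt; omega))
        (pos_ne hn5 (by omega) hlt1 (by have := i1.isLt; omega))
      rw [Wc_apply_A hn5 u,
        sum_supp2 _ i0 i1 hne01 (fun i hI0 hI1 => by rw [hz i hI0 hI1, mul_zero])] at h
      exact h
    have eqB : u i0 + u i1 = 0 := by
      have h := key ((n-2:ℕ) : ZMod n)
        (pos_ne hn5 (by omega) hlt0 (by have := i0.isLt; omega))
        (pos_ne hn5 (by omega) hlt1 (by have := i1.isLt; omega))
      rw [Wc_apply_B hn5 u, sum_supp2 u i0 i1 hne01 hz] at h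
      exact h
    have eqC : (-1 : ZMod q) ^ (i0:ℕ) * u i0 + (-1 : ZMod q) ^ (i1:ℕ) * u i1 = 0 := by
      have h := key ((n-1:ℕ) : ZMod n)
        (pos_ne hn5 (by omega) hlt0 (by have := i0.isLt; omega))
        (pos_ne hn5 (by omega) hlt1 (by have := i1.isLt; omega))
      rw [Wc_apply_C hn5 u,
        sum_supp2 _ i0 i1 hne01 (fun i hI0 hI1 => by rw [hz i hI0 hI1, mul_zero])] at h
      exact h
    have sameparity : ((i0:ℕ)) % 2 = ((i1:ℕ)) % 2 → False := by
      intro hpar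
      have hmul : (((i0:ℕ) : ZMod q) - ((i1:ℕ) : ZMod q)) * u i0 = 0 := by
        linear_combination eqA - (((i1:ℕ) : ZMod q) + 1) * eqB
      have hcast : ((i0:ℕ) : ZMod q) = ((i1:ℕ) : ZMod q) :=
        sub_eq_zero.mp ((mul_eq_zero.mp hmul).resolve_right hi0)
      haveI : NeZero q := ⟨hq.ne_zero⟩
      have hmod : (i0:ℕ) % q = (i1:ℕ) % q := (ZMod.natCast_eq_natCast_iff _ _ _).mp hcast
      rcases Nat.lt_or_ge (i0:ℕ) (i1:ℕ) with hlt | hge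
      · exact natlem q _ _ hodd hmod hlt (by have := i1.isLt; omega) hpar
      · have hlt' : (i1:ℕ) < (i0:ℕ) := lt_of_le_of_ne hge hvne
        exact natlem q _ _ hodd hmod.symm hlt' (by have := i0.isLt; omega) hpar.symm
    rcases Nat.even_or_odd (i0:ℕ) with hp0 | hp0 <;> rcases Nat.even_or_odd (i1:ℕ) with hp1 | hp1
    · exact sameparity (by rw [Nat.even_iff] at hp0 hp1; omega)
    · rw [Even.neg_one_pow hp0, Odd.neg_one_pow hp1] at eqC
      have h20 : (2 : ZMod q) * u i0 = 0 := by linear_combination eqB + eqC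
      exact hi0 ((mul_eq_zero.mp h20).resolve_left h2)
    · rw [Odd.neg_one_pow hp0, Even.neg_one_pow hp1] at eqC
      have h20 : (2 : ZMod q) * u i0 = 0 := by linear_combination eqB - eqC
      exact hi0 ((mul_eq_zero.mp h20).resolve_left h2)
    · exact sameparity (by rw [Nat.odd_iff] at hp0 hp1; omega)

lemma lemB (hq : q.Prime) (hodd : Odd q) (hn5 : 5 ≤ n)
    (u : Fin (n - 3) → ZMod q) (t : ZMod n)
    (hsupp : ∀ j, j ≠ t → j ≠ t + 1 → j ≠ t + 2 → Wc q n u j = 0)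
    (h0 : Wc q n u t ≠ 0) (h1 : Wc q n u (t + 1) ≠ 0) (h2 : Wc q n u (t + 2) ≠ 0) :
    False := by
  haveI : Fact q.Prime := ⟨hq⟩
  haveI := nz hn5
  have h2q := two_ne_zero' hq hodd
  set τ := t.val with hτdef
  have ht : ((τ : ℕ) : ZMod n) = t := ZMod.natCast_rightInverse t
  have hτn : τ < n := ZMod.val_lt t
  have ht1 : ((τ + 1 : ℕ) : ZMod n) = t + 1 := by push_cast [ht]; ring
  have ht2 : ((τ + 2 : ℕ) : ZMod n) = t + 2 := by push_cast [ht]; ring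
  have hcases : τ + 2 < n - 3 ∨ τ + 2 = n - 3 ∨ τ + 1 = n - 3 ∨ τ = n - 3 ∨
      τ = n - 2 ∨ τ = n - 1 := by omega
  rcases hcases with hc | hc | hc | hc | hc | hc
  · -- window inside the identity part
    have hτ0 : τ < n - 3 := by omega
    have hτ1 : τ + 1 < n - 3 := by omega
    have hτ2 : τ + 2 < n - 3 := by omega
    have hz : ∀ i : Fin (n - 3), i ≠ ⟨τ, hτ0⟩ → i ≠ ⟨τ + 1, hτ1⟩ → i ≠ ⟨τ + 2, hτ2⟩ →
        u i = 0 := by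
      intro i hI0 hI1 hI2
      have hilt : (i : ℕ) < n := by have := i.isLt; omega
      have h := hsupp ((i : ℕ) : ZMod n)
        (by rw [← ht]; exact pos_ne hn5 hilt (by omega) (fun h => hI0 (Fin.ext h)))
        (by rw [← ht1]; exact pos_ne hn5 hilt (by omega) (fun h => hI1 (Fin.ext h)))
        (by rw [← ht2]; exact pos_ne hn5 hilt (by omega) (fun h => hI2 (Fin.ext h)))
      rwa [Wc_apply_lt hn5 u (i : ℕ) i.isLt, Fin.eta] at h
    have hne01 : (⟨τ, hτ0⟩ : Fin (n - 3)) ≠ ⟨τ + 1, hτ1⟩ := Fin.ne_of_val_ne (by simp only [Fin.val_mk]; omega)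
    have hne02 : (⟨τ, hτ0⟩ : Fin (n - 3)) ≠ ⟨τ + 2, hτ2⟩ := Fin.ne_of_val_ne (by simp only [Fin.val_mk]; omega)
    have hne12 : (⟨τ + 1, hτ1⟩ : Fin (n - 3)) ≠ ⟨τ + 2, hτ2⟩ := Fin.ne_of_val_ne (by simp only [Fin.val_mk]; omega)
    have eqB : u ⟨τ, hτ0⟩ + u ⟨τ + 1, hτ1⟩ + u ⟨τ + 2, hτ2⟩ = 0 := by
      have h := hsupp ((n - 2 : ℕ) : ZMod n)
        (by rw [← ht]; exact pos_ne hn5 (by omega) (by omega) (by omega))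
        (by rw [← ht1]; exact pos_ne hn5 (by omega) (by omega) (by omega))
        (by rw [← ht2]; exact pos_ne hn5 (by omega) (by omega) (by omega))
      rwa [Wc_apply_B hn5 u, sum_supp3 u _ _ _ hne01 hne02 hne12 hz] at h
    have eqC : (-1 : ZMod q) ^ τ * u ⟨τ, hτ0⟩ + (-1 : ZMod q) ^ (τ + 1) * u ⟨τ + 1, hτ1⟩ +
        (-1 : ZMod q) ^ (τ + 2) * u ⟨τ + 2, hτ2⟩ = 0 := by
      have h := hsupp ((n - 1 : ℕ) : ZMod n)
        (by rw [← ht]; exact pos_ne hn5 (by omega) (by omega) (by omega))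
        (by rw [← ht1]; exact pos_ne hn5 (by omega) (by omega) (by omega))
        (by rw [← ht2]; exact pos_ne hn5 (by omega) (by omega) (by omega))
      rwa [Wc_apply_C hn5 u,
        sum_supp3 _ _ _ _ hne01 hne02 hne12 (fun i a b c => by rw [hz i a b c, mul_zero]),
        Fin.val_mk, Fin.val_mk, Fin.val_mk] at h
    have e1 : (-1 : ZMod q) ^ (τ + 1) = (-1 : ZMod q) ^ τ * (-1) := pow_succ _ _
    have e2 : (-1 : ZMod q) ^ (τ + 2) = (-1 : ZMod q) ^ τ := by
      rw [pow_succ, pow_succ]; ring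
    rw [e1, e2] at eqC
    have hkey : (-1 : ZMod q) ^ τ * ((2 : ZMod q) * u ⟨τ + 1, hτ1⟩) = 0 := by
      linear_combination ((-1 : ZMod q) ^ τ) * eqB - eqC
    have hx1 : u ⟨τ + 1, hτ1⟩ = 0 := by
      have := (mul_eq_zero.mp hkey).resolve_left (neg_pow_ne_zero hq τ)
      exact (mul_eq_zero.mp this).resolve_left h2q
    rw [← ht1, Wc_apply_lt hn5 u (τ + 1) hτ1] at h1
    exact h1 hx1
  · -- window = {n-5, n-4, n-3}
    have hτ0 : τ < n - 3 := by omega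
    have hτ1 : τ + 1 < n - 3 := by omega
    have hz : ∀ i : Fin (n - 3), i ≠ ⟨τ, hτ0⟩ → i ≠ ⟨τ + 1, hτ1⟩ → u i = 0 := by
      intro i hI0 hI1
      have hilt : (i : ℕ) < n := by have := i.isLt; omega
      have h := hsupp ((i : ℕ) : ZMod n)
        (by rw [← ht]; exact pos_ne hn5 hilt (by omega) (fun h => hI0 (Fin.ext h)))
        (by rw [← ht1]; exact pos_ne hn5 hilt (by omega) (fun h => hI1 (Fin.ext h)))
        (by rw [← ht2]; exact pos_ne hn5 hilt (by omega) (by have := i.isLt; omega))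
      rwa [Wc_apply_lt hn5 u (i : ℕ) i.isLt, Fin.eta] at h
    have hne01 : (⟨τ, hτ0⟩ : Fin (n - 3)) ≠ ⟨τ + 1, hτ1⟩ := Fin.ne_of_val_ne (by simp only [Fin.val_mk]; omega)
    have eqB : u ⟨τ, hτ0⟩ + u ⟨τ + 1, hτ1⟩ = 0 := by
      have h := hsupp ((n - 2 : ℕ) : ZMod n)
        (by rw [← ht]; exact pos_ne hn5 (by omega) (by omega) (by omega))
        (by rw [← ht1]; exact pos_ne hn5 (by omega) (by omega) (by omega))
        (by rw [← ht2]; exact pos_ne hn5 (by omega) (by omega) (by omega))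
      rwa [Wc_apply_B hn5 u, sum_supp2 u _ _ hne01 hz] at h
    have eqC : (-1 : ZMod q) ^ τ * u ⟨τ, hτ0⟩ + (-1 : ZMod q) ^ (τ + 1) * u ⟨τ + 1, hτ1⟩ = 0 := by
      have h := hsupp ((n - 1 : ℕ) : ZMod n)
        (by rw [← ht]; exact pos_ne hn5 (by omega) (by omega) (by omega))
        (by rw [← ht1]; exact pos_ne hn5 (by omega) (by omega) (by omega))
        (by rw [← ht2]; exact pos_ne hn5 (by omega) (by omega) (by omega))
      rwa [Wc_apply_C hn5 u,
        sum_supp2 _ _ _ hne01 (fun i a b => by rw [hz i a b, mul_zero]),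
        Fin.val_mk, Fin.val_mk] at h
    have e1 : (-1 : ZMod q) ^ (τ + 1) = (-1 : ZMod q) ^ τ * (-1) := pow_succ _ _
    rw [e1] at eqC
    have hkey : (-1 : ZMod q) ^ τ * ((2 : ZMod q) * u ⟨τ + 1, hτ1⟩) = 0 := by
      linear_combination ((-1 : ZMod q) ^ τ) * eqB - eqC
    have hx1 : u ⟨τ + 1, hτ1⟩ = 0 := by
      have := (mul_eq_zero.mp hkey).resolve_left (neg_pow_ne_zero hq τ)
      exact (mul_eq_zero.mp this).resolve_left h2q
    rw [← ht1, Wc_apply_lt hn5 u (τ + 1) hτ1] at h1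
    exact h1 hx1
  · -- window = {n-4, n-3, n-2}
    have hτ0 : τ < n - 3 := by omega
    have hz : ∀ i : Fin (n - 3), i ≠ ⟨τ, hτ0⟩ → u i = 0 := by
      intro i hI0
      have hilt : (i : ℕ) < n := by have := i.isLt; omega
      have h := hsupp ((i : ℕ) : ZMod n)
        (by rw [← ht]; exact pos_ne hn5 hilt (by omega) (fun h => hI0 (Fin.ext h)))
        (by rw [← ht1]; exact pos_ne hn5 hilt (by omega) (by have := i.isLt; omega))
        (by rw [← ht2]; exact pos_ne hn5 hilt (by omega) (by have := i.isLt; omega))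
      rwa [Wc_apply_lt hn5 u (i : ℕ) i.isLt, Fin.eta] at h
    have eqC : (-1 : ZMod q) ^ τ * u ⟨τ, hτ0⟩ = 0 := by
      have h := hsupp ((n - 1 : ℕ) : ZMod n)
        (by rw [← ht]; exact pos_ne hn5 (by omega) (by omega) (by omega))
        (by rw [← ht1]; exact pos_ne hn5 (by omega) (by omega) (by omega))
        (by rw [← ht2]; exact pos_ne hn5 (by omega) (by omega) (by omega))
      rwa [Wc_apply_C hn5 u,
        sum_supp1 _ _ (fun i a => by rw [hz i a, mul_zero]), Fin.val_mk] at h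
    have hx0 : u ⟨τ, hτ0⟩ = 0 :=
      (mul_eq_zero.mp eqC).resolve_left (neg_pow_ne_zero hq τ)
    rw [← ht, Wc_apply_lt hn5 u τ hτ0] at h0
    exact h0 hx0
  · -- window = {n-3, n-2, n-1}
    have hz : ∀ i : Fin (n - 3), u i = 0 := by
      intro i
      have hilt : (i : ℕ) < n := by have := i.isLt; omega
      have h := hsupp ((i : ℕ) : ZMod n)
        (by rw [← ht]; exact pos_ne hn5 hilt (by omega) (by have := i.isLt; omega))
        (by rw [← ht1]; exact pos_ne hn5 hilt (by omega) (by have := i.isLt; omega))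
        (by rw [← ht2]; exact pos_ne hn5 hilt (by omega) (by have := i.isLt; omega))
      rwa [Wc_apply_lt hn5 u (i : ℕ) i.isLt, Fin.eta] at h
    have hA : Wc q n u t = 0 := by
      rw [← ht, show ((τ : ℕ) : ZMod n) = ((n - 3 : ℕ) : ZMod n) by rw [hc],
        Wc_apply_A hn5 u]
      exact sum_supp0 _ (fun i => by rw [hz i, mul_zero])
    exact h0 hA
  · -- window = {n-2, n-1, 0}
    have h03 : (0 : ℕ) < n - 3 := by omega
    have ht2' : t + 2 = ((0 : ℕ) : ZMod n) := by
      have hcast : ((τ + 2 : ℕ) : ZMod n) = (τ : ZMod n) + 2 := by push_cast; ring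
      rw [← ht2, show τ + 2 = n by omega, ZMod.natCast_self, Nat.cast_zero]
    have hz : ∀ i : Fin (n - 3), i ≠ ⟨0, h03⟩ → u i = 0 := by
      intro i hI0
      have hilt : (i : ℕ) < n := by have := i.isLt; omega
      have h := hsupp ((i : ℕ) : ZMod n)
        (by rw [← ht]; exact pos_ne hn5 hilt (by omega) (by have := i.isLt; omega))
        (by rw [← ht1]; exact pos_ne hn5 hilt (by omega) (by have := i.isLt; omega))
        (by rw [ht2']; exact pos_ne hn5 hilt (by omega) (fun h => hI0 (Fin.ext h)))
      rwa [Wc_apply_lt hn5 u (i : ℕ) i.isLt, Fin.eta] at h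
    have eqA : ((0 : ℕ) + 1 : ZMod q) * u ⟨0, h03⟩ = 0 := by
      have h := hsupp ((n - 3 : ℕ) : ZMod n)
        (by rw [← ht]; exact pos_ne hn5 (by omega) (by omega) (by omega))
        (by rw [← ht1]; exact pos_ne hn5 (by omega) (by omega) (by omega))
        (by rw [ht2']; exact pos_ne hn5 (by omega) (by omega) (by omega))
      rwa [Wc_apply_A hn5 u,
        sum_supp1 _ _ (fun i a => by rw [hz i a, mul_zero]), Fin.val_mk] at h
    have hx0 : u ⟨0, h03⟩ = 0 := by
      have h' : u ⟨0, h03⟩ = ((0 : ℕ) + 1 : ZMod q) * u ⟨0, h03⟩ := by push_cast; ring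
      rw [h', eqA]
    rw [ht2', Wc_apply_lt hn5 u 0 h03] at h2
    exact h2 hx0
  · -- window = {n-1, 0, 1}
    have h03 : (0 : ℕ) < n - 3 := by omega
    have h13 : (1 : ℕ) < n - 3 := by omega
    have ht1' : t + 1 = ((0 : ℕ) : ZMod n) := by
      rw [← ht1, show τ + 1 = n by omega, ZMod.natCast_self, Nat.cast_zero]
    have ht2' : t + 2 = ((1 : ℕ) : ZMod n) := by
      rw [← ht2, show τ + 2 = n + 1 by omega]
      push_cast [ZMod.natCast_self]
      ring
    have hne01 : (⟨0, h03⟩ : Fin (n - 3)) ≠ ⟨1, h13⟩ := Fin.ne_of_val_ne (by simp only [Fin.val_mk]; omega)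
    have hz : ∀ i : Fin (n - 3), i ≠ ⟨0, h03⟩ → i ≠ ⟨1, h13⟩ → u i = 0 := by
      intro i hI0 hI1
      have hilt : (i : ℕ) < n := by have := i.isLt; omega
      have h := hsupp ((i : ℕ) : ZMod n)
        (by rw [← ht]; exact pos_ne hn5 hilt (by omega) (by have := i.isLt; omega))
        (by rw [ht1']; exact pos_ne hn5 hilt (by omega) (fun h => hI0 (Fin.ext h)))
        (by rw [ht2']; exact pos_ne hn5 hilt (by omega) (fun h => hI1 (Fin.ext h)))
      rwa [Wc_apply_lt hn5 u (i : ℕ) i.isLt, Fin.eta] at h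
    have eqA : ((0 : ℕ) + 1 : ZMod q) * u ⟨0, h03⟩ + ((1 : ℕ) + 1 : ZMod q) * u ⟨1, h13⟩ = 0 := by
      have h := hsupp ((n - 3 : ℕ) : ZMod n)
        (by rw [← ht]; exact pos_ne hn5 (by omega) (by omega) (by omega))
        (by rw [ht1']; exact pos_ne hn5 (by omega) (by omega) (by omega))
        (by rw [ht2']; exact pos_ne hn5 (by omega) (by omega) (by omega))
      rwa [Wc_apply_A hn5 u,
        sum_supp2 _ _ _ hne01 (fun i a b => by rw [hz i a b, mul_zero]),
        Fin.val_mk, Fin.val_mk] at h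
    have eqB : u ⟨0, h03⟩ + u ⟨1, h13⟩ = 0 := by
      have h := hsupp ((n - 2 : ℕ) : ZMod n)
        (by rw [← ht]; exact pos_ne hn5 (by omega) (by omega) (by omega))
        (by rw [ht1']; exact pos_ne hn5 (by omega) (by omega) (by omega))
        (by rw [ht2']; exact pos_ne hn5 (by omega) (by omega) (by omega))
      rwa [Wc_apply_B hn5 u, sum_supp2 u _ _ hne01 hz] at h
    have hx1 : u ⟨1, h13⟩ = 0 := by
      have := eqA
      push_cast at this
      linear_combination this - eqB
    rw [ht2', Wc_apply_lt hn5 u 1 h13] at h2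
    exact h2 hx1

lemma one_ne_zero'' (hn5 : 5 ≤ n) : (1 : ZMod n) ≠ 0 := by
  have := pos_ne hn5 (show 1 < n by omega) (show 0 < n by omega) (by omega)
  simpa using this

lemma two_ne_zero'' (hn5 : 5 ≤ n) : (2 : ZMod n) ≠ 0 := by
  have := pos_ne hn5 (show 2 < n by omega) (show 0 < n by omega) (by omega)
  simpa using this

lemma sub_one_ne (hn5 : 5 ≤ n) (x : ZMod n) : x - 1 ≠ x :=
  fun h => one_ne_zero'' hn5 (by linear_combination x - h)

lemma tripleH (hn5 : 5 ≤ n) {a b c : ZMod n} (hab : a ≠ b) (hac : a ≠ c) (hbc : b ≠ c)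
    (hb : b - 1 = a ∨ b - 1 = c) (hc : c - 1 = a ∨ c - 1 = b) :
    ∃ t : ZMod n, ({a, b, c} : Finset (ZMod n)) = {t, t + 1, t + 2} := by
  rcases hb with hb | hb <;> rcases hc with hc | hc
  · exact absurd (show b = c by linear_combination hb - hc) hbc
  · refine ⟨a, ?_⟩
    have hb' : b = a + 1 := by linear_combination hb
    have hc' : c = a + 2 := by linear_combination hc + hb
    rw [hb', hc']
  · refine ⟨a, ?_⟩
    have hc' : c = a + 1 := by linear_combination hc
    have hb' : b = a + 2 := by linear_combination hb + hc
    rw [hb', hc']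
    ext x
    simp only [Finset.mem_insert, Finset.mem_singleton]
    tauto
  · exact absurd (show (2 : ZMod n) = 0 by linear_combination - hb - hc)
      (two_ne_zero'' hn5)

set_option maxHeartbeats 1000000 in
lemma comb [NeZero n] (hn5 : 5 ≤ n) (w : ZMod n → ZMod q) (hw : ∃ j, w j ≠ 0)
    (hP : ((Finset.univ.filter (fun i : ZMod n => w i ≠ 0 ∨ w (i + 1) ≠ 0))).card ≤ 4) :
    (∃ a b : ZMod n, ∀ j, j ≠ a → j ≠ b → w j = 0) ∨
    (∃ t : ZMod n, (∀ j, j ≠ t → j ≠ t + 1 → j ≠ t + 2 → w j = 0) ∧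
      w t ≠ 0 ∧ w (t + 1) ≠ 0 ∧ w (t + 2) ≠ 0) := by
  set S : Finset (ZMod n) := Finset.univ.filter (fun j => w j ≠ 0) with hSdef
  set P : Finset (ZMod n) := Finset.univ.filter (fun i : ZMod n => w i ≠ 0 ∨ w (i + 1) ≠ 0)
    with hPdef
  have hmemS : ∀ x : ZMod n, x ∈ S ↔ w x ≠ 0 := by intro x; simp [hSdef]
  have hmemP : ∀ x : ZMod n, x ∈ P ↔ (w x ≠ 0 ∨ w (x + 1) ≠ 0) := by intro x; simp [hPdef]
  have hSP : S ⊆ P := by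
    intro x hx; rw [hmemP]; exact Or.inl ((hmemS x).mp hx)
  have hshift : ∀ x, x ∈ S → x - 1 ∈ P := by
    intro x hx; rw [hmemP]; right; rw [sub_add_cancel]; exact (hmemS x).mp hx
  have hRx : ∃ x, x ∈ S ∧ x - 1 ∉ S := by
    by_contra hcon
    push_neg at hcon
    obtain ⟨j0, hj0⟩ := hw
    have hj0S : j0 ∈ S := (hmemS j0).mpr hj0
    have hall : ∀ k : ℕ, j0 - (k : ZMod n) ∈ S := by
      intro k
      induction k with
      | zero => simpa using hj0S
      | succ k ih =>
        have h := hcon _ ih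
        rwa [show j0 - ((k : ℕ) : ZMod n) - 1 = j0 - (((k + 1 : ℕ)) : ZMod n) by
          push_cast; ring] at h
    have huniv : S = Finset.univ := by
      apply Finset.eq_univ_iff_forall.mpr
      intro y
      have h := hall ((j0 - y).val)
      rwa [ZMod.natCast_rightInverse (j0 - y), sub_sub_cancel] at h
    have h5 : 5 ≤ S.card := by rw [huniv, Finset.card_univ, ZMod.card]; omega
    have := Finset.card_le_card hSP
    omega
  have hcardS : S.card + 1 ≤ P.card := by
    obtain ⟨x, hxS, hx1⟩ := hRx
    have hins : insert (x - 1) S ⊆ P := by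
      intro y hy
      rcases Finset.mem_insert.mp hy with rfl | hy
      · exact hshift x hxS
      · exact hSP hy
    calc S.card + 1 = (insert (x - 1) S).card := (Finset.card_insert_of_notMem hx1).symm
      _ ≤ P.card := Finset.card_le_card hins
  have hS3 : S.card ≤ 3 := by omega
  rcases Nat.lt_or_ge S.card 3 with hlt | hge
  · -- support in at most two points
    left
    have hex : ∃ a b : ZMod n, S ⊆ {a, b} := by
      by_cases h0 : S.card = 0
      · exact ⟨0, 0, by rw [Finset.card_eq_zero.mp h0]; intro x hx; simp at hx⟩
      by_cases h1 : S.card = 1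
      · obtain ⟨a, ha⟩ := Finset.card_eq_one.mp h1
        refine ⟨a, a, by rw [ha]; intro x hx; simp at hx; simp [hx]⟩
      · have h2 : S.card = 2 := by omega
        obtain ⟨a, b, hab', hS⟩ := Finset.card_eq_two.mp h2
        exact ⟨a, b, by rw [hS]⟩
    obtain ⟨a, b, hab⟩ := hex
    refine ⟨a, b, fun j hja hjb => ?_⟩
    by_contra hwj
    have hjS : j ∈ S := (hmemS j).mpr hwj
    have := hab hjS
    simp only [Finset.mem_insert, Finset.mem_singleton] at this
    tauto
  · -- exactly three points, must be consecutive
    right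
    have h3 : S.card = 3 := by omega
    obtain ⟨a, b, c, hab, hac, hbc, hSeq⟩ := Finset.card_eq_three.mp h3
    have haS : a ∈ S := by rw [hSeq]; simp
    have hbS : b ∈ S := by rw [hSeq]; simp
    have hcS : c ∈ S := by rw [hSeq]; simp
    have hpair : ∀ x y : ZMod n, x ∈ S → y ∈ S → x ≠ y → (x - 1 ∈ S ∨ y - 1 ∈ S) := by
      intro x y hx hy hxy
      by_contra hcon
      push_neg at hcon
      obtain ⟨hx1, hy1⟩ := hcon
      have hxy1 : x - 1 ≠ y - 1 := fun h => hxy (by linear_combination h)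
      have hins : insert (x - 1) (insert (y - 1) S) ⊆ P := by
        intro z hz
        rcases Finset.mem_insert.mp hz with rfl | hz
        · exact hshift x hx
        rcases Finset.mem_insert.mp hz with rfl | hz
        · exact hshift y hy
        · exact hSP hz
      have hc1 : (insert (x - 1) (insert (y - 1) S)).card = S.card + 2 := by
        rw [Finset.card_insert_of_notMem (by simp [hxy1, hx1]),
          Finset.card_insert_of_notMem hy1]
      have := Finset.card_le_card hins
      omega
    have conv : ∀ x y z : ZMod n, x - 1 ∈ S → S = {y, x, z} → (x - 1 = y ∨ x - 1 = z) := by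
      intro x y z hx hS
      rw [hS] at hx
      simp only [Finset.mem_insert, Finset.mem_singleton] at hx
      rcases hx with h | h | h
      · exact Or.inl h
      · exact absurd h (sub_one_ne hn5 x)
      · exact Or.inr h
    have main : ∃ t : ZMod n, S = {t, t + 1, t + 2} := by
      by_cases pb : b - 1 ∈ S <;> by_cases pc : c - 1 ∈ S
      · obtain ⟨t, ht⟩ := tripleH hn5 hab hac hbc
          (conv b a c pb hSeq)
          (conv c a b pc (by rw [hSeq]; ext x; simp only [Finset.mem_insert,
            Finset.mem_singleton]; tauto))
        exact ⟨t, by rw [hSeq, ht]⟩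
      · have pa : a - 1 ∈ S := (hpair a c haS hcS hac).resolve_right pc
        obtain ⟨t, ht⟩ := tripleH hn5 (Ne.symm hac) (Ne.symm hbc) hab
          (conv a c b pa (by rw [hSeq]; ext x; simp only [Finset.mem_insert,
            Finset.mem_singleton]; tauto))
          (conv b c a pb (by rw [hSeq]; ext x; simp only [Finset.mem_insert,
            Finset.mem_singleton]; tauto))
        refine ⟨t, ?_⟩
        rw [hSeq, show ({a, b, c} : Finset (ZMod n)) = {c, a, b} by
          ext x; simp only [Finset.mem_insert, Finset.mem_singleton]; tauto, ht]
      · have pa : a - 1 ∈ S := (hpair a b haS hbS hab).resolve_right pb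
        obtain ⟨t, ht⟩ := tripleH hn5 (Ne.symm hab) hbc hac
          (conv a b c pa (by rw [hSeq]; ext x; simp only [Finset.mem_insert,
            Finset.mem_singleton]; tauto))
          (conv c b a pc (by rw [hSeq]; ext x; simp only [Finset.mem_insert,
            Finset.mem_singleton]; tauto))
        refine ⟨t, ?_⟩
        rw [hSeq, show ({a, b, c} : Finset (ZMod n)) = {b, a, c} by
          ext x; simp only [Finset.mem_insert, Finset.mem_singleton]; tauto, ht]
      · exact absurd ((hpair b c hbS hcS hbc).resolve_left pb) pc
    obtain ⟨t, ht⟩ := main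
    have htS : t ∈ S := by rw [ht]; simp
    have ht1S : t + 1 ∈ S := by rw [ht]; simp
    have ht2S : t + 2 ∈ S := by rw [ht]; simp
    refine ⟨t, fun j hj0 hj1 hj2 => ?_, (hmemS t).mp htS, (hmemS _).mp ht1S, (hmemS _).mp ht2S⟩
    by_contra hwj
    have hjS : j ∈ S := (hmemS j).mpr hwj
    rw [ht] at hjS
    simp only [Finset.mem_insert, Finset.mem_singleton] at hjS
    tauto

lemma Wc_sub (u v : Fin (n - 3) → ZMod q) (j : ZMod n) :
    Wc q n u j - Wc q n v j = Wc q n (u - v) j := by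
  unfold Wc
  split_ifs <;>
    simp [Pi.sub_apply, Finset.sum_sub_distrib, mul_sub]

lemma Wc_zero : Wc q n (0 : Fin (n - 3) → ZMod q) = 0 := by
  funext j
  unfold Wc
  split_ifs <;> simp

lemma Wc_injective (hn5 : 5 ≤ n) : Function.Injective (Wc q n) := by
  intro u v h
  funext i
  have h' := congrFun h ((i : ℕ) : ZMod n)
  rwa [Wc_apply_lt hn5 u (i : ℕ) i.isLt, Wc_apply_lt hn5 v (i : ℕ) i.isLt] at h'

lemma pairDist_eq [NeZero n] (w1 w2 : ZMod n → ZMod q) :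
    pairDist w1 w2 = (Finset.univ.filter
      (fun i : ZMod n => w1 i - w2 i ≠ 0 ∨ w1 (i + 1) - w2 (i + 1) ≠ 0)).card := by
  unfold pairDist
  have hset : {i : ZMod n | (w1 i, w1 (i + 1)) ≠ (w2 i, w2 (i + 1))} =
      {i : ZMod n | w1 i - w2 i ≠ 0 ∨ w1 (i + 1) - w2 (i + 1) ≠ 0} := by
    ext i
    simp only [Set.mem_setOf_eq, Ne, Prod.ext_iff, sub_eq_zero]
    tauto
  rw [hset, Set.ncard_eq_toFinset_card']
  simp [Set.toFinset_setOf]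

lemma lowerB (hq : q.Prime) (hodd : Odd q) (hn5 : 5 ≤ n) (hn : n ≤ 2 * q + 3)
    (u1 u2 : Fin (n - 3) → ZMod q) (hne : Wc q n u1 ≠ Wc q n u2) :
    5 ≤ pairDist (Wc q n u1) (Wc q n u2) := by
  haveI := nz hn5
  rw [pairDist_eq]
  have hfil : (Finset.univ.filter (fun i : ZMod n =>
      Wc q n u1 i - Wc q n u2 i ≠ 0 ∨ Wc q n u1 (i + 1) - Wc q n u2 (i + 1) ≠ 0)) =
      (Finset.univ.filter (fun i : ZMod n =>
      Wc q n (u1 - u2) i ≠ 0 ∨ Wc q n (u1 - u2) (i + 1) ≠ 0)) := by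
    apply Finset.filter_congr
    intro i _
    rw [Wc_sub u1 u2 i, Wc_sub u1 u2 (i + 1)]
  rw [hfil]
  by_contra hlt
  push_neg at hlt
  have hw : ∃ j, Wc q n (u1 - u2) j ≠ 0 := by
    by_contra hz
    push_neg at hz
    have : Wc q n (u1 - u2) = Wc q n 0 := by
      rw [Wc_zero]; funext j; exact hz j
    have h0 : u1 - u2 = 0 := Wc_injective hn5 this
    exact hne (by rw [sub_eq_zero.mp h0])
  rcases comb hn5 (Wc q n (u1 - u2)) hw (by omega) with ⟨a, b, hsupp⟩ | ⟨t, hsupp, h0, h1, h2⟩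
  · have h0 : u1 - u2 = 0 := lemA hq hodd hn5 hn (u1 - u2) a b hsupp
    exact hne (by rw [sub_eq_zero.mp h0])
  · exact lemB hq hodd hn5 (u1 - u2) t hsupp h0 h1 h2

lemma pairDist_zero [NeZero n] (hn5 : 5 ≤ n) (u0 : Fin (n - 3) → ZMod q) :
    pairDist (Wc q n u0) (Wc q n 0) =
    (Finset.univ.filter (fun i : ZMod n => Wc q n u0 i ≠ 0 ∨ Wc q n u0 (i + 1) ≠ 0)).card := by
  rw [pairDist_eq]
  apply congrArg
  ext i
  simp [Finset.mem_filter, Wc_zero]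

set_option maxHeartbeats 1000000 in
lemma exists5 (hq : q.Prime) (hodd : Odd q) (hn5 : 5 ≤ n) :
    ∃ u0 : Fin (n - 3) → ZMod q, Wc q n u0 ≠ Wc q n 0 ∧
      pairDist (Wc q n u0) (Wc q n 0) = 5 := by
  haveI := nz hn5
  haveI : Fact q.Prime := ⟨hq⟩
  rcases (by omega : n = 5 ∨ 6 ≤ n) with rfl | hn6
  · -- the case n = 5
    set u0 : Fin (5 - 3) → ZMod q := fun i => if (i : ℕ) = 0 then 1 else -1 with hu0
    have h03 : (0 : ℕ) < 5 - 3 := by omega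
    have h13 : (1 : ℕ) < 5 - 3 := by omega
    have hv0 : u0 ⟨0, h03⟩ = 1 := by simp [hu0]
    have hv1 : u0 ⟨1, h13⟩ = -1 := by simp [hu0]
    have hne01 : (⟨0, h03⟩ : Fin (5 - 3)) ≠ ⟨1, h13⟩ :=
      Fin.ne_of_val_ne (by simp only [Fin.val_mk]; omega)
    have habs : ∀ i : Fin (5 - 3), i ≠ ⟨0, h03⟩ → i ≠ ⟨1, h13⟩ → False := by
      intro i a b
      have a' : (i : ℕ) ≠ 0 := fun hh => a (Fin.ext hh)
      have b' : (i : ℕ) ≠ 1 := fun hh => b (Fin.ext hh)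
      have := i.isLt
      omega
    have hA : Wc q 5 u0 ((5 - 3 : ℕ) : ZMod 5) = -1 := by
      rw [Wc_apply_A hn5 u0,
        sum_supp2 _ ⟨0, h03⟩ ⟨1, h13⟩ hne01 (fun i a b => (habs i a b).elim)]
      simp only [Fin.val_mk]
      rw [hv0, hv1]
      push_cast
      ring
    have hB : Wc q 5 u0 ((5 - 2 : ℕ) : ZMod 5) = 0 := by
      rw [Wc_apply_B hn5 u0,
        sum_supp2 u0 ⟨0, h03⟩ ⟨1, h13⟩ hne01 (fun i a b => (habs i a b).elim), hv0, hv1]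
      ring
    have hC : Wc q 5 u0 ((5 - 1 : ℕ) : ZMod 5) = 2 := by
      rw [Wc_apply_C hn5 u0,
        sum_supp2 _ ⟨0, h03⟩ ⟨1, h13⟩ hne01 (fun i a b => (habs i a b).elim)]
      simp only [Fin.val_mk]
      rw [hv0, hv1]
      norm_num
    have hw0 : Wc q 5 u0 ((0 : ℕ) : ZMod 5) = 1 := by
      rw [Wc_apply_lt hn5 u0 0 h03, hv0]
    have hw1 : Wc q 5 u0 ((1 : ℕ) : ZMod 5) = -1 := by
      rw [Wc_apply_lt hn5 u0 1 h13, hv1]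
    refine ⟨u0, ?_, ?_⟩
    · intro h
      have h0 := congrFun (Wc_injective hn5 h) ⟨0, h03⟩
      rw [hv0] at h0
      simp only [Pi.zero_apply] at h0
      exact one_ne_zero h0
    · rw [pairDist_zero hn5 u0]
      have huniv : (Finset.univ.filter
          (fun i : ZMod 5 => Wc q 5 u0 i ≠ 0 ∨ Wc q 5 u0 (i + 1) ≠ 0)) = Finset.univ := by
        apply Finset.eq_univ_iff_forall.mpr
        intro i
        obtain ⟨k, hk, rfl⟩ : ∃ k : ℕ, k < 5 ∧ ((k : ℕ) : ZMod 5) = i :=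
          ⟨i.val, ZMod.val_lt i, ZMod.natCast_rightInverse i⟩
        have hstep : ((k : ℕ) : ZMod 5) + 1 = ((k + 1 : ℕ) : ZMod 5) := by push_cast; ring
        rw [Finset.mem_filter]
        refine ⟨Finset.mem_univ _, ?_⟩
        rcases (by omega : k = 0 ∨ k = 1 ∨ k = 2 ∨ k = 3 ∨ k = 4) with rfl | rfl | rfl | rfl | rfl
        · exact Or.inl (by rw [hw0]; exact one_ne_zero)
        · exact Or.inl (by rw [hw1]; exact neg_ne_zero.mpr one_ne_zero)
        · refine Or.inl ?_
          rw [show ((2 : ℕ) : ZMod 5) = ((5 - 3 : ℕ) : ZMod 5) by norm_num, hA]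
          exact neg_ne_zero.mpr one_ne_zero
        · refine Or.inr ?_
          rw [hstep, show ((3 + 1 : ℕ) : ZMod 5) = ((5 - 1 : ℕ) : ZMod 5) by norm_num, hC]
          exact two_ne_zero' hq hodd
        · refine Or.inl ?_
          rw [show ((4 : ℕ) : ZMod 5) = ((5 - 1 : ℕ) : ZMod 5) by norm_num, hC]
          exact two_ne_zero' hq hodd
      rw [huniv, Finset.card_univ, ZMod.card]
  · -- the case 6 ≤ n
    set u0 : Fin (n - 3) → ZMod q := fun i =>
      if (i : ℕ) = 0 then 1 else if (i : ℕ) = 1 then -2 else if (i : ℕ) = 2 then 1 else 0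
      with hu0
    have h03 : (0 : ℕ) < n - 3 := by omega
    have h13 : (1 : ℕ) < n - 3 := by omega
    have h23 : (2 : ℕ) < n - 3 := by omega
    have hv0 : u0 ⟨0, h03⟩ = 1 := by simp [hu0]
    have hv1 : u0 ⟨1, h13⟩ = -2 := by simp [hu0]
    have hv2 : u0 ⟨2, h23⟩ = 1 := by simp [hu0]
    have hne01 : (⟨0, h03⟩ : Fin (n - 3)) ≠ ⟨1, h13⟩ :=
      Fin.ne_of_val_ne (by simp only [Fin.val_mk]; omega)
    have hne02 : (⟨0, h03⟩ : Fin (n - 3)) ≠ ⟨2, h23⟩ :=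
      Fin.ne_of_val_ne (by simp only [Fin.val_mk]; omega)
    have hne12 : (⟨1, h13⟩ : Fin (n - 3)) ≠ ⟨2, h23⟩ :=
      Fin.ne_of_val_ne (by simp only [Fin.val_mk]; omega)
    have hvz : ∀ i : Fin (n - 3), i ≠ ⟨0, h03⟩ → i ≠ ⟨1, h13⟩ → i ≠ ⟨2, h23⟩ → u0 i = 0 := by
      intro i a b c
      have a' : (i : ℕ) ≠ 0 := fun hh => a (Fin.ext hh)
      have b' : (i : ℕ) ≠ 1 := fun hh => b (Fin.ext hh)
      have c' : (i : ℕ) ≠ 2 := fun hh => c (Fin.ext hh)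
      simp [hu0, a', b', c']
    have hA : Wc q n u0 ((n - 3 : ℕ) : ZMod n) = 0 := by
      rw [Wc_apply_A hn5 u0,
        sum_supp3 _ ⟨0, h03⟩ ⟨1, h13⟩ ⟨2, h23⟩ hne01 hne02 hne12
          (fun i a b c => by rw [hvz i a b c, mul_zero])]
      simp only [Fin.val_mk]
      rw [hv0, hv1, hv2]
      push_cast
      ring
    have hB : Wc q n u0 ((n - 2 : ℕ) : ZMod n) = 0 := by
      rw [Wc_apply_B hn5 u0,
        sum_supp3 u0 ⟨0, h03⟩ ⟨1, h13⟩ ⟨2, h23⟩ hne01 hne02 hne12 hvz, hv0, hv1, hv2]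
      ring
    have hC : Wc q n u0 ((n - 1 : ℕ) : ZMod n) = 4 := by
      rw [Wc_apply_C hn5 u0,
        sum_supp3 _ ⟨0, h03⟩ ⟨1, h13⟩ ⟨2, h23⟩ hne01 hne02 hne12
          (fun i a b c => by rw [hvz i a b c, mul_zero])]
      simp only [Fin.val_mk]
      rw [hv0, hv1, hv2]
      norm_num
    have hw0 : Wc q n u0 ((0 : ℕ) : ZMod n) = 1 := by
      rw [Wc_apply_lt hn5 u0 0 h03, hv0]
    have hw1 : Wc q n u0 ((1 : ℕ) : ZMod n) = -2 := by
      rw [Wc_apply_lt hn5 u0 1 h13, hv1]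
    have hw2 : Wc q n u0 ((2 : ℕ) : ZMod n) = 1 := by
      rw [Wc_apply_lt hn5 u0 2 h23, hv2]
    have hwmid : ∀ k : ℕ, 3 ≤ k → ∀ hk : k < n - 3, Wc q n u0 ((k : ℕ) : ZMod n) = 0 := by
      intro k h3 hk
      rw [Wc_apply_lt hn5 u0 k hk]
      exact hvz _ (Fin.ne_of_val_ne (by simp only [Fin.val_mk]; omega))
        (Fin.ne_of_val_ne (by simp only [Fin.val_mk]; omega))
        (Fin.ne_of_val_ne (by simp only [Fin.val_mk]; omega))
    refine ⟨u0, ?_, ?_⟩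
    · intro h
      have h0 := congrFun (Wc_injective hn5 h) ⟨0, h03⟩
      rw [hv0] at h0
      simp only [Pi.zero_apply] at h0
      exact one_ne_zero h0
    · rw [pairDist_zero hn5 u0]
      have hE : (Finset.univ.filter
          (fun i : ZMod n => Wc q n u0 i ≠ 0 ∨ Wc q n u0 (i + 1) ≠ 0)) =
          ({((0 : ℕ) : ZMod n), ((1 : ℕ) : ZMod n), ((2 : ℕ) : ZMod n),
            ((n - 2 : ℕ) : ZMod n), ((n - 1 : ℕ) : ZMod n)} : Finset (ZMod n)) := by
        ext i
        obtain ⟨k, hk, rfl⟩ : ∃ k : ℕ, k < n ∧ ((k : ℕ) : ZMod n) = i :=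
          ⟨i.val, ZMod.val_lt i, ZMod.natCast_rightInverse i⟩
        have hstep : ((k : ℕ) : ZMod n) + 1 = ((k + 1 : ℕ) : ZMod n) := by push_cast; ring
        rw [Finset.mem_filter]
        simp only [Finset.mem_insert, Finset.mem_singleton]
        rcases (by omega : k = 0 ∨ k = 1 ∨ k = 2 ∨ (3 ≤ k ∧ k + 1 < n - 3) ∨
            (3 ≤ k ∧ k + 1 = n - 3) ∨ k = n - 3 ∨ k = n - 2 ∨ k = n - 1) with
          rfl | rfl | rfl | ⟨h3, hk1⟩ | ⟨h3, hk1⟩ | rfl | rfl | rfl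
        · exact iff_of_true ⟨Finset.mem_univ _, Or.inl (by rw [hw0]; exact one_ne_zero)⟩
            (Or.inl rfl)
        · exact iff_of_true ⟨Finset.mem_univ _,
            Or.inl (by rw [hw1]; exact neg_ne_zero.mpr (two_ne_zero' hq hodd))⟩
            (Or.inr (Or.inl rfl))
        · exact iff_of_true ⟨Finset.mem_univ _, Or.inl (by rw [hw2]; exact one_ne_zero)⟩
            (Or.inr (Or.inr (Or.inl rfl)))
        · apply iff_of_false
          · rintro ⟨-, h | h⟩
            · exact h (hwmid k h3 (by omega))
            · rw [hstep] at h
              exact h (hwmid (k + 1) (by omega) hk1)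
          · push_neg
            exact ⟨pos_ne hn5 (by omega) (by omega) (by omega),
              pos_ne hn5 (by omega) (by omega) (by omega),
              pos_ne hn5 (by omega) (by omega) (by omega),
              pos_ne hn5 (by omega) (by omega) (by omega),
              pos_ne hn5 (by omega) (by omega) (by omega)⟩
        · apply iff_of_false
          · rintro ⟨-, h | h⟩
            · exact h (hwmid k h3 (by omega))
            · rw [hstep, show ((k + 1 : ℕ) : ZMod n) = ((n - 3 : ℕ) : ZMod n) by rw [hk1]] at h
              exact h hA
          · push_neg
            exact ⟨pos_ne hn5 (by omega) (by omega) (by omega),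
              pos_ne hn5 (by omega) (by omega) (by omega),
              pos_ne hn5 (by omega) (by omega) (by omega),
              pos_ne hn5 (by omega) (by omega) (by omega),
              pos_ne hn5 (by omega) (by omega) (by omega)⟩
        · apply iff_of_false
          · rintro ⟨-, h | h⟩
            · exact h hA
            · rw [hstep, show (n - 3) + 1 = n - 2 by omega] at h
              exact h hB
          · push_neg
            exact ⟨pos_ne hn5 (by omega) (by omega) (by omega),
              pos_ne hn5 (by omega) (by omega) (by omega),
              pos_ne hn5 (by omega) (by omega) (by omega),
              pos_ne hn5 (by omega) (by omega) (by omega),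
              pos_ne hn5 (by omega) (by omega) (by omega)⟩
        · refine iff_of_true ⟨Finset.mem_univ _, Or.inr ?_⟩
            (Or.inr (Or.inr (Or.inr (Or.inl rfl))))
          rw [hstep, show (n - 2) + 1 = n - 1 by omega, hC]
          exact four_ne_zero' hq hodd
        · exact iff_of_true ⟨Finset.mem_univ _,
            Or.inl (by rw [hC]; exact four_ne_zero' hq hodd)⟩
            (Or.inr (Or.inr (Or.inr (Or.inr rfl))))
      rw [hE]
      rw [Finset.card_insert_of_notMem (by
          simp only [Finset.mem_insert, Finset.mem_singleton]
          push_neg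
          exact ⟨pos_ne hn5 (by omega) (by omega) (by omega),
            pos_ne hn5 (by omega) (by omega) (by omega),
            pos_ne hn5 (by omega) (by omega) (by omega),
            pos_ne hn5 (by omega) (by omega) (by omega)⟩),
        Finset.card_insert_of_notMem (by
          simp only [Finset.mem_insert, Finset.mem_singleton]
          push_neg
          exact ⟨pos_ne hn5 (by omega) (by omega) (by omega),
            pos_ne hn5 (by omega) (by omega) (by omega),
            pos_ne hn5 (by omega) (by omega) (by omega)⟩),
        Finset.card_insert_of_notMem (by
          simp only [Finset.mem_insert, Finset.mem_singleton]
          push_neg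
          exact ⟨pos_ne hn5 (by omega) (by omega) (by omega),
            pos_ne hn5 (by omega) (by omega) (by omega)⟩),
        Finset.card_insert_of_notMem (by
          simp only [Finset.mem_singleton]
          exact pos_ne hn5 (by omega) (by omega) (by omega)),
        Finset.card_singleton]

end Stmt15Aux

/-- for an odd prime q and 5 ≤ n ≤ 2q+3, the Z_q-linear code
generated by (I_{n-3} | X), where the last three columns are (1,2,…,n-3)ᵀ,
(1,1,…,1)ᵀ and (1,-1,…,(-1)^{n-4})ᵀ, is an MDS (n,5)_q symbol-pair code. -/
theorem stmt_15 (q n : ℕ) (hq : q.Prime) (hodd : Odd q)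
    (hn5 : 5 ≤ n) (hn : n ≤ 2 * q + 3)
    (C : Set (ZMod n → ZMod q))
    (hC : C = {w | ∃ u : Fin (n - 3) → ZMod q,
      w = fun j : ZMod n =>
        if h : j.val < n - 3 then u ⟨j.val, h⟩
        else if j.val = n - 3 then ∑ i : Fin (n - 3), ((i : ℕ) + 1 : ZMod q) * u i
        else if j.val = n - 2 then ∑ i : Fin (n - 3), u i
        else ∑ i : Fin (n - 3), (-1 : ZMod q) ^ (i : ℕ) * u i}) :
    C.ncard = q ^ (n - 3) ∧
      IsLeast {e | ∃ u ∈ C, ∃ v ∈ C, u ≠ v ∧ pairDist u v = e} 5 := by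
  haveI : Fact q.Prime := ⟨hq⟩
  haveI : NeZero q := ⟨hq.ne_zero⟩
  haveI := Stmt15Aux.nz hn5
  have hCr : C = Set.range (Stmt15Aux.Wc q n) := by
    rw [hC]
    ext w
    constructor
    · rintro ⟨u, rfl⟩
      exact ⟨u, rfl⟩
    · rintro ⟨u, rfl⟩
      exact ⟨u, rfl⟩
  constructor
  · rw [hCr, ← Nat.card_coe_set_eq,
      Nat.card_range_of_injective (Stmt15Aux.Wc_injective hn5),
      Nat.card_eq_fintype_card, Fintype.card_fun, ZMod.card, Fintype.card_fin]
  · constructor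
    · obtain ⟨u0, hne, h5⟩ := Stmt15Aux.exists5 hq hodd hn5
      refine ⟨Stmt15Aux.Wc q n u0, ?_, Stmt15Aux.Wc q n 0, ?_, hne, h5⟩
      · rw [hCr]; exact ⟨u0, rfl⟩
      · rw [hCr]; exact ⟨0, rfl⟩
    · intro e he
      obtain ⟨w1, hw1, w2, hw2, hne, rfl⟩ := he
      rw [hCr] at hw1 hw2
      obtain ⟨u1, rfl⟩ := hw1
      obtain ⟨u2, rfl⟩ := hw2
      exact Stmt15Aux.lowerB hq hodd hn5 hn u1 u2 hne
end

section
/- Let n be even, Γ a finite abelian group with |Γ| = q, and C₀ ⊆ Γ^n a Γ²-development (n, n-1)-symbol-pair code. For u ∈ C₀ and α, α' ∈ Γ define φ(u, α, α') ∈ Γ^n by adding α to every even-indexed coordinate of u and α' to every odd-indexed coordinate. Then C = { φ(u, α, α') : u ∈ C₀, α, α' ∈ Γ } has size q³ and minimum pair-distance at least n-1; i.e., C is an MDS (n, n-1)_q-symbol-pair code. -/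
-- `ZMod 0 = ℤ`, where `val` is `Int.natAbs`.
lemma ZMod.val_add_one_mod_two {n : ℕ} (hn : Even n) (i : ZMod n) :
    (i + 1).val % 2 = (i.val + 1) % 2 := by
  rcases n.eq_zero_or_pos with rfl | hpos
  · revert i
    change ∀ i : ℤ, (i + 1).natAbs % 2 = (i.natAbs + 1) % 2
    intro i
    have h : Even (i + 1).natAbs ↔ ¬Even i.natAbs := by
      rw [Int.natAbs_even, Int.natAbs_even, Int.even_add_one]
    rw [Nat.even_iff, Nat.even_iff] at h
    omega
  · have : NeZero n := ⟨hpos.ne'⟩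
    rw [ZMod.val_add, Nat.mod_mod_of_dvd _ hn.two_dvd,
      ZMod.val_one'' (by rintro rfl; exact Nat.not_even_one hn)]

lemma sub_one_le_pairDist {n : ℕ} {σ : Type*} {u v : ZMod n → σ}
    (h : {i : ZMod n | (u i, u (i + 1)) = (v i, v (i + 1))}.Subsingleton) :
    n - 1 ≤ pairDist u v := by
  rcases n.eq_zero_or_pos with rfl | hpos
  · exact Nat.zero_le _
  have : NeZero n := ⟨hpos.ne'⟩
  have hagree := (Set.ncard_le_one_iff_subsingleton).mpr h
  have htotal := Set.ncard_add_ncard_compl {i : ZMod n | (u i, u (i + 1)) = (v i, v (i + 1))}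
  rw [Nat.card_zmod] at htotal
  unfold pairDist
  rw [← Set.compl_ofPred]
  omega

namespace SymbolPair

variable {Γ : Type*} {n : ℕ}

def parityShift (α α' : Γ) (i : ZMod n) : Γ :=
  if i.val % 2 = 0 then α else α'

lemma parityShift_congr {α α' : Γ} {i j : ZMod n} (h : i.val % 2 = j.val % 2) :
    parityShift α α' i = parityShift α α' j := by
  simp only [parityShift, h]

variable [AddCommGroup Γ]

-- `φ(u, α, α')` in the paper.
def develop (u : ZMod n → Γ) (α α' : Γ) : ZMod n → Γ :=
  fun i ↦ u i + parityShift α α' i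

-- Conditions (i) and (ii) of a `Γ²`-development `(n, n - 1)`-symbol-pair code.
structure IsDevelopmentCode (C₀ : Set (ZMod n → Γ)) : Prop where
  same_parity : ∀ u ∈ C₀, ∀ v ∈ C₀, u ≠ v → ∀ i j : ZMod n, i ≠ j →
    i.val % 2 = j.val % 2 →
    (u i - u j, u (i + 1) - u (j + 1)) ≠ (v i - v j, v (i + 1) - v (j + 1))
  diff_parity : ∀ u ∈ C₀, ∀ v ∈ C₀, u ≠ v → ∀ i j : ZMod n, i.val % 2 ≠ j.val % 2 →
    (u i - u (j + 1), u (i + 1) - u j) ≠ (v i - v (j + 1), v (i + 1) - v j)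

lemma develop_apply_eq_iff {u v : ZMod n → Γ} {α α' β β' : Γ} {k : ZMod n} :
    develop u α α' k = develop v β β' k ↔ u k - v k = parityShift (β - α) (β' - α') k := by
  simp only [develop, parityShift]
  split_ifs <;> rw [sub_eq_sub_iff_add_eq_add, add_comm _ (v k)]

lemma eq_zero_of_parityShift_eq_zero (hn : Even n) {a a' : Γ} {i : ZMod n}
    (h₀ : parityShift a a' i = 0) (h₁ : parityShift a a' (i + 1) = 0) : a = 0 ∧ a' = 0 := by
  have hflip := ZMod.val_add_one_mod_two hn i
  unfold parityShift at h₀ h₁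
  split_ifs at h₀ h₁ <;> first | omega | exact ⟨‹_›, ‹_›⟩

variable {C₀ : Set (ZMod n → Γ)} {u v : ZMod n → Γ} {α α' β β' : Γ}

lemma base_eq_of_pairs_eq (hC₀ : IsDevelopmentCode C₀) (hn : Even n) (hu : u ∈ C₀) (hv : v ∈ C₀)
    {i j : ZMod n} (hij : i ≠ j)
    (hi₀ : develop u α α' i = develop v β β' i)
    (hi₁ : develop u α α' (i + 1) = develop v β β' (i + 1))
    (hj₀ : develop u α α' j = develop v β β' j)
    (hj₁ : develop u α α' (j + 1) = develop v β β' (j + 1)) :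
    u = v := by
  by_contra huv
  rw [develop_apply_eq_iff] at hi₀ hi₁ hj₀ hj₁
  have hflip_i := ZMod.val_add_one_mod_two hn i
  have hflip_j := ZMod.val_add_one_mod_two hn j
  have hdiff {k l : ZMod n} (hk : u k - v k = parityShift (β - α) (β' - α') k)
      (hl : u l - v l = parityShift (β - α) (β' - α') l) (hkl : k.val % 2 = l.val % 2) :
      u k - u l = v k - v l :=
    sub_eq_sub_iff_sub_eq_sub.mp (hk.trans ((parityShift_congr hkl).trans hl.symm))
  by_cases hp : i.val % 2 = j.val % 2
  · exact hC₀.same_parity u hu v hv huv i j hij hp <| Prod.ext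
      (hdiff hi₀ hj₀ hp) (hdiff hi₁ hj₁ (by omega))
  · exact hC₀.diff_parity u hu v hv huv i j hp <| Prod.ext
      (hdiff hi₀ hj₁ (by omega)) (hdiff hi₁ hj₀ (by omega))

lemma shifts_eq_of_pair_eq (hn : Even n) {i : ZMod n}
    (h₀ : develop u α α' i = develop u β β' i)
    (h₁ : develop u α α' (i + 1) = develop u β β' (i + 1)) :
    α = β ∧ α' = β' := by
  rw [develop_apply_eq_iff, sub_self, eq_comm] at h₀ h₁
  obtain ⟨h, h'⟩ := eq_zero_of_parityShift_eq_zero hn h₀ h₁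
  exact ⟨(sub_eq_zero.mp h).symm, (sub_eq_zero.mp h').symm⟩

lemma eq_of_develop_pairs_eq (hC₀ : IsDevelopmentCode C₀) (hn : Even n) (hu : u ∈ C₀)
    (hv : v ∈ C₀) {i j : ZMod n} (hij : i ≠ j)
    (hi : (develop u α α' i, develop u α α' (i + 1)) = (develop v β β' i, develop v β β' (i + 1)))
    (hj : (develop u α α' j, develop u α α' (j + 1)) = (develop v β β' j, develop v β β' (j + 1))) :
    u = v ∧ α = β ∧ α' = β' := by
  obtain ⟨hi₀, hi₁⟩ := Prod.mk.inj hi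
  obtain ⟨hj₀, hj₁⟩ := Prod.mk.inj hj
  obtain rfl := base_eq_of_pairs_eq hC₀ hn hu hv hij hi₀ hi₁ hj₀ hj₁
  exact ⟨rfl, shifts_eq_of_pair_eq hn hi₀ hi₁⟩

variable (C₀) in
def developedCode : Set (ZMod n → Γ) :=
  {w | ∃ u ∈ C₀, ∃ α α' : Γ, w = develop u α α'}

lemma develop_injective (hC₀ : IsDevelopmentCode C₀) (hn : Even n) :
    Function.Injective fun t : C₀ × Γ × Γ ↦ develop t.1.1 t.2.1 t.2.2 := by
  rintro ⟨⟨u, hu⟩, α, α'⟩ ⟨⟨v, hv⟩, β, β'⟩ h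
  have : Nontrivial (ZMod n) := ZMod.nontrivial_iff.mpr (by rintro rfl; exact Nat.not_even_one hn)
  have hpair (k : ZMod n) := congrArg (fun w ↦ (w k, w (k + 1))) h
  obtain ⟨rfl, rfl, rfl⟩ := eq_of_develop_pairs_eq hC₀ hn hu hv zero_ne_one (hpair 0) (hpair 1)
  rfl

lemma ncard_developedCode (hC₀ : IsDevelopmentCode C₀) (hn : Even n) :
    (developedCode C₀).ncard = C₀.ncard * Nat.card Γ ^ 2 := by
  have hrange : developedCode C₀ = Set.range fun t : C₀ × Γ × Γ ↦ develop t.1.1 t.2.1 t.2.2 :=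
    Set.ext fun w ↦ ⟨fun ⟨u, hu, α, α', hw⟩ ↦ ⟨(⟨u, hu⟩, α, α'), hw.symm⟩,
      fun ⟨⟨⟨u, hu⟩, α, α'⟩, hw⟩ ↦ ⟨u, hu, α, α', hw.symm⟩⟩
  rw [hrange, ← Nat.card_coe_set_eq, Nat.card_range_of_injective (develop_injective hC₀ hn),
    Nat.card_prod, Nat.card_prod, Nat.card_coe_set_eq, sq]

lemma sub_one_le_pairDist_of_mem_developedCode (hC₀ : IsDevelopmentCode C₀) (hn : Even n)
    {w w' : ZMod n → Γ} (hw : w ∈ developedCode C₀) (hw' : w' ∈ developedCode C₀)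
    (hne : w ≠ w') : n - 1 ≤ pairDist w w' := by
  obtain ⟨u, hu, α, α', rfl⟩ := hw
  obtain ⟨v, hv, β, β', rfl⟩ := hw'
  refine sub_one_le_pairDist fun i hi j hj ↦ ?_
  by_contra hij
  obtain ⟨rfl, rfl, rfl⟩ := eq_of_develop_pairs_eq hC₀ hn hu hv hij hi hj
  exact hne rfl

end SymbolPair

open SymbolPair in
theorem stmt_16_general {Γ : Type*} [AddCommGroup Γ] {n q : ℕ} (hn : Even n)
    (hq : Nat.card Γ = q) (C₀ : Set (ZMod n → Γ)) (hsize : C₀.ncard = q)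
    (hdev1 : ∀ u ∈ C₀, ∀ v ∈ C₀, u ≠ v → ∀ i j : ZMod n, i ≠ j →
      i.val % 2 = j.val % 2 →
      (u i - u j, u (i + 1) - u (j + 1)) ≠ (v i - v j, v (i + 1) - v (j + 1)))
    (hdev2 : ∀ u ∈ C₀, ∀ v ∈ C₀, u ≠ v → ∀ i j : ZMod n, i.val % 2 ≠ j.val % 2 →
      (u i - u (j + 1), u (i + 1) - u j) ≠ (v i - v (j + 1), v (i + 1) - v j))
    (C : Set (ZMod n → Γ))
    (hC : C = {w | ∃ u ∈ C₀, ∃ α α' : Γ,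
      w = fun i : ZMod n => u i + (if i.val % 2 = 0 then α else α')}) :
    C.ncard = q ^ 3 ∧ ∀ u ∈ C, ∀ v ∈ C, u ≠ v → n - 1 ≤ pairDist u v := by
  have hC₀ : IsDevelopmentCode C₀ := ⟨hdev1, hdev2⟩
  replace hC : C = developedCode C₀ := hC
  subst hC
  refine ⟨?_, fun w hw w' hw' ↦ sub_one_le_pairDist_of_mem_developedCode hC₀ hn hw hw'⟩
  rw [ncard_developedCode hC₀ hn, hsize, hq]
  ring

/-- developing a Γ²-development (n, n-1)-symbol-pair code yields an
MDS (n, n-1)_q symbol-pair code. -/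
theorem stmt_16 {Γ : Type*} [AddCommGroup Γ] [Finite Γ] {n q : ℕ} (hn : Even n)
    (hq : Nat.card Γ = q) (C₀ : Set (ZMod n → Γ)) (hsize : C₀.ncard = q)
    (hdev1 : ∀ u ∈ C₀, ∀ v ∈ C₀, u ≠ v → ∀ i j : ZMod n, i ≠ j →
      i.val % 2 = j.val % 2 →
      (u i - u j, u (i + 1) - u (j + 1)) ≠ (v i - v j, v (i + 1) - v (j + 1)))
    (hdev2 : ∀ u ∈ C₀, ∀ v ∈ C₀, u ≠ v → ∀ i j : ZMod n, i.val % 2 ≠ j.val % 2 →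
      (u i - u (j + 1), u (i + 1) - u j) ≠ (v i - v (j + 1), v (i + 1) - v j))
    (C : Set (ZMod n → Γ))
    (hC : C = {w | ∃ u ∈ C₀, ∃ α α' : Γ,
      w = fun i : ZMod n => u i + (if i.val % 2 = 0 then α else α')}) :
    C.ncard = q ^ 3 ∧ ∀ u ∈ C, ∀ v ∈ C, u ≠ v → n - 1 ≤ pairDist u v :=
  stmt_16_general hn hq C₀ hsize hdev1 hdev2 C hC
end

section
/- For every odd prime p, there exists an MDS (8,7)_{2p}-symbol-pair code: a code C over an alphabet of size 2p, of length 8, with minimum pair-distance 7 between distinct codewords and size (2p)³. -/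
/-!
The alphabet is `ZMod 2 × R` for a nontrivial commutative ring `R` in which `2` is a unit, here
`R = ZMod p`. A codeword is a binary word of a linear `[8, 3]` code paired with an `R`-word of
the code generated by an integer `3 × 8` matrix. Two codewords have pair distance at least `7`
iff their difference vanishes on at most one cyclic pair `(i, i + 1)`. For the `R`-part this
holds because for any two pairs some `3 × 3` minor supported on them is `± 2ᵏ`, a unit. For the
binary part it holds for every nonzero message except `(1, 0, 0)`, whose word vanishes on the
pairs at `4` and `7`; this last case is repaired by adding the first message bit at position `0`
of the `R`-part, which is incompatible with the column relation `2 c₀ - c₄ + 2 c₇ = 0` of the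
integer matrix.
-/

open Matrix

def pairZeros {n : ℕ} {M : Type*} [Zero M] (w : ZMod n → M) : Set (ZMod n) :=
  {i | w i = 0 ∧ w (i + 1) = 0}

theorem pairDist_add_ncard_pairZeros_sub {n : ℕ} [NeZero n] {G : Type*} [AddGroup G]
    (u v : ZMod n → G) : pairDist u v + (pairZeros (u - v)).ncard = n := by
  have hcompl : pairZeros (u - v) = {i | (u i, u (i + 1)) ≠ (v i, v (i + 1))}ᶜ := by
    ext i
    simp [pairZeros, sub_eq_zero]
  rw [pairDist, hcompl, Set.ncard_add_ncard_compl, Nat.card_zmod]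

theorem pairZeros_prodMk {n : ℕ} {A B : Type*} [Zero A] [Zero B] (w₁ : ZMod n → A)
    (w₂ : ZMod n → B) : pairZeros (fun k ↦ (w₁ k, w₂ k)) = pairZeros w₁ ∩ pairZeros w₂ := by
  ext i
  simp only [pairZeros, Set.mem_ofPred_eq, Set.mem_inter_iff, Prod.mk_eq_zero]
  tauto

theorem isUnit_intCast_of_dvd_eight {R : Type*} [CommRing R] (h2 : IsUnit (2 : R)) {z : ℤ}
    (hz : z ∣ 8) : IsUnit (z : R) := by
  obtain ⟨c, hc⟩ := hz
  have h8 : IsUnit ((z * c : ℤ) : R) := by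
    rw [← hc]
    simpa [show (8 : R) = 2 ^ 3 by norm_num] using h2.pow 3
  exact isUnit_of_mul_isUnit_left (by simpa using h8)

def binaryGen : Matrix (Fin 3) (ZMod 8) (ZMod 2) :=
  !![0, 1, 1, 1, 0, 0, 1, 0; 1, 1, 0, 1, 0, 1, 0, 0; 1, 1, 1, 0, 1, 0, 0, 1]

def integerGen : Matrix (Fin 3) (ZMod 8) ℤ :=
  !![2, 1, -2, 1, 0, 0, 2, -2; 0, 0, -2, -1, 2, 1, -1, 1; -2, -2, 0, -2, 0, -1, 2, 2]

theorem binaryGen_pairZeros : ∀ e : Fin 3 → ZMod 2, ∀ i j : ZMod 8,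
    (e ᵥ* binaryGen) i = 0 → (e ᵥ* binaryGen) (i + 1) = 0 →
    (e ᵥ* binaryGen) j = 0 → (e ᵥ* binaryGen) (j + 1) = 0 →
    i = j ∨ e = 0 ∨ e = Pi.single 0 1 := by
  decide

theorem single_zero_vecMul_binaryGen_pairZeros : ∀ i : ZMod 8,
    (Pi.single 0 1 ᵥ* binaryGen) i = 0 → (Pi.single 0 1 ᵥ* binaryGen) (i + 1) = 0 →
    i = 4 ∨ i = 7 := by
  decide

def minorCandidates (i j : ZMod 8) : List (Fin 3 → ZMod 8) :=
  [![i, i + 1, j], ![i, i + 1, j + 1], ![i, j, j + 1], ![i + 1, j, j + 1]]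

theorem exists_minorCandidates_det_dvd_eight : ∀ i j : ZMod 8, i ≠ j →
    ∃ f ∈ minorCandidates i j, (integerGen.submatrix id f).det ∣ 8 := by
  simp only [Matrix.det_fin_three]
  decide

theorem integerGen_row_one_eq_zero_or_dvd_eight :
    ∀ k, integerGen 1 k = 0 ∨ integerGen 1 k ∣ 8 := by
  decide

theorem integerGen_row_one_pairZeros : ∀ i : ZMod 8,
    integerGen 1 i = 0 ∧ integerGen 1 (i + 1) = 0 ↔ i = 0 := by
  decide

section Code

variable {R : Type*} [CommRing R]

theorem pairZeros_vecMul_integerGen_subsingleton (h2 : IsUnit (2 : R)) {d : Fin 3 → R}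
    (hd : d ≠ 0) : (pairZeros (d ᵥ* integerGen.map (↑))).Subsingleton := by
  rintro i ⟨hi, hi1⟩ j ⟨hj, hj1⟩
  by_contra hij
  obtain ⟨f, hf, hdet⟩ := exists_minorCandidates_det_dvd_eight i j hij
  refine hd (eq_zero_of_det_mem_nonZeroDivisors_of_vecMul_eq_zero
    (M := (integerGen.map (↑)).submatrix id f) ?_ ?_)
  · rw [submatrix_map, ← Int.cast_det]
    exact (isUnit_intCast_of_dvd_eight h2 hdet).mem_nonZeroDivisors
  · funext m
    change (d ᵥ* integerGen.map (↑)) (f m) = 0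
    simp only [minorCandidates, List.mem_cons, List.not_mem_nil, or_false] at hf
    rcases hf with rfl | rfl | rfl | rfl <;> fin_cases m <;> assumption

theorem integerGen_column_relation : ∀ m,
    2 * integerGen m 0 - integerGen m 4 + 2 * integerGen m 7 = 0 := by
  decide

theorem vecMul_integerGen_column_relation (d : Fin 3 → R) :
    2 * (d ᵥ* integerGen.map (↑)) 0 - (d ᵥ* integerGen.map (↑)) 4
      + 2 * (d ᵥ* integerGen.map (↑)) 7 = 0 := by
  have h m := congrArg (Int.cast : ℤ → R) (integerGen_column_relation m)
  push_cast at h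
  simp only [vecMul, dotProduct, map_apply, Fin.sum_univ_three]
  linear_combination d 0 * h 0 + d 1 * h 1 + d 2 * h 2

def codeword (e : Fin 3 → ZMod 2) (d : Fin 3 → R) (s : R) : ZMod 8 → ZMod 2 × R :=
  fun k ↦ ((e ᵥ* binaryGen) k, (d ᵥ* integerGen.map (↑) + Pi.single 0 s : ZMod 8 → R) k)

theorem codeword_sub (e e' : Fin 3 → ZMod 2) (d d' : Fin 3 → R) (s s' : R) :
    codeword e d s - codeword e' d' s' = codeword (e - e') (d - d') (s - s') := by
  funext k
  simp only [codeword, Pi.sub_apply, Prod.mk_sub_mk, sub_vecMul, Pi.add_apply, Pi.single_sub]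
  congr 1
  abel

theorem pairZeros_codeword_subsingleton [Nontrivial R] (h2 : IsUnit (2 : R)) {e : Fin 3 → ZMod 2}
    {d : Fin 3 → R} {s : R} (hne : e ≠ 0 ∨ d ≠ 0) (hs₀ : e 0 = 0 → s = 0)
    (hs₁ : e 0 ≠ 0 → IsUnit s) : (pairZeros (codeword e d s)).Subsingleton := by
  unfold codeword
  rw [pairZeros_prodMk]
  by_cases he : e = 0
  · subst he
    have hd : d ≠ 0 := hne.resolve_left (not_not_intro rfl)
    rw [hs₀ rfl, Pi.single_zero, add_zero]
    exact (pairZeros_vecMul_integerGen_subsingleton h2 hd).anti Set.inter_subset_right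
  rintro i ⟨⟨hi, hi₁⟩, hi'⟩ j ⟨⟨hj, hj₁⟩, hj'⟩
  rcases binaryGen_pairZeros e i j hi hi₁ hj hj₁ with hij | he0 | rfl
  · exact hij
  · exact absurd he0 he
  · by_contra hij
    have h47 : 4 ∈ pairZeros (d ᵥ* integerGen.map (↑) + Pi.single 0 s) ∧
        7 ∈ pairZeros (d ᵥ* integerGen.map (↑) + Pi.single 0 s) := by
      rcases single_zero_vecMul_binaryGen_pairZeros i hi hi₁ with rfl | rfl <;>
        rcases single_zero_vecMul_binaryGen_pairZeros j hj hj₁ with rfl | rfl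
      all_goals first | exact absurd rfl hij | exact ⟨hi', hj'⟩ | exact ⟨hj', hi'⟩
    obtain ⟨⟨h₄, -⟩, ⟨h₇, h₀⟩⟩ := h47
    simp only [Pi.add_apply, show (7 + 1 : ZMod 8) = 0 from rfl, Pi.single_eq_same,
      Pi.single_eq_of_ne (show (4 : ZMod 8) ≠ 0 by decide),
      Pi.single_eq_of_ne (show (7 : ZMod 8) ≠ 0 by decide), add_zero] at h₄ h₇ h₀
    have h2s : 2 * s = 0 := by
      linear_combination 2 * h₀ - h₄ + 2 * h₇ - vecMul_integerGen_column_relation d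
    exact (hs₁ (by decide)).ne_zero ((h2.mul_right_eq_zero).mp h2s)

theorem isUnit_val_sub_val {u v : ZMod 2} (h : u ≠ v) : IsUnit ((u.val : R) - v.val) := by
  obtain ⟨rfl, rfl⟩ | ⟨rfl, rfl⟩ : u = 0 ∧ v = 1 ∨ u = 1 ∧ v = 0 := by
    revert u v
    decide
  all_goals simp [ZMod.val_one]

def encode (a : (Fin 3 → ZMod 2) × (Fin 3 → R)) : ZMod 8 → ZMod 2 × R :=
  codeword a.1 a.2 ((a.1 0).val : R)

theorem pairZeros_encode_sub_subsingleton [Nontrivial R] (h2 : IsUnit (2 : R))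
    {a b : (Fin 3 → ZMod 2) × (Fin 3 → R)} (hab : a ≠ b) :
    (pairZeros (encode a - encode b)).Subsingleton := by
  rw [encode, encode, codeword_sub]
  refine pairZeros_codeword_subsingleton h2 ?_ ?_ ?_
  · by_contra! h
    exact hab (Prod.ext (sub_eq_zero.mp h.1) (sub_eq_zero.mp h.2))
  · intro h
    rw [Pi.sub_apply, sub_eq_zero] at h
    rw [h, sub_self]
  · intro h
    rw [Pi.sub_apply, sub_ne_zero] at h
    exact isUnit_val_sub_val h

theorem encode_injective [Nontrivial R] (h2 : IsUnit (2 : R)) :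
    Function.Injective (encode (R := R)) := by
  intro a b hab
  by_contra hne
  have h := pairZeros_encode_sub_subsingleton h2 hne
  rw [hab, sub_self] at h
  exact absurd (h (x := 0) ⟨rfl, rfl⟩ (y := 1) ⟨rfl, rfl⟩) (by decide)

theorem intCast_eq_zero_iff_of_dvd_eight [Nontrivial R] (h2 : IsUnit (2 : R)) {z : ℤ}
    (hz : z = 0 ∨ z ∣ 8) : (z : R) = 0 ↔ z = 0 := by
  refine ⟨fun h ↦ hz.resolve_right fun h8 ↦ ?_, fun h ↦ by rw [h, Int.cast_zero]⟩
  exact (isUnit_intCast_of_dvd_eight h2 h8).ne_zero h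

theorem pairZeros_encode_single_sub_encode_zero [Nontrivial R] (h2 : IsUnit (2 : R)) :
    pairZeros (encode (0, Pi.single 1 1) - encode (0, 0) : ZMod 8 → ZMod 2 × R) = {0} := by
  rw [encode, encode, codeword_sub]
  unfold codeword
  rw [pairZeros_prodMk]
  ext i
  simp only [pairZeros, sub_self, zero_vecMul, Pi.zero_apply, and_self, Set.ofPred_true, sub_zero,
    single_vecMul, one_smul, ZMod.val_zero, Nat.cast_zero, Pi.single_zero, Pi.add_apply, row_apply,
    map_apply, add_zero, Set.univ_inter, Set.mem_ofPred_eq, Set.mem_singleton_iff]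
  rw [intCast_eq_zero_iff_of_dvd_eight h2 (integerGen_row_one_eq_zero_or_dvd_eight _),
    intCast_eq_zero_iff_of_dvd_eight h2 (integerGen_row_one_eq_zero_or_dvd_eight _)]
  exact integerGen_row_one_pairZeros i

theorem isLeast_pairDist_range_encode [Nontrivial R] (h2 : IsUnit (2 : R)) :
    IsLeast {m | ∃ u ∈ Set.range (encode (R := R)), ∃ v ∈ Set.range (encode (R := R)),
      u ≠ v ∧ pairDist u v = m} 7 := by
  refine ⟨⟨_, ⟨(0, Pi.single 1 1), rfl⟩, _, ⟨(0, 0), rfl⟩, ?_, ?_⟩, ?_⟩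
  · exact (encode_injective h2).ne (by simp)
  · have h := pairDist_add_ncard_pairZeros_sub (encode (0, Pi.single 1 1) : ZMod 8 → ZMod 2 × R)
      (encode (0, 0))
    rw [pairZeros_encode_single_sub_encode_zero h2, Set.ncard_singleton] at h
    omega
  · rintro _ ⟨_, ⟨a, rfl⟩, _, ⟨b, rfl⟩, hne, rfl⟩
    have h := pairDist_add_ncard_pairZeros_sub (encode a) (encode b)
    have h1 := Set.ncard_le_one_iff_subsingleton.mpr
      (pairZeros_encode_sub_subsingleton h2 fun hab ↦ hne (congrArg encode hab))
    omega

theorem ncard_range_encode [Nontrivial R] [Finite R] (h2 : IsUnit (2 : R)) :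
    (Set.range (encode (R := R))).ncard = (2 * Nat.card R) ^ 3 := by
  rw [Set.ncard_range_of_injective (encode_injective h2), Nat.card_prod, Nat.card_fun,
    Nat.card_fun, Nat.card_zmod, Nat.card_fin, mul_pow]

end Code

/-- existence of an MDS (8,7)_{2p} symbol-pair code for every odd
prime p. -/
theorem stmt_17 (p : ℕ) (hp : p.Prime) (hodd : Odd p) :
    ∃ (σ : Type) (C : Set (ZMod 8 → σ)), Nat.card σ = 2 * p ∧
      IsLeast {e | ∃ u ∈ C, ∃ v ∈ C, u ≠ v ∧ pairDist u v = e} 7 ∧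
      C.ncard = (2 * p) ^ 3 := by
  have : Fact (1 < p) := ⟨hp.one_lt⟩
  have h2 : IsUnit (2 : ZMod p) := by
    exact_mod_cast (ZMod.isUnit_iff_coprime 2 p).mpr (Nat.coprime_two_left.mpr hodd)
  refine ⟨ZMod 2 × ZMod p, Set.range encode, ?_, isLeast_pairDist_range_encode h2, ?_⟩
  · rw [Nat.card_prod, Nat.card_zmod, Nat.card_zmod]
  · rw [ncard_range_encode h2, Nat.card_zmod]
end

section
/- (Product construction) If there exists an MDS (n,d)_{q₁}-symbol-pair code and an MDS (n,d)_{q₂}-symbol-pair code, then there exists an MDS (n,d)_{q₁q₂}-symbol-pair code. Concretely, if C₁ ⊆ Σ₁^n and C₂ ⊆ Σ₂^n are such codes, then C = { ((u_0,v_0),...,(u_{n-1},v_{n-1})) : u ∈ C₁, v ∈ C₂ } ⊆ (Σ₁ × Σ₂)^n has size (q₁q₂)^{n-d+2} and minimum pair-distance at least d. -/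
private lemma pairDist_ne_aux {n : ℕ} {σ : Type*} {u v : ZMod n → σ} (h : u ≠ v)
    (hd : ∀ i : ZMod n, u i = v i ∧ u (i+1) = v (i+1)) : False := by
  exact h (funext fun i => (hd i).1)

/-- product construction for MDS symbol-pair codes. -/
theorem stmt_18 {σ₁ σ₂ : Type*} {n d q₁ q₂ : ℕ}
    (hσ₁ : Nat.card σ₁ = q₁) (hσ₂ : Nat.card σ₂ = q₂)
    (C₁ : Set (ZMod n → σ₁)) (C₂ : Set (ZMod n → σ₂))
    (h₁ : ∀ u ∈ C₁, ∀ v ∈ C₁, u ≠ v → d ≤ pairDist u v)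
    (hs₁ : C₁.ncard = q₁ ^ (n - d + 2))
    (h₂ : ∀ u ∈ C₂, ∀ v ∈ C₂, u ≠ v → d ≤ pairDist u v)
    (hs₂ : C₂.ncard = q₂ ^ (n - d + 2)) :
    ∃ C : Set (ZMod n → σ₁ × σ₂),
      C = {w | ∃ u ∈ C₁, ∃ v ∈ C₂, w = fun i => (u i, v i)} ∧
      C.ncard = (q₁ * q₂) ^ (n - d + 2) ∧
      ∀ u ∈ C, ∀ v ∈ C, u ≠ v → d ≤ pairDist u v := by
  classical
  set C : Set (ZMod n → σ₁ × σ₂) :=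
    {w | ∃ u ∈ C₁, ∃ v ∈ C₂, w = fun i => (u i, v i)} with hC
  refine ⟨C, rfl, ?_, ?_⟩
  · -- cardinality
    have himg : C = (fun p : (ZMod n → σ₁) × (ZMod n → σ₂) =>
        (fun i => (p.1 i, p.2 i) : ZMod n → σ₁ × σ₂)) '' (C₁ ×ˢ C₂) := by
      ext w
      constructor
      · rintro ⟨u, hu, v, hv, rfl⟩
        exact ⟨(u, v), ⟨hu, hv⟩, rfl⟩
      · rintro ⟨⟨u, v⟩, ⟨hu, hv⟩, rfl⟩
        exact ⟨u, hu, v, hv, rfl⟩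
    have hinj : Function.Injective (fun p : (ZMod n → σ₁) × (ZMod n → σ₂) =>
        (fun i => (p.1 i, p.2 i) : ZMod n → σ₁ × σ₂)) := by
      rintro ⟨u, v⟩ ⟨u', v'⟩ h
      simp only [Prod.mk.injEq]
      constructor <;> funext i
      · exact congrArg Prod.fst (congrFun h i)
      · exact congrArg Prod.snd (congrFun h i)
    rw [himg, Set.ncard_image_of_injective _ hinj]
    have : (C₁ ×ˢ C₂).ncard = C₁.ncard * C₂.ncard := by
      rw [← Nat.card_coe_set_eq, ← Nat.card_coe_set_eq, ← Nat.card_coe_set_eq,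
        Nat.card_congr (Equiv.Set.prod C₁ C₂), Nat.card_prod]
    rw [this, hs₁, hs₂, mul_pow]
  · -- distance
    rintro w hw w' hw' hne
    obtain ⟨u, hu, v, hv, rfl⟩ := hw
    obtain ⟨u', hu', v', hv', rfl⟩ := hw'
    set S1 : Set (ZMod n) := {i | (u i, u (i + 1)) ≠ (u' i, u' (i + 1))} with hS1
    set S2 : Set (ZMod n) := {i | (v i, v (i + 1)) ≠ (v' i, v' (i + 1))} with hS2
    have hunion : {i : ZMod n |
        (((u i, v i), (u (i+1), v (i+1))) : (σ₁ × σ₂) × (σ₁ × σ₂)) ≠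
          ((u' i, v' i), (u' (i+1), v' (i+1)))} = S1 ∪ S2 := by
      ext i
      simp only [hS1, hS2, Set.mem_setOf_eq, Set.mem_union, ne_eq, Prod.mk.injEq]
      tauto
    have hpd : pairDist (fun i => (u i, v i)) (fun i => (u' i, v' i)) = (S1 ∪ S2).ncard := by
      rw [pairDist, ← hunion]
    rw [hpd]
    have hne1 : S1.Nonempty → u ≠ u' := by
      rintro ⟨i, hi⟩ rfl
      exact hi rfl
    have hne2 : S2.Nonempty → v ≠ v' := by
      rintro ⟨i, hi⟩ rfl
      exact hi rfl
    by_cases hfin : (S1 ∪ S2).Finite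
    · -- finite case
      have huv : u ≠ u' ∨ v ≠ v' := by
        by_contra h
        push_neg at h
        exact hne (by rw [h.1, h.2])
      rcases huv with h | h
      · have hd1 : d ≤ S1.ncard := h₁ u hu u' hu' h
        exact hd1.trans (Set.ncard_le_ncard Set.subset_union_left hfin)
      · have hd2 : d ≤ S2.ncard := h₂ v hv v' hv' h
        exact hd2.trans (Set.ncard_le_ncard Set.subset_union_right hfin)
    · -- infinite case: d = 0
      have hinf : (S1 ∪ S2).Infinite := hfin
      have hd0 : d = 0 := by
        rcases Set.infinite_union.mp hinf with h | h
        · have := h₁ u hu u' hu' (hne1 h.nonempty)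
          rw [pairDist, ← hS1, h.ncard] at this
          omega
        · have := h₂ v hv v' hv' (hne2 h.nonempty)
          rw [pairDist, ← hS2, h.ncard] at this
          omega
      simp [hd0]
end

section
/- There is no MDS (8,7)_2-symbol-pair code: every binary code C ⊆ {0,1}^8 in which any two distinct codewords have pair-distance at least 7 satisfies |C| ≤ 7 < 2^{8-7+2} = 8. -/
open Finset

def w8 (u : ZMod 8 → Fin 2) (i : ZMod 8) : Fin 2 × Fin 2 := (u i, u (i+1))

noncomputable def agr (u v : ZMod 8 → Fin 2) : ℕ :=
  ∑ i : ZMod 8, if w8 u i = w8 v i then 1 else 0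

lemma agr_add_pairDist (u v : ZMod 8 → Fin 2) : agr u v + pairDist u v = 8 := by
  have h1 : pairDist u v = ∑ i : ZMod 8, if w8 u i ≠ w8 v i then 1 else 0 := by
    rw [pairDist, Set.ncard_eq_toFinset_card', Set.toFinset_setOf, Finset.card_filter]
    rfl
  rw [agr, h1, ← Finset.sum_add_distrib]
  have : ∀ i : ZMod 8, ((if w8 u i = w8 v i then 1 else 0) + if w8 u i ≠ w8 v i then (1:ℕ) else 0) = 1 := by
    intro i; by_cases h : w8 u i = w8 v i <;> simp [h]
  simp only [this, Finset.sum_const, Finset.card_univ]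
  rfl

lemma quad4 (a b c d : ℕ) : (a+b+c+d)^2 ≤ 4*(a^2+b^2+c^2+d^2) := by
  zify
  nlinarith [sq_nonneg ((a:ℤ)-b), sq_nonneg ((a:ℤ)-c), sq_nonneg ((a:ℤ)-d),
    sq_nonneg ((b:ℤ)-c), sq_nonneg ((b:ℤ)-d), sq_nonneg ((c:ℤ)-d)]

lemma sum_ind (x y : Fin 2 × Fin 2) :
    (if x = y then 1 else 0 : ℕ) = ∑ p : Fin 2 × Fin 2, (if x = p then 1 else 0 : ℕ) * (if y = p then 1 else 0 : ℕ) := by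
  have : ∀ p : Fin 2 × Fin 2, (if x = p then 1 else 0 : ℕ) * (if y = p then 1 else 0 : ℕ)
      = if x = p ∧ y = p then 1 else 0 := by
    intro p; by_cases h1 : x = p <;> by_cases h2 : y = p <;> simp [h1, h2]
  simp only [this]
  by_cases h : x = y
  · subst h; simp
  · rw [if_neg h]
    symm
    rw [Finset.sum_eq_zero]
    intro p _
    rw [if_neg]
    rintro ⟨h1, h2⟩
    exact h (h1.trans h2.symm)

/-- there is no MDS (8,7)_2 symbol-pair code. -/
theorem stmt_19 (C : Set (ZMod 8 → Fin 2))
    (h : ∀ u ∈ C, ∀ v ∈ C, u ≠ v → 7 ≤ pairDist u v) :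
    C.ncard ≤ 7 := by
  have hfin : C.Finite := Set.toFinite C
  set F : Finset (ZMod 8 → Fin 2) := hfin.toFinset with hF
  have hmem : ∀ x, x ∈ F ↔ x ∈ C := fun x => hfin.mem_toFinset
  set m := F.card with hm
  have hcard : C.ncard = m := Set.ncard_eq_toFinset_card C hfin
  rw [hcard]
  set S := ∑ u ∈ F, ∑ v ∈ F, agr u v with hS
  -- upper bound
  have hagr8 : ∀ u v, agr u v ≤ 8 := by
    intro u v
    rw [agr]
    calc ∑ i : ZMod 8, (if w8 u i = w8 v i then (1:ℕ) else 0)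
        ≤ ∑ _i : ZMod 8, 1 := Finset.sum_le_sum (fun i _ => by split <;> simp)
      _ = 8 := by simp
  have hupper : S ≤ m * (m + 7) := by
    have hb : ∀ u ∈ F, ∀ v ∈ F, agr u v ≤ 1 + if v = u then 7 else 0 := by
      intro u hu v hv
      by_cases huv : v = u
      · simp only [huv, if_pos rfl]
        exact le_trans (hagr8 u u) (by norm_num)
      · simp only [huv, if_false]
        have h7 := h u ((hmem u).1 hu) v ((hmem v).1 hv) (fun e => huv e.symm)
        have := agr_add_pairDist u v
        omega
    calc S ≤ ∑ u ∈ F, ∑ v ∈ F, (1 + if v = u then 7 else 0) := by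
            apply Finset.sum_le_sum; intro u hu
            exact Finset.sum_le_sum (fun v hv => hb u hu v hv)
      _ = ∑ u ∈ F, (m + if u ∈ F then 7 else 0) := by
            apply Finset.sum_congr rfl; intro u hu
            rw [Finset.sum_add_distrib, Finset.sum_const, Finset.sum_ite_eq', smul_eq_mul, mul_one]
      _ = m * (m + 7) := by
            rw [Finset.sum_congr rfl (fun u hu => by rw [if_pos hu]), Finset.sum_const, smul_eq_mul]
  -- lower bound
  have hlower : 8 * m^2 ≤ 4 * S := by
    have hSi : S = ∑ i : ZMod 8, ∑ p : Fin 2 × Fin 2, ((F.filter fun u => w8 u i = p).card)^2 := by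
      calc S = ∑ u ∈ F, ∑ v ∈ F, ∑ i : ZMod 8, (if w8 u i = w8 v i then 1 else 0 : ℕ) := rfl
        _ = ∑ u ∈ F, ∑ i : ZMod 8, ∑ v ∈ F, (if w8 u i = w8 v i then 1 else 0 : ℕ) := by
            exact Finset.sum_congr rfl (fun u _ => Finset.sum_comm)
        _ = ∑ i : ZMod 8, ∑ u ∈ F, ∑ v ∈ F, (if w8 u i = w8 v i then 1 else 0 : ℕ) :=
            Finset.sum_comm
        _ = ∑ i : ZMod 8, ∑ p : Fin 2 × Fin 2, ((F.filter fun u => w8 u i = p).card)^2 := by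
            apply Finset.sum_congr rfl; intro i _
            calc ∑ u ∈ F, ∑ v ∈ F, (if w8 u i = w8 v i then 1 else 0 : ℕ)
                = ∑ u ∈ F, ∑ v ∈ F, ∑ p : Fin 2 × Fin 2,
                    (if w8 u i = p then 1 else 0 : ℕ) * (if w8 v i = p then 1 else 0 : ℕ) := by
                  exact Finset.sum_congr rfl (fun u _ => Finset.sum_congr rfl
                    (fun v _ => sum_ind (w8 u i) (w8 v i)))
              _ = ∑ u ∈ F, ∑ p : Fin 2 × Fin 2,
                    (if w8 u i = p then 1 else 0 : ℕ) * ∑ v ∈ F, (if w8 v i = p then 1 else 0 : ℕ) := by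
                  apply Finset.sum_congr rfl; intro u _
                  rw [Finset.sum_comm]
                  exact Finset.sum_congr rfl (fun p _ => (Finset.mul_sum _ _ _).symm)
              _ = ∑ p : Fin 2 × Fin 2,
                    (∑ u ∈ F, (if w8 u i = p then 1 else 0 : ℕ)) * ∑ v ∈ F, (if w8 v i = p then 1 else 0 : ℕ) := by
                  rw [Finset.sum_comm]
                  exact Finset.sum_congr rfl (fun p _ => (Finset.sum_mul _ _ _).symm)
              _ = ∑ p : Fin 2 × Fin 2, ((F.filter fun u => w8 u i = p).card)^2 := by
                  apply Finset.sum_congr rfl; intro p _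
                  rw [← Finset.card_filter, sq]
    have hfiber : ∀ i : ZMod 8, ∑ p : Fin 2 × Fin 2, (F.filter fun u => w8 u i = p).card = m := by
      intro i
      exact (Finset.card_eq_sum_card_fiberwise (f := fun u => w8 u i) (t := Finset.univ)
        (fun x _ => Finset.mem_univ _)).symm
    have hcs : ∀ i : ZMod 8, m^2 ≤ 4 * ∑ p : Fin 2 × Fin 2, ((F.filter fun u => w8 u i = p).card)^2 := by
      intro i
      have hexp : ∀ g : Fin 2 × Fin 2 → ℕ, ∑ p : Fin 2 × Fin 2, g p = g (0,0) + g (0,1) + g (1,0) + g (1,1) := by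
        intro g
        rw [Fintype.sum_prod_type]
        simp [Fin.sum_univ_two]
        ring
      rw [← hfiber i, hexp, hexp (fun p => ((F.filter fun u => w8 u i = p).card)^2)]
      exact quad4 _ _ _ _
    calc 8 * m^2 = ∑ _i : ZMod 8, m^2 := by simp
      _ ≤ ∑ i : ZMod 8, 4 * ∑ p : Fin 2 × Fin 2, ((F.filter fun u => w8 u i = p).card)^2 :=
          Finset.sum_le_sum (fun i _ => hcs i)
      _ = 4 * S := by rw [hSi, Finset.mul_sum]
  by_contra hcon
  push_neg at hcon
  nlinarith [hupper, hlower]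
end
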